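/- arXiv:0711.4829 — 5 statements merged into one kernel-verified Lean document; each statement's English description precedes it below -/
import Mathlib

section
/- There exists a constant c > 0 such that for every n ≥ 2, every connected bipartite simple graph on n vertices contains an induced tree on at least exp(c·√(log n)) vertices. -/
set_option maxHeartbeats 4000000

open Finset

namespace IndTree

attribute [local instance] Classical.propDecidable

variable {V : Type} (G : SimpleGraph V)

/-- linked by a walk inside `R` -/
def lk (R : Finset V) : V → V → Prop :=
  Relation.ReflTransGen (fun a b => a ∈ R ∧ b ∈ R ∧ G.Adj a b)

def conn (R : Finset V) : Prop := ∀ a ∈ R, ∀ b ∈ R, lk G R a b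

/-- rooted pendant-buildable tree -/
inductive PTr : V → Finset V → Prop
  | single (v : V) : PTr v {v}
  | grow {r : V} {S : Finset V} (x y : V) (hS : PTr r S) (hx : x ∈ S) (hy : y ∉ S)
      (hadj : G.Adj y x) (huniq : ∀ z ∈ S, G.Adj y z → z = x) : PTr r (insert y S)

variable {G}

lemma PTr.root_mem {r : V} {S : Finset V} (h : PTr G r S) : r ∈ S := by
  induction h with
  | single => exact mem_singleton_self _
  | grow x y hS hx hy hadj huniq ih => exact mem_insert_of_mem ih

lemma PTr.nonempty {r : V} {S : Finset V} (h : PTr G r S) : S.Nonempty := ⟨r, h.root_mem⟩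

/-- Append a rooted tree `B` to a tree `A` via the unique bridge `q — a₀`. -/
lemma PTr.append {r q : V} {A : Finset V} (hA : PTr G r A) {B : Finset V} (hB : PTr G q B)
    (hdisj : ∀ b ∈ B, b ∉ A)
    (a₀ : V) (ha₀ : a₀ ∈ A) (hqa : G.Adj q a₀) (hquniq : ∀ z ∈ A, G.Adj q z → z = a₀)
    (hcross : ∀ b ∈ B, b ≠ q → ∀ a ∈ A, ¬ G.Adj b a) :
    PTr G r (A ∪ B) := by
  induction hB with
  | single =>
      have h1 : A ∪ {q} = insert q A := by rw [union_comm, ← insert_eq]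
      rw [h1]
      exact hA.grow a₀ q ha₀ (hdisj q (mem_singleton_self q)) hqa hquniq
  | @grow S x y hS hx hy hadj huniq ih =>
      have hq : q ∈ S := hS.root_mem
      have hyq : y ≠ q := fun h => hy (h ▸ hq)
      have ih' := ih (fun b hb => hdisj b (mem_insert_of_mem hb))
        (fun b hb hbq => hcross b (mem_insert_of_mem hb) hbq)
      rw [union_insert]
      refine ih'.grow x y (mem_union_right _ hx) ?_ hadj ?_
      · simp only [mem_union, not_or]
        exact ⟨hdisj y (mem_insert_self _ _), hy⟩
      · intro z hz hadjz
        rcases mem_union.1 hz with hzA | hzS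
        · exact absurd hadjz (hcross y (mem_insert_self _ _) hyq z hzA)
        · exact huniq z hzS hadjz

lemma PTr.star (y : V) (L : Finset V) (hy : y ∉ L) (hadj : ∀ z ∈ L, G.Adj y z)
    (hind : ∀ a ∈ L, ∀ b ∈ L, ¬ G.Adj a b) : PTr G y (insert y L) := by
  induction L using Finset.induction_on with
  | empty => exact PTr.single y
  | @insert w L' hw ih =>
      have hyW : y ∉ L' := fun h => hy (mem_insert_of_mem h)
      have h1 : PTr G y (insert y L') := ih hyW (fun z hz => hadj z (mem_insert_of_mem hz))
        (fun a ha b hb => hind a (mem_insert_of_mem ha) b (mem_insert_of_mem hb))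
      rw [Finset.insert_comm]
      have hwy : w ≠ y := fun h => hy (h ▸ mem_insert_self w L')
      have hwmem : w ∉ insert y L' := by
        simp only [mem_insert, not_or]
        exact ⟨hwy, hw⟩
      refine h1.grow y w (mem_insert_self _ _) hwmem ((hadj w (mem_insert_self _ _)).symm) ?_
      intro z hz hadjz
      rcases mem_insert.1 hz with rfl | hzL
      · rfl
      · exact absurd hadjz (hind w (mem_insert_self _ _) z (mem_insert_of_mem hzL))

lemma lk.mono {R R' : Finset V} (h : R ⊆ R') {a b : V} (hl : lk G R a b) : lk G R' a b := by
  induction hl with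
  | refl => exact Relation.ReflTransGen.refl
  | tail h1 h2 ih => exact ih.tail ⟨h h2.1, h h2.2.1, h2.2.2⟩

lemma lk.symm {R : Finset V} {a b : V} (hl : lk G R a b) : lk G R b a := by
  have hsym : Symmetric fun a b => a ∈ R ∧ b ∈ R ∧ G.Adj a b :=
    fun x y h => ⟨h.2.1, h.1, h.2.2.symm⟩
  induction hl with
  | refl => exact Relation.ReflTransGen.refl
  | tail _ h2 ih => exact Relation.ReflTransGen.head (hsym h2) ih

lemma PTr.conn {r : V} {S : Finset V} (h : PTr G r S) : conn G S := by
  induction h with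
  | single =>
      intro a ha b hb
      rw [mem_singleton] at ha hb
      subst ha; subst hb
      exact Relation.ReflTransGen.refl
  | @grow S x y hS hx hy hadj huniq ih =>
      intro a ha b hb
      have hyx : lk G (insert y S) y x :=
        Relation.ReflTransGen.single ⟨mem_insert_self _ _, mem_insert_of_mem hx, hadj⟩
      have step : ∀ c ∈ S, lk G (insert y S) c x := by
        intro c hc
        exact lk.mono (subset_insert y _) (ih c hc x hx)
      rcases mem_insert.1 ha with rfl | haS
      · rcases mem_insert.1 hb with rfl | hbS
        · exact Relation.ReflTransGen.refl
        · exact hyx.trans (step b hbS).symm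
      · rcases mem_insert.1 hb with rfl | hbS
        · exact (step a haS).trans hyx.symm
        · exact (step a haS).trans (step b hbS).symm

/-- inclusion homomorphism from an induced subgraph -/
def valHom (s : Set V) : G.induce s →g G := ⟨Subtype.val, fun {_ _} h => h⟩

lemma connected_induce_of_conn {S : Finset V} (hne : S.Nonempty) (hconn : conn G S) :
    (G.induce (S : Set V)).Connected := by
  have key : ∀ a b : V, lk G S a b → ∀ (ha : a ∈ S) (hb : b ∈ S),
      (G.induce (S : Set V)).Reachable ⟨a, by simpa using ha⟩ ⟨b, by simpa using hb⟩ := by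
    intro a b h
    induction h with
    | refl => intro ha _hb; exact SimpleGraph.Reachable.refl _
    | @tail b' c _h1 h2 ih =>
        intro ha hc
        refine (ih ha h2.1).trans (SimpleGraph.Adj.reachable ?_)
        exact h2.2.2
  rw [SimpleGraph.connected_iff]
  refine ⟨?_, ⟨⟨hne.choose, by simpa using hne.choose_spec⟩⟩⟩
  rintro ⟨a, ha⟩ ⟨b, hb⟩
  exact key a b (hconn a (by simpa using ha) b (by simpa using hb)) (by simpa using ha)
    (by simpa using hb)

lemma exists_first_edge {a b : V} (w : G.Walk a b) (hne : a ≠ b) :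
    ∃ u, G.Adj a u ∧ s(a, u) ∈ w.edges ∧ u ∈ w.support := by
  cases w with
  | nil => exact absurd rfl hne
  | @cons _ u _ h q =>
      refine ⟨u, h, ?_, ?_⟩
      · rw [SimpleGraph.Walk.edges_cons]; exact List.mem_cons_self
      · rw [SimpleGraph.Walk.support_cons]
        exact List.mem_cons_of_mem _ (SimpleGraph.Walk.start_mem_support q)

lemma nocyc_of_PTr {r : V} {S : Finset V} (h : PTr G r S) :
    ∀ (v : V) (c : G.Walk v v), c.IsCycle → ¬ (∀ u ∈ c.support, u ∈ S) := by
  induction h with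
  | single =>
      intro v c hc hsub
      cases c with
      | nil => exact hc.not_of_nil
      | @cons _ w _ hadj q =>
          have h1 : v = r := mem_singleton.1 (hsub v (SimpleGraph.Walk.start_mem_support _))
          have h2 : w = r := by
            have := hsub w (by
              rw [SimpleGraph.Walk.support_cons]
              exact List.mem_cons_of_mem _ (SimpleGraph.Walk.start_mem_support q))
            exact mem_singleton.1 this
          exact G.irrefl (h1 ▸ h2 ▸ hadj)
  | @grow S x y hS hx hy hadjyx huniq ih =>
      intro v c hc hsub
      by_cases hmem : y ∈ c.support
      · set c' := c.rotate y hmem with hc'def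
        have hc' : c'.IsCycle := hc.rotate hmem
        have hsub' : ∀ u ∈ c'.support, u ∈ insert y S := by
          intro u hu
          rw [SimpleGraph.Walk.support_eq_cons c', List.mem_cons] at hu
          rcases hu with rfl | hu
          · exact mem_insert_self _ _
          · exact hsub u (List.mem_of_mem_tail
              (((SimpleGraph.Walk.support_rotate c y hmem).mem_iff).1 hu))
        clear_value c'
        cases c' with
        | nil => exact hc'.not_of_nil
        | @cons _ u _ hadj q =>
            have hune : u ≠ y := fun h => G.irrefl (h ▸ hadj)
            have humem : u ∈ S := by
              have := hsub' u (by
                rw [SimpleGraph.Walk.support_cons]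
                exact List.mem_cons_of_mem _ (SimpleGraph.Walk.start_mem_support q))
              exact (mem_insert.1 this).resolve_left hune
            have hux : u = x := huniq u humem hadj
            have hnodup : (SimpleGraph.Walk.cons hadj q).edges.Nodup := hc'.isTrail.edges_nodup
            rw [SimpleGraph.Walk.edges_cons, List.nodup_cons] at hnodup
            obtain ⟨u₂, hadj₂, hedge₂, hmem₂⟩ := exists_first_edge q.reverse hune.symm
            have hu₂ne : u₂ ≠ y := fun h => G.irrefl (h ▸ hadj₂)
            have hu₂mem : u₂ ∈ S := by
              rw [SimpleGraph.Walk.support_reverse, List.mem_reverse] at hmem₂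
              have := hsub' u₂ (by
                rw [SimpleGraph.Walk.support_cons]
                exact List.mem_cons_of_mem _ hmem₂)
              exact (mem_insert.1 this).resolve_left hu₂ne
            have hu₂x : u₂ = x := huniq u₂ hu₂mem hadj₂
            rw [SimpleGraph.Walk.edges_reverse, List.mem_reverse] at hedge₂
            rw [hu₂x, ← hux] at hedge₂
            exact hnodup.1 hedge₂
      · exact ih v c hc (fun u hu =>
          (mem_insert.1 (hsub u hu)).resolve_left (fun h => hmem (h ▸ hu)))

lemma isTree_induce_of_PTr {r : V} {S : Finset V} (h : PTr G r S) :
    (G.induce (S : Set V)).IsTree := by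
  constructor
  · exact connected_induce_of_conn h.nonempty h.conn
  · intro v c hc
    have hmap : (c.map (valHom (S : Set V))).IsCycle :=
      (SimpleGraph.Walk.map_isCycle_iff_of_injective Subtype.val_injective).2 hc
    refine nocyc_of_PTr h _ _ hmap ?_
    intro u hu
    rw [SimpleGraph.Walk.support_map, List.mem_map] at hu
    obtain ⟨u', _, rfl⟩ := hu
    exact u'.2


section Components

variable (G)

/-- connected component of `v` inside `R` -/
noncomputable def cmp (R : Finset V) (v : V) : Finset V := R.filter (lk G R v ·)

/-- `R` minus the closed neighborhood of `y` -/
noncomputable def wset (R : Finset V) (y : V) : Finset V :=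
  R.filter (fun w => w ≠ y ∧ ¬ G.Adj y w)

variable {G}

lemma cmp_subset {R : Finset V} {v : V} : cmp G R v ⊆ R := filter_subset _ _

lemma mem_cmp_self {R : Finset V} {v : V} (hv : v ∈ R) : v ∈ cmp G R v := by
  rw [cmp, mem_filter]
  exact ⟨hv, Relation.ReflTransGen.refl⟩

lemma lk_of_mem_cmp {R : Finset V} {v u : V} (h : u ∈ cmp G R v) : lk G R v u := by
  rw [cmp, mem_filter] at h
  exact h.2

lemma mem_cmp_of_lk {R : Finset V} {v u : V} (hu : u ∈ R) (h : lk G R v u) :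
    u ∈ cmp G R v := by
  rw [cmp, mem_filter]
  exact ⟨hu, h⟩

lemma cmp_eq_of_mem {R : Finset V} {v u : V} (h : u ∈ cmp G R v) :
    cmp G R u = cmp G R v := by
  ext z
  rw [cmp, cmp, mem_filter, mem_filter]
  constructor
  · rintro ⟨hz, hl⟩
    exact ⟨hz, (lk_of_mem_cmp h).trans hl⟩
  · rintro ⟨hz, hl⟩
    exact ⟨hz, (lk_of_mem_cmp h).symm.trans hl⟩

lemma lk_cmp_of_lk {R : Finset V} {v : V} : ∀ {a b : V}, lk G R a b →
    a ∈ cmp G R v → lk G (cmp G R v) a b := by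
  intro a b h
  induction h with
  | refl => intro _; exact Relation.ReflTransGen.refl
  | @tail b' c h1 h2 ih =>
      intro ha
      have hb' : b' ∈ cmp G R v :=
        mem_cmp_of_lk h2.1 ((lk_of_mem_cmp ha).trans h1)
      have hc : c ∈ cmp G R v :=
        mem_cmp_of_lk h2.2.1 (((lk_of_mem_cmp ha).trans h1).tail h2)
      exact (ih ha).tail ⟨hb', hc, h2.2.2⟩

lemma cmp_conn {R : Finset V} {v : V} : conn G (cmp G R v) := by
  intro a ha b hb
  have h1 : lk G R a b := (lk_of_mem_cmp ha).symm.trans (lk_of_mem_cmp hb)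
  exact lk_cmp_of_lk h1 ha

lemma not_adj_of_not_mem_cmp {R : Finset V} {v a b : V} (ha : a ∈ cmp G R v) (hb : b ∈ R)
    (hb' : b ∉ cmp G R v) : ¬ G.Adj a b := by
  intro hadj
  exact hb' (mem_cmp_of_lk hb ((lk_of_mem_cmp ha).tail ⟨cmp_subset ha, hb, hadj⟩))

lemma mem_wset {R : Finset V} {y w : V} :
    w ∈ wset G R y ↔ w ∈ R ∧ w ≠ y ∧ ¬ G.Adj y w := by
  rw [wset, mem_filter]

lemma wset_subset {R : Finset V} {y : V} : wset G R y ⊆ R := filter_subset _ _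

/-- every component of `wset R y` has a "connector": a neighbor `x` of `y`
adjacent to the component. -/
lemma exists_connector {R : Finset V} (hconn : conn G R) {y : V} (hy : y ∈ R) {v : V}
    (hv : v ∈ wset G R y) :
    ∃ x w, x ∈ R ∧ G.Adj y x ∧ w ∈ cmp G (wset G R y) v ∧ G.Adj x w := by
  set W := wset G R y with hW
  have key : ∀ b, lk G R y b → b ∈ W →
      ∃ x w, x ∈ R ∧ G.Adj y x ∧ w ∈ cmp G W b ∧ G.Adj x w := by
    intro b hb
    induction hb with
    | refl => intro hyW; rw [hW, mem_wset] at hyW; exact absurd rfl hyW.2.1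
    | @tail b' c h1 h2 ih =>
        intro hcW
        by_cases hb'y : b' = y
        · subst hb'y
          rw [hW, mem_wset] at hcW
          exact absurd h2.2.2 hcW.2.2
        by_cases hb'adj : G.Adj y b'
        · exact ⟨b', c, h2.1, hb'adj, mem_cmp_self hcW, h2.2.2⟩
        · have hb'W : b' ∈ W := by rw [hW, mem_wset]; exact ⟨h2.1, hb'y, hb'adj⟩
          obtain ⟨x, w, hx, hyx, hwc, hxw⟩ := ih hb'W
          have hcc : c ∈ cmp G W b' :=
            mem_cmp_of_lk hcW (Relation.ReflTransGen.single ⟨hb'W, hcW, h2.2.2⟩)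
          refine ⟨x, w, hx, hyx, ?_, hxw⟩
          rwa [cmp_eq_of_mem hcc]
  exact key v (hconn y hy v (wset_subset (hW ▸ hv))) hv

lemma conn_insert {C : Finset V} (hC : conn G C) {x w : V} (hw : w ∈ C) (hadj : G.Adj x w) :
    conn G (insert x C) := by
  have hxw : lk G (insert x C) x w :=
    Relation.ReflTransGen.single ⟨mem_insert_self _ _, mem_insert_of_mem hw, hadj⟩
  have hstep : ∀ a ∈ C, lk G (insert x C) a x := by
    intro a ha
    exact (lk.mono (subset_insert _ _) (hC a ha w hw)).tail
      ⟨mem_insert_of_mem hw, mem_insert_self _ _, hadj.symm⟩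
  intro a ha b hb
  rcases mem_insert.1 ha with rfl | haC
  · rcases mem_insert.1 hb with rfl | hbC
    · exact Relation.ReflTransGen.refl
    · exact (hstep b hbC).symm
  · rcases mem_insert.1 hb with rfl | hbC
    · exact hstep a haC
    · exact lk.mono (subset_insert _ _) (hC a haC b hbC)

section Counting

variable [Fintype V] (G)

noncomputable def nbr (v : V) : Finset V := Finset.univ.filter (G.Adj v ·)

variable {G}

lemma mem_nbr {v w : V} : w ∈ nbr G v ↔ G.Adj v w := by
  rw [nbr, mem_filter]
  simp

/-- the components of `wset R y` all meet the neighborhoods of neighbors of `y`,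
so there are at most `Σ_{x ∈ N(y)} deg x` of them. -/
lemma card_comps_le {R : Finset V} (hconn : conn G R) {y : V} (hy : y ∈ R) :
    ((wset G R y).image (cmp G (wset G R y))).card ≤ ((nbr G y).biUnion (nbr G)).card := by
  classical
  set W := wset G R y with hW
  set B := (nbr G y).biUnion (nbr G) with hB
  have hf : ∀ C ∈ W.image (cmp G W), ∃ w, w ∈ B ∧ w ∈ C := by
    intro C hC
    obtain ⟨v, hv, rfl⟩ := mem_image.1 hC
    obtain ⟨x, w, _, hyx, hwc, hxw⟩ := exists_connector hconn hy hv
    refine ⟨w, ?_, hwc⟩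
    rw [hB, mem_biUnion]
    exact ⟨x, mem_nbr.2 hyx, mem_nbr.2 hxw⟩
  have hcomp : ∀ C ∈ W.image (cmp G W), ∀ w ∈ C, cmp G W w = C := by
    intro C hC w hw
    obtain ⟨v, _, rfl⟩ := mem_image.1 hC
    exact cmp_eq_of_mem hw
  refine Finset.card_le_card_of_injOn
    (fun C => if h : ∃ w, w ∈ B ∧ w ∈ C then h.choose else y) ?_ ?_
  · intro C hC
    dsimp only
    rw [dif_pos (hf C hC)]
    exact (hf C hC).choose_spec.1
  · intro C₁ h₁ C₂ h₂ heq
    dsimp only at heq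
    rw [dif_pos (hf C₁ h₁), dif_pos (hf C₂ h₂)] at heq
    have e₁ := (hf C₁ h₁).choose_spec.2
    have e₂ := (hf C₂ h₂).choose_spec.2
    rw [← hcomp C₁ h₁ _ e₁, ← hcomp C₂ h₂ _ e₂, heq]
  
lemma biUnion_comps {R : Finset V} {y : V} :
    ((wset G R y).image (cmp G (wset G R y))).biUnion id = wset G R y := by
  apply Finset.Subset.antisymm
  · intro u hu
    rw [mem_biUnion] at hu
    obtain ⟨C, hC, huC⟩ := hu
    obtain ⟨v, _, rfl⟩ := mem_image.1 hC
    exact cmp_subset huC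
  · intro u hu
    rw [mem_biUnion]
    exact ⟨cmp G (wset G R y) u, mem_image_of_mem _ hu, mem_cmp_self hu⟩

lemma comps_disj {R : Finset V} {y : V} :
    ∀ C₁ ∈ (wset G R y).image (cmp G (wset G R y)),
    ∀ C₂ ∈ (wset G R y).image (cmp G (wset G R y)), C₁ ≠ C₂ → Disjoint C₁ C₂ := by
  intro C₁ h₁ C₂ h₂ hne
  rw [Finset.disjoint_left]
  intro u hu₁ hu₂
  obtain ⟨v₁, _, rfl⟩ := mem_image.1 h₁
  obtain ⟨v₂, _, rfl⟩ := mem_image.1 h₂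
  exact hne ((cmp_eq_of_mem hu₁).symm.trans (cmp_eq_of_mem hu₂))

lemma sum_comps {R : Finset V} {y : V} :
    ∑ C ∈ (wset G R y).image (cmp G (wset G R y)), C.card = (wset G R y).card := by
  have h := Finset.card_biUnion (s := (wset G R y).image (cmp G (wset G R y))) (t := id)
    comps_disj
  rw [biUnion_comps] at h
  rw [h]
  simp

end Counting

end Components

section Numeric

/-! Numeric facts about the potential `φ(M) = M ^ β` with `β = log 2 / log (8 σ^5)`. -/

lemma sigma_C_pos {σ : ℝ} (hσ : 2 ≤ σ) : (1:ℝ) < 8 * σ^5 := by nlinarith [pow_le_pow_left₀ (by norm_num : (0:ℝ) ≤ 2) hσ 5]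

lemma beta_pos {σ : ℝ} (hσ : 2 ≤ σ) : 0 < Real.log 2 / Real.log (8 * σ^5) :=
  div_pos (Real.log_pos (by norm_num)) (Real.log_pos (sigma_C_pos hσ))

lemma beta_le_one {σ : ℝ} (hσ : 2 ≤ σ) : Real.log 2 / Real.log (8 * σ^5) ≤ 1 := by
  rw [div_le_one (Real.log_pos (sigma_C_pos hσ))]
  apply Real.log_le_log (by norm_num)
  nlinarith [pow_le_pow_left₀ (by norm_num : (0:ℝ) ≤ 2) hσ 5]

lemma rpow_beta_C {σ : ℝ} (hσ : 2 ≤ σ) :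
    (8 * σ^5) ^ (Real.log 2 / Real.log (8 * σ^5)) = 2 := by
  have hC : (0:ℝ) < 8 * σ^5 := lt_trans one_pos (sigma_C_pos hσ)
  have hlog : Real.log (8 * σ^5) ≠ 0 := ne_of_gt (Real.log_pos (sigma_C_pos hσ))
  rw [Real.rpow_def_of_pos hC, mul_comm, div_mul_cancel₀ _ hlog]
  exact Real.exp_log (by norm_num)

lemma numeric_triv {σ M : ℝ} (hσ : 2 ≤ σ) (h1 : 0 ≤ M) (h2 : M ≤ 8*σ^4) :
    M ^ (Real.log 2 / Real.log (8 * σ^5)) ≤ 2 := by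
  set β := Real.log 2 / Real.log (8 * σ^5) with hβ
  have h3 : M ≤ 8*σ^5 := by nlinarith
  calc M ^ β ≤ (8*σ^5) ^ β :=
        Real.rpow_le_rpow h1 h3 (le_of_lt (beta_pos hσ))
    _ = 2 := rpow_beta_C hσ

lemma phi_le_self {σ M : ℝ} (hσ : 2 ≤ σ) (h1 : 1 ≤ M) :
    M ^ (Real.log 2 / Real.log (8 * σ^5)) ≤ M := by
  calc M ^ (Real.log 2 / Real.log (8 * σ^5)) ≤ M ^ (1:ℝ) :=
        Real.rpow_le_rpow_of_exponent_le h1 (beta_le_one hσ)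
    _ = M := Real.rpow_one M

lemma numeric_unary {σ M M₁ t : ℝ} (hσ : 2 ≤ σ) (h1 : 1 ≤ M)
    (hM₁ : M * (1 - 1/(3*σ)) ≤ M₁)
    (hc : min σ (M₁ ^ (Real.log 2 / Real.log (8 * σ^5))) ≤ t) :
    min σ (M ^ (Real.log 2 / Real.log (8 * σ^5))) ≤ t + 1 := by
  set β := Real.log 2 / Real.log (8 * σ^5) with hβ
  have hσ0 : (0:ℝ) < σ := by linarith
  have hx0 : (0:ℝ) < 1 - 1/(3*σ) := by
    rw [sub_pos, div_lt_one (by linarith)]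
    linarith
  have hx1 : 1 - 1/(3*σ) ≤ 1 := by
    have : 0 < 1/(3*σ) := by positivity
    linarith
  have hMx0 : 0 ≤ M * (1 - 1/(3*σ)) := by positivity
  have hmono : (M * (1 - 1/(3*σ))) ^ β ≤ M₁ ^ β :=
    Real.rpow_le_rpow hMx0 hM₁ (le_of_lt (beta_pos hσ))
  have hmul : (M * (1 - 1/(3*σ))) ^ β = M ^ β * (1 - 1/(3*σ)) ^ β :=
    Real.mul_rpow (by linarith) (le_of_lt hx0)
  have hbern : 1 - 1/(3*σ) ≤ (1 - 1/(3*σ)) ^ β := by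
    calc 1 - 1/(3*σ) = (1 - 1/(3*σ)) ^ (1:ℝ) := (Real.rpow_one _).symm
      _ ≤ (1 - 1/(3*σ)) ^ β := Real.rpow_le_rpow_of_exponent_ge hx0 hx1 (beta_le_one hσ)
  have hphi0 : 0 ≤ M ^ β := Real.rpow_nonneg (by linarith) β
  have hkey : M ^ β * (1 - 1/(3*σ)) ≤ M₁ ^ β := by
    calc M ^ β * (1 - 1/(3*σ)) ≤ M ^ β * (1 - 1/(3*σ)) ^ β := by nlinarith
      _ = (M * (1 - 1/(3*σ))) ^ β := hmul.symm
      _ ≤ M₁ ^ β := hmono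
  rcases le_total σ (M ^ β) with hcase | hcase
  · -- min = σ ; M₁ ^ β ≥ σ (1 - 1/(3σ)) = σ - 1/3
    have h2 : σ - 1/3 ≤ M₁ ^ β := by
      have : σ * (1 - 1/(3*σ)) ≤ M ^ β * (1 - 1/(3*σ)) := by nlinarith
      have hσx : σ * (1 - 1/(3*σ)) = σ - 1/3 := by field_simp
      linarith [hkey]
    have h3 : σ - 1/3 ≤ min σ (M₁ ^ β) := le_min (by linarith) h2
    have : σ ≤ t + 1 := by linarith
    calc min σ (M ^ β) ≤ σ := min_le_left _ _
      _ ≤ t + 1 := this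
  · -- M^β ≤ σ ; M₁ ^ β ≥ M^β - 1/3
    have h2 : M ^ β - 1/3 ≤ M₁ ^ β := by
      have hMb3 : M ^ β * (1/(3*σ)) ≤ 1/3 := by
        rw [mul_one_div]
        rw [div_le_div_iff₀ (by linarith) (by norm_num)]
        nlinarith
      nlinarith [hkey]
    have h3 : M ^ β - 1/3 ≤ min σ (M₁ ^ β) := le_min (by linarith) h2
    have : M ^ β ≤ t + 1 := by linarith
    calc min σ (M ^ β) ≤ M ^ β := min_le_right _ _
      _ ≤ t + 1 := this

lemma numeric_binary {σ M M₁ M₂ t₁ t₂ : ℝ} (hσ : 2 ≤ σ) (h1 : 1 ≤ M)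
    (hM₁ : M / (8*σ^5) ≤ M₁) (hM₂ : M / (8*σ^5) ≤ M₂)
    (ht₁0 : 0 ≤ t₁) (ht₂0 : 0 ≤ t₂)
    (hc₁ : min σ (M₁ ^ (Real.log 2 / Real.log (8 * σ^5))) ≤ t₁)
    (hc₂ : min σ (M₂ ^ (Real.log 2 / Real.log (8 * σ^5))) ≤ t₂) :
    min σ (M ^ (Real.log 2 / Real.log (8 * σ^5))) ≤ 1 + t₁ + t₂ := by
  set β := Real.log 2 / Real.log (8 * σ^5) with hβ
  have hC0 : (0:ℝ) < 8*σ^5 := lt_trans one_pos (sigma_C_pos hσ)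
  have hhalf : ∀ Mi : ℝ, M / (8*σ^5) ≤ Mi → M ^ β / 2 ≤ Mi ^ β := by
    intro Mi hMi
    have h2 : (M / (8*σ^5)) ^ β ≤ Mi ^ β :=
      Real.rpow_le_rpow (by positivity) hMi (le_of_lt (beta_pos hσ))
    have h3 : (M / (8*σ^5)) ^ β = M ^ β / (8*σ^5) ^ β :=
      Real.div_rpow (by linarith) (le_of_lt hC0) β
    rw [h3, rpow_beta_C hσ] at h2
    exact h2
  rcases min_le_iff.1 hc₁ with h | hm₁
  · exact le_trans (min_le_left _ _) (by linarith)
  rcases min_le_iff.1 hc₂ with h | hm₂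
  · exact le_trans (min_le_left _ _) (by linarith)
  have k₁ := hhalf M₁ hM₁
  have k₂ := hhalf M₂ hM₂
  exact le_trans (min_le_right _ _) (by linarith)

end Numeric

section Main

variable [Fintype V]

lemma card_le_decomp {R : Finset V} {y : V} :
    R.card ≤ 1 + (nbr G y).card + (wset G R y).card := by
  have hsub : R ⊆ insert y ((nbr G y) ∪ wset G R y) := by
    intro z hz
    rcases eq_or_ne z y with rfl | hne
    · exact mem_insert_self _ _
    · by_cases hadj : G.Adj y z
      · exact mem_insert_of_mem (mem_union_left _ (mem_nbr.2 hadj))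
      · exact mem_insert_of_mem (mem_union_right _ (mem_wset.2 ⟨hz, hne, hadj⟩))
  calc R.card ≤ (insert y ((nbr G y) ∪ wset G R y)).card := card_le_card hsub
    _ ≤ ((nbr G y) ∪ wset G R y).card + 1 := card_insert_le _ _
    _ ≤ ((nbr G y).card + (wset G R y).card) + 1 := by
        exact Nat.add_le_add_right (card_union_le _ _) 1
    _ = 1 + (nbr G y).card + (wset G R y).card := by ring

lemma exists_nbr_in {R : Finset V} (hconn : conn G R) {y z : V} (hy : y ∈ R) (hz : z ∈ R)
    (hne : z ≠ y) : ∃ x, x ∈ R ∧ G.Adj y x := by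
  rcases Relation.ReflTransGen.cases_head (hconn y hy z hz) with heq | ⟨c, hstep, _⟩
  · exact absurd heq.symm hne
  · exact ⟨c, hstep.2.1, hstep.2.2⟩

lemma comps_card_le_sq {s : ℕ} (hdeg : ∀ v : V, (nbr G v).card < s)
    {R : Finset V} (hconn : conn G R) {y : V} (hy : y ∈ R) :
    ((wset G R y).image (cmp G (wset G R y))).card ≤ s * s := by
  refine le_trans (card_comps_le hconn hy) (le_trans Finset.card_biUnion_le ?_)
  calc ∑ x ∈ nbr G y, (nbr G x).card ≤ ∑ _x ∈ nbr G y, s :=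
        Finset.sum_le_sum (fun x _ => le_of_lt (hdeg x))
    _ = (nbr G y).card * s := by rw [Finset.sum_const, smul_eq_mul]
    _ ≤ s * s := Nat.mul_le_mul_right s (le_of_lt (hdeg y))

lemma comp_subset_w {R : Finset V} {y : V} {C : Finset V}
    (hC : C ∈ (wset G R y).image (cmp G (wset G R y))) : C ⊆ wset G R y := by
  obtain ⟨v, _, rfl⟩ := mem_image.1 hC
  exact cmp_subset

lemma comps_not_adj {R : Finset V} {y : V} {C₁ C₂ : Finset V}
    (h₁ : C₁ ∈ (wset G R y).image (cmp G (wset G R y)))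
    (h₂ : C₂ ∈ (wset G R y).image (cmp G (wset G R y))) (hne : C₁ ≠ C₂) :
    ∀ a ∈ C₁, ∀ b ∈ C₂, ¬ G.Adj a b := by
  intro a ha b hb hadj
  have hdisj := comps_disj C₁ h₁ C₂ h₂ hne
  obtain ⟨v, _, rfl⟩ := mem_image.1 h₁
  have hbW : b ∈ wset G R y := comp_subset_w h₂ hb
  have hbC₁ : b ∉ cmp G (wset G R y) v := by
    intro hmem
    exact (Finset.disjoint_left.1 hdisj hmem) hb
  exact not_adj_of_not_mem_cmp ha hbW hbC₁ hadj

/-- package: for a component `C` of `wset R y`, a connector `x` with the connected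
region `insert x C`. -/
lemma child_of_comp {R : Finset V} (hconn : conn G R) {y : V} (hy : y ∈ R) {C : Finset V}
    (hC : C ∈ (wset G R y).image (cmp G (wset G R y))) :
    ∃ x, x ∈ R ∧ G.Adj y x ∧ x ∉ C ∧ (∃ w ∈ C, G.Adj x w) ∧ conn G (insert x C) ∧
      insert x C ⊆ R ∧ y ∉ insert x C := by
  obtain ⟨v, hv, rfl⟩ := mem_image.1 hC
  obtain ⟨x, w, hxR, hyx, hw, hxw⟩ := exists_connector hconn hy hv
  have hxW : x ∉ wset G R y := fun h => (mem_wset.1 h).2.2 hyx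
  have hxC : x ∉ cmp G (wset G R y) v := fun h => hxW (cmp_subset h)
  have hyW : y ∉ wset G R y := fun h => (mem_wset.1 h).2.1 rfl
  refine ⟨x, hxR, hyx, hxC, ⟨w, hw, hxw⟩, conn_insert cmp_conn hw hxw, ?_, ?_⟩
  · exact insert_subset hxR (le_trans cmp_subset wset_subset)
  · intro hmem
    rcases mem_insert.1 hmem with rfl | hmem'
    · exact G.irrefl hyx
    · exact hyW (cmp_subset hmem')

theorem main_induction (s : ℕ) (hs : 2 ≤ s)
    (hind : ∀ y a b : V, G.Adj y a → G.Adj y b → ¬ G.Adj a b)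
    (hdeg : ∀ v : V, (nbr G v).card < s) :
    ∀ (n : ℕ) (R : Finset V) (y : V), R.card ≤ n → y ∈ R → conn G R →
      ∃ T : Finset V, T ⊆ R ∧ PTr G y T ∧
        min (s : ℝ) ((R.card : ℝ) ^ (Real.log 2 / Real.log (8 * (s:ℝ)^5))) ≤ (T.card : ℝ) := by
  intro n
  induction n with
  | zero =>
      intro R y hle hy _
      have : 0 < R.card := card_pos.2 ⟨y, hy⟩
      omega
  | succ n IH =>
      intro R y hle hy hconn
      have hσ : (2:ℝ) ≤ (s:ℝ) := by exact_mod_cast hs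
      set σ := (s:ℝ) with hσdef
      set β := Real.log 2 / Real.log (8 * σ^5) with hβdef
      set M := (R.card : ℝ) with hMdef
      have hM1 : (1:ℝ) ≤ M := by
        have : 0 < R.card := card_pos.2 ⟨y, hy⟩
        rw [hMdef]; exact_mod_cast this
      by_cases htriv : M ≤ 8*σ^4
      · -- trivial zone: a vertex or an edge suffices
        by_cases hsing : R.card ≤ 1
        · have hRy : R = {y} := by
            apply Finset.eq_singleton_iff_unique_mem.2
            exact ⟨hy, fun z hz => by
              by_contra hne
              have : 1 < R.card := Finset.one_lt_card.2 ⟨z, hz, y, hy, hne⟩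
              omega⟩
          refine ⟨{y}, by rw [hRy], PTr.single y, ?_⟩
          have hMeq : M = 1 := by rw [hMdef, hRy]; simp
          rw [hMeq, Real.one_rpow, card_singleton]
          exact_mod_cast min_le_right _ _
        · push_neg at hsing
          obtain ⟨z, hz, hzy⟩ : ∃ z ∈ R, z ≠ y := by
            rcases Finset.one_lt_card.1 hsing with ⟨a, ha, b, hb, hab⟩
            rcases eq_or_ne a y with rfl | hay
            · exact ⟨b, hb, fun h => hab h.symm⟩
            · exact ⟨a, ha, hay⟩
          obtain ⟨x, hxR, hyx⟩ := exists_nbr_in hconn hy hz hzy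
          have hxy : x ∉ ({y} : Finset V) := by
            rw [mem_singleton]; exact fun h => G.irrefl (h ▸ hyx)
          refine ⟨insert x {y}, ?_, ?_, ?_⟩
          · exact insert_subset hxR (by simpa using hy)
          · exact (PTr.single y).grow y x (mem_singleton_self y) hxy hyx.symm
              (fun z hz _ => mem_singleton.1 hz)
          · rw [card_insert_of_notMem hxy, card_singleton]
            have h2 : M ^ β ≤ 2 := numeric_triv hσ (by linarith) htriv
            push_cast
            exact le_trans (min_le_right _ _) (by linarith)
      · push_neg at htriv
        have hσ0 : (0:ℝ) < σ := by linarith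
        have hp1 : 2*σ ≤ σ^2 := by nlinarith
        have hp2 : 2*σ^2 ≤ σ^3 := by nlinarith
        have hp3 : 2*σ^3 ≤ σ^4 := by nlinarith
        set W := wset G R y with hWdef
        have hnbry : ((nbr G y).card : ℝ) ≤ σ - 1 := by
          have h1 : (nbr G y).card + 1 ≤ s := hdeg y
          have h2 := (Nat.cast_le (α := ℝ)).2 h1
          push_cast at h2
          linarith
        have hcardW : M ≤ 1 + ((nbr G y).card : ℝ) + (W.card : ℝ) := by
          have h3 := card_le_decomp (G := G) (R := R) (y := y)
          rw [hMdef]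
          exact_mod_cast h3
        have hWcard : M - σ ≤ (W.card : ℝ) := by linarith
        have hWne : W.Nonempty := by
          rw [← Finset.card_pos]
          by_contra h
          push_neg at h
          have h4 : W.card = 0 := by omega
          rw [h4] at hWcard
          push_cast at hWcard
          nlinarith [hp1, hp2, hp3]
        set comps := W.image (cmp G W) with hcompsdef
        obtain ⟨E₁, hE₁, hE₁max⟩ := Finset.exists_max_image comps card (hWne.image _)
        have hsum : E₁.card + ∑ C ∈ comps.erase E₁, C.card = W.card := by
          rw [Finset.add_sum_erase _ _ hE₁]
          exact sum_comps
        set Srest := ∑ C ∈ comps.erase E₁, C.card with hSrestdef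
        have hE₁val : M - σ - (Srest:ℝ) ≤ (E₁.card:ℝ) := by
          have h1 : (E₁.card : ℝ) + (Srest:ℝ) = (W.card:ℝ) := by exact_mod_cast hsum
          linarith
        have hM12 : 12*σ^2 ≤ M := by nlinarith [hp1, hp2, hp3]
        have hnb : ∀ v : V, ((nbr G v).card : ℝ) ≤ σ - 1 := by
          intro v
          have h1 : (nbr G v).card + 1 ≤ s := hdeg v
          have h2 := (Nat.cast_le (α := ℝ)).2 h1
          push_cast at h2
          linarith
        have hyadjW : ∀ b ∈ W, ¬ G.Adj y b := fun b hb => (mem_wset.1 hb).2.2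
        have hyneW : ∀ b ∈ W, b ≠ y := fun b hb => (mem_wset.1 hb).2.1
        have hWR : W ⊆ R := wset_subset
        by_cases hbin : M ≤ 4*σ*(Srest:ℝ)
        · -- BINARY zone
          have herasene : (comps.erase E₁).Nonempty := by
            rw [← Finset.card_pos]
            by_contra h
            push_neg at h
            have h0 : comps.erase E₁ = ∅ := by
              rw [← Finset.card_eq_zero]; omega
            have hz : Srest = 0 := by rw [hSrestdef, h0, Finset.sum_empty]
            rw [hz] at hbin; push_cast at hbin; nlinarith
          obtain ⟨E₂, hE₂e, hE₂max⟩ := Finset.exists_max_image (comps.erase E₁) card herasene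
          have hE₂ : E₂ ∈ comps := mem_of_mem_erase hE₂e
          have hE₂ne : E₂ ≠ E₁ := ne_of_mem_erase hE₂e
          have hsq : comps.card ≤ s * s := comps_card_le_sq hdeg hconn hy
          have hSrestle : Srest ≤ (s*s) * E₂.card := by
            calc Srest ≤ (comps.erase E₁).card * E₂.card := by
                  rw [hSrestdef]
                  have hh := Finset.sum_le_card_nsmul (comps.erase E₁) _ E₂.card
                    (fun C hC => hE₂max C hC)
                  simpa [smul_eq_mul] using hh
              _ ≤ comps.card * E₂.card := Nat.mul_le_mul_right _ (Finset.card_erase_le)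
              _ ≤ (s*s) * E₂.card := Nat.mul_le_mul_right _ hsq
          have hE₂R : M/(4*σ^3) ≤ (E₂.card:ℝ) := by
            have h1 : (Srest:ℝ) ≤ σ*σ*(E₂.card:ℝ) := by
              rw [hσdef]; exact_mod_cast hSrestle
            rw [div_le_iff₀ (by positivity)]
            nlinarith
          have hE₁R : M/(4*σ^3) ≤ (E₁.card:ℝ) := by
            refine le_trans hE₂R ?_
            exact_mod_cast hE₁max E₂ hE₂
          by_cases hshared :
              ∃ x, x ∈ R ∧ G.Adj y x ∧ (∃ w ∈ E₁, G.Adj x w) ∧ (∃ w ∈ E₂, G.Adj x w)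
          · -- B2: one common connector x, branch below x
            obtain ⟨x, hxR, hyx, hwx₁, hwx₂⟩ := hshared
            have hxW : x ∉ W := fun h => (mem_wset.1 h).2.2 hyx
            have hxyne : x ≠ y := fun h => G.irrefl (h ▸ hyx)
            have key : ∀ E, E ∈ comps → (∃ w ∈ E, G.Adj x w) → M/(4*σ^3) ≤ (E.card:ℝ) →
                ∃ T z, T ⊆ E ∧ z ∈ E ∧ G.Adj x z ∧ PTr G z T ∧
                  (∀ b ∈ T, b ≠ z → ¬ G.Adj x b) ∧
                  min σ ((M/(8*σ^5)) ^ β) ≤ (T.card : ℝ) := by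
              rintro E hEc ⟨w', hw', hxw'⟩ hEbig
              have hxE : x ∉ E := fun h => hxW (comp_subset_w hEc h)
              have hEconn : conn G E := by
                obtain ⟨v, hv, rfl⟩ := mem_image.1 hEc; exact cmp_conn
              have hExconn : conn G (insert x E) := conn_insert hEconn hw' hxw'
              set WE := wset G (insert x E) x with hWEdef
              have hWEsub : WE ⊆ E := by
                intro z hz
                obtain ⟨hz1, hz2, _⟩ := mem_wset.1 hz
                exact (mem_insert.1 hz1).resolve_left hz2
              have hcardE : E.card ≤ WE.card + (nbr G x).card := by
                have hsub2 : E ⊆ WE ∪ nbr G x := by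
                  intro z hz
                  by_cases hadj : G.Adj x z
                  · exact mem_union_right _ (mem_nbr.2 hadj)
                  · refine mem_union_left _ (mem_wset.2 ⟨mem_insert_of_mem hz, ?_, hadj⟩)
                    exact fun h => hxE (h ▸ hz)
                exact le_trans (card_le_card hsub2) (card_union_le _ _)
              have hWER : M/(4*σ^3) - σ + 1 ≤ (WE.card : ℝ) := by
                have h1 : (E.card:ℝ) ≤ (WE.card:ℝ) + ((nbr G x).card:ℝ) := by
                  exact_mod_cast hcardE
                have h2 := hnb x
                linarith
              have hQ : M/(4*σ^3)*(4*σ^3) = M := div_mul_cancel₀ _ (by positivity)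
              have hM4 : 2*σ ≤ M/(4*σ^3) := by
                rw [le_div_iff₀ (by positivity)]
                nlinarith
              have hWEne : WE.Nonempty := by
                rw [← Finset.card_pos]
                by_contra hc
                push_neg at hc
                have h0 : WE.card = 0 := by omega
                rw [h0] at hWER
                push_cast at hWER
                nlinarith
              obtain ⟨D, hD, hDmax⟩ :=
                Finset.exists_max_image (WE.image (cmp G WE)) card (hWEne.image _)
              have hsumE : ∑ C ∈ WE.image (cmp G WE), C.card = WE.card := sum_comps
              have hcompE : (WE.image (cmp G WE)).card ≤ s*s :=
                comps_card_le_sq hdeg hExconn (mem_insert_self _ _)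
              have hDW : WE.card ≤ (s*s) * D.card := by
                calc WE.card = ∑ C ∈ WE.image (cmp G WE), C.card := hsumE.symm
                  _ ≤ (WE.image (cmp G WE)).card * D.card := by
                      have hh := Finset.sum_le_card_nsmul (WE.image (cmp G WE)) _ D.card
                        (fun C hC => hDmax C hC)
                      simpa [smul_eq_mul] using hh
                  _ ≤ (s*s) * D.card := Nat.mul_le_mul_right _ hcompE
              obtain ⟨z, hzEx, hxz, hznD, ⟨w'', hw'', hzw''⟩, hconnD, hsubD, hxnD⟩ :=
                child_of_comp hExconn (mem_insert_self x E) hD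
              have hzE : z ∈ E := (mem_insert.1 hzEx).resolve_left
                (fun h => G.irrefl (h ▸ hxz))
              have hDE : D ⊆ E := le_trans (comp_subset_w hD) hWEsub
              have hchildE : insert z D ⊆ E := insert_subset hzE hDE
              have hcardla : (insert z D).card ≤ n := by
                have hsubR : insert z D ⊆ R :=
                  le_trans hchildE (le_trans (comp_subset_w hEc) hWR)
                have hyn : y ∉ insert z D := by
                  intro hmem
                  exact hyneW y (comp_subset_w hEc (hchildE hmem)) rfl
                have h1 : (insert z D).card < R.card :=
                  Finset.card_lt_card ((Finset.ssubset_iff_of_subset hsubR).2 ⟨y, hy, hyn⟩)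
                omega
              obtain ⟨T, hTsub, hTptr, hTb⟩ :=
                IH (insert z D) z hcardla (mem_insert_self _ _) hconnD
              refine ⟨T, z, le_trans hTsub hchildE, hzE, hxz, hTptr, ?_, ?_⟩
              · intro b hb hbz hadj
                have hbD : b ∈ D := (mem_insert.1 (hTsub hb)).resolve_left hbz
                exact (mem_wset.1 (comp_subset_w hD hbD)).2.2 hadj
              · refine le_trans ?_ hTb
                have hDcard : M/(8*σ^5) ≤ ((insert z D).card:ℝ) := by
                  have h1 : (WE.card:ℝ) ≤ σ*σ*(D.card:ℝ) := by
                    rw [hσdef]; exact_mod_cast hDW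
                  have h2 : ((insert z D).card:ℝ) = (D.card:ℝ) + 1 := by
                    exact_mod_cast card_insert_of_notMem hznD
                  rw [h2, div_le_iff₀ (by positivity)]
                  nlinarith
                exact min_le_min (le_refl σ)
                  (Real.rpow_le_rpow (by positivity) hDcard (le_of_lt (beta_pos hσ)))
            obtain ⟨T₁, z₁, hT₁E, hz₁E, hxz₁, hT₁ptr, hT₁x, hT₁b⟩ := key E₁ hE₁ hwx₁ hE₁R
            obtain ⟨T₂, z₂, hT₂E, hz₂E, hxz₂, hT₂ptr, hT₂x, hT₂b⟩ := key E₂ hE₂ hwx₂ hE₂R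
            have hT₁W : T₁ ⊆ W := le_trans hT₁E (comp_subset_w hE₁)
            have hT₂W : T₂ ⊆ W := le_trans hT₂E (comp_subset_w hE₂)
            have hcross12 : ∀ a ∈ E₂, ∀ b ∈ E₁, ¬ G.Adj a b := comps_not_adj hE₂ hE₁ hE₂ne
            have hdisj12 : ∀ b ∈ T₂, b ∉ T₁ := by
              intro b hb hbT₁
              have hdd := comps_disj E₂ hE₂ E₁ hE₁ hE₂ne
              exact (Finset.disjoint_left.1 hdd (hT₂E hb)) (hT₁E hbT₁)
            have P1 : PTr G y ({y} ∪ {x}) := by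
              refine (PTr.single y).append (PTr.single x) ?_ y (mem_singleton_self y)
                hyx.symm (fun z hz _ => mem_singleton.1 hz) ?_
              · intro b hb
                rw [mem_singleton] at hb; subst hb
                rw [mem_singleton]; exact hxyne
              · intro b hb hbx
                exact absurd (mem_singleton.1 hb) hbx
            have P2 : PTr G y (({y} ∪ {x}) ∪ T₁) := by
              refine P1.append hT₁ptr ?_ x (mem_union_right _ (mem_singleton_self x))
                hxz₁.symm ?_ ?_
              · intro b hb
                rw [mem_union, mem_singleton, mem_singleton]
                push_neg
                exact ⟨hyneW b (hT₁W hb), fun h => hxW (h ▸ hT₁W hb)⟩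
              · intro c hc hadj
                rcases mem_union.1 hc with hc | hc
                · rw [mem_singleton] at hc; subst hc
                  exact absurd hadj.symm (hyadjW z₁ (hT₁W hT₁ptr.root_mem))
                · exact mem_singleton.1 hc
              · intro b hb hbz a ha hadj
                rcases mem_union.1 ha with ha | ha
                · rw [mem_singleton] at ha; subst ha
                  exact hyadjW b (hT₁W hb) hadj.symm
                · rw [mem_singleton] at ha; subst ha
                  exact hT₁x b hb hbz hadj.symm
            have P3 : PTr G y ((({y} ∪ {x}) ∪ T₁) ∪ T₂) := by
              refine P2.append hT₂ptr ?_ x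
                (mem_union_left _ (mem_union_right _ (mem_singleton_self x))) hxz₂.symm ?_ ?_
              · intro b hb
                rw [mem_union, mem_union, mem_singleton, mem_singleton]
                push_neg
                exact ⟨⟨hyneW b (hT₂W hb), fun h => hxW (h ▸ hT₂W hb)⟩, hdisj12 b hb⟩
              · intro c hc hadj
                rcases mem_union.1 hc with hc | hc
                · rcases mem_union.1 hc with hc | hc
                  · rw [mem_singleton] at hc; subst hc
                    exact absurd hadj.symm (hyadjW z₂ (hT₂W hT₂ptr.root_mem))
                  · exact mem_singleton.1 hc
                · exact absurd hadj (hcross12 z₂ hz₂E c (hT₁E hc))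
              · intro b hb hbz a ha hadj
                rcases mem_union.1 ha with ha | ha
                · rcases mem_union.1 ha with ha | ha
                  · rw [mem_singleton] at ha; subst ha
                    exact hyadjW b (hT₂W hb) hadj.symm
                  · rw [mem_singleton] at ha; subst ha
                    exact hT₂x b hb hbz hadj.symm
                · exact hcross12 b (hT₂E hb) a (hT₁E ha) hadj
            refine ⟨(({y} ∪ {x}) ∪ T₁) ∪ T₂, ?_, P3, ?_⟩
            · refine union_subset (union_subset (union_subset ?_ ?_) ?_) ?_
              · simpa using hy
              · simpa using hxR
              · exact le_trans hT₁W hWR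
              · exact le_trans hT₂W hWR
            · have hc1 : ({y} ∪ {x} : Finset V).card = 2 := by
                rw [Finset.card_union_of_disjoint (by
                  rw [Finset.disjoint_singleton]; exact fun h => hxyne h.symm)]
                simp
              have hc2 : (({y} ∪ {x}) ∪ T₁).card = 2 + T₁.card := by
                rw [Finset.card_union_of_disjoint, hc1]
                rw [Finset.disjoint_left]
                intro a ha haT₁
                rcases mem_union.1 ha with ha | ha
                · rw [mem_singleton] at ha; subst ha
                  exact hyneW a (hT₁W haT₁) rfl
                · rw [mem_singleton] at ha; subst ha
                  exact hxW (hT₁W haT₁)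
              have hc3 : ((({y} ∪ {x}) ∪ T₁) ∪ T₂).card = 2 + T₁.card + T₂.card := by
                rw [Finset.card_union_of_disjoint, hc2]
                rw [Finset.disjoint_left]
                intro a ha haT₂
                rcases mem_union.1 ha with ha | ha
                · rcases mem_union.1 ha with ha | ha
                  · rw [mem_singleton] at ha; subst ha
                    exact hyneW a (hT₂W haT₂) rfl
                  · rw [mem_singleton] at ha; subst ha
                    exact hxW (hT₂W haT₂)
                · exact hdisj12 a haT₂ ha
              rw [hc3]
              push_cast
              have hnum := numeric_binary hσ hM1 (le_refl (M/(8*σ^5))) (le_refl (M/(8*σ^5)))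
                (by positivity) (by positivity) hT₁b hT₂b
              linarith
          · -- B1: disjoint connectors
            obtain ⟨x₁, hx₁R, hyx₁, hx₁nE₁, ⟨w₁, hw₁, hx₁w₁⟩, hconn₁, hsub₁, hyn₁⟩ :=
              child_of_comp hconn hy hE₁
            obtain ⟨x₂, hx₂R, hyx₂, hx₂nE₂, ⟨w₂, hw₂, hx₂w₂⟩, hconn₂, hsub₂, hyn₂⟩ :=
              child_of_comp hconn hy hE₂
            have hx₁E₂ : ∀ w ∈ E₂, ¬ G.Adj x₁ w := fun w hw hadj =>
              hshared ⟨x₁, hx₁R, hyx₁, ⟨w₁, hw₁, hx₁w₁⟩, ⟨w, hw, hadj⟩⟩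
            have hx₂E₁ : ∀ w ∈ E₁, ¬ G.Adj x₂ w := fun w hw hadj =>
              hshared ⟨x₂, hx₂R, hyx₂, ⟨w, hw, hadj⟩, ⟨w₂, hw₂, hx₂w₂⟩⟩
            have hx₁x₂ : x₁ ≠ x₂ := by
              intro h
              exact hshared ⟨x₁, hx₁R, hyx₁, ⟨w₁, hw₁, hx₁w₁⟩, ⟨w₂, hw₂, by rw [h]; exact hx₂w₂⟩⟩
            have hx₁W : x₁ ∉ W := fun h => (mem_wset.1 h).2.2 hyx₁
            have hx₂W : x₂ ∉ W := fun h => (mem_wset.1 h).2.2 hyx₂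
            have hE₁W : E₁ ⊆ W := comp_subset_w hE₁
            have hE₂W : E₂ ⊆ W := comp_subset_w hE₂
            have hlt₁ : (insert x₁ E₁).card ≤ n := by
              have h1 : (insert x₁ E₁).card < R.card :=
                Finset.card_lt_card ((Finset.ssubset_iff_of_subset hsub₁).2 ⟨y, hy, hyn₁⟩)
              omega
            have hlt₂ : (insert x₂ E₂).card ≤ n := by
              have h1 : (insert x₂ E₂).card < R.card :=
                Finset.card_lt_card ((Finset.ssubset_iff_of_subset hsub₂).2 ⟨y, hy, hyn₂⟩)
              omega
            obtain ⟨T₁, hT₁sub, hT₁ptr, hT₁b⟩ :=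
              IH (insert x₁ E₁) x₁ hlt₁ (mem_insert_self _ _) hconn₁
            obtain ⟨T₂, hT₂sub, hT₂ptr, hT₂b⟩ :=
              IH (insert x₂ E₂) x₂ hlt₂ (mem_insert_self _ _) hconn₂
            have hyT₁ : y ∉ T₁ := fun h => hyn₁ (hT₁sub h)
            have hyT₂ : y ∉ T₂ := fun h => hyn₂ (hT₂sub h)
            have hcross12 : ∀ a ∈ E₂, ∀ b ∈ E₁, ¬ G.Adj a b := comps_not_adj hE₂ hE₁ hE₂ne
            have hdisjE : ∀ b ∈ E₂, b ∉ E₁ := by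
              intro b hb hbE₁
              exact (Finset.disjoint_left.1 (comps_disj E₂ hE₂ E₁ hE₁ hE₂ne) hb) hbE₁
            have hmemT₁ : ∀ b ∈ T₁, b = x₁ ∨ b ∈ E₁ := fun b hb => mem_insert.1 (hT₁sub hb)
            have hmemT₂ : ∀ b ∈ T₂, b = x₂ ∨ b ∈ E₂ := fun b hb => mem_insert.1 (hT₂sub hb)
            have P1 : PTr G y (insert y T₁) := by
              rw [insert_eq]
              refine (PTr.single y).append hT₁ptr (fun b hb => ?_) y (mem_singleton_self y)
                hyx₁.symm (fun z hz _ => mem_singleton.1 hz) ?_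
              · rw [mem_singleton]; exact fun h => hyT₁ (h ▸ hb)
              · intro b hb hbx a ha hadj
                rw [mem_singleton] at ha; subst ha
                have hbE : b ∈ E₁ := (hmemT₁ b hb).resolve_left hbx
                exact hyadjW b (hE₁W hbE) hadj.symm
            have P2 : PTr G y ((insert y T₁) ∪ T₂) := by
              refine P1.append hT₂ptr (fun b hb => ?_) y (mem_insert_self _ _)
                hyx₂.symm ?_ ?_
              · rw [mem_insert]
                push_neg
                constructor
                · exact fun h => hyT₂ (h ▸ hb)
                · intro hbT₁
                  rcases hmemT₂ b hb with rfl | hbE₂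
                  · rcases hmemT₁ b hbT₁ with h | h
                    · exact hx₁x₂ h.symm
                    · exact hx₂W (hE₁W h)
                  · rcases hmemT₁ b hbT₁ with h | h
                    · exact hx₁W (h ▸ hE₂W hbE₂)
                    · exact hdisjE b hbE₂ h
              · intro c hc hadj
                rcases mem_insert.1 hc with rfl | hcT₁
                · rfl
                · exfalso
                  rcases hmemT₁ c hcT₁ with heq | hcE₁
                  · subst heq
                    exact hind y c x₂ hyx₁ hyx₂ hadj.symm
                  · exact hx₂E₁ c hcE₁ hadj
              · intro b hb hbx a ha hadj
                have hbE₂ : b ∈ E₂ := (hmemT₂ b hb).resolve_left hbx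
                rcases mem_insert.1 ha with rfl | haT₁
                · exact hyadjW b (hE₂W hbE₂) hadj.symm
                · rcases hmemT₁ a haT₁ with rfl | haE₁
                  · exact hx₁E₂ b hbE₂ hadj.symm
                  · exact hcross12 b hbE₂ a haE₁ hadj
            refine ⟨(insert y T₁) ∪ T₂, ?_, P2, ?_⟩
            · refine union_subset (insert_subset hy (le_trans hT₁sub hsub₁))
                (le_trans hT₂sub hsub₂)
            · have hdisjT : Disjoint (insert y T₁) T₂ := by
                rw [Finset.disjoint_right]
                intro b hb hbI
                rcases mem_insert.1 hbI with rfl | hbT₁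
                · exact hyT₂ hb
                · rcases hmemT₂ b hb with rfl | hbE₂
                  · rcases hmemT₁ b hbT₁ with h | h
                    · exact hx₁x₂ h.symm
                    · exact hx₂W (hE₁W h)
                  · rcases hmemT₁ b hbT₁ with h | h
                    · exact hx₁W (h ▸ hE₂W hbE₂)
                    · exact hdisjE b hbE₂ h
              rw [Finset.card_union_of_disjoint hdisjT, card_insert_of_notMem hyT₁]
              push_cast
              have hQ : M/(4*σ^3)*(4*σ^3) = M := div_mul_cancel₀ _ (by positivity)
              have hME₁ : M ≤ (E₁.card:ℝ) * (4*σ^3) := by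
                rw [← hQ]
                exact mul_le_mul_of_nonneg_right hE₁R (by positivity)
              have hME₂ : M ≤ (E₂.card:ℝ) * (4*σ^3) := by
                have hQ' : M/(4*σ^3)*(4*σ^3) = M := div_mul_cancel₀ _ (by positivity)
                rw [← hQ']
                exact mul_le_mul_of_nonneg_right hE₂R (by positivity)
              have hM₁' : M/(8*σ^5) ≤ ((insert x₁ E₁).card : ℝ) := by
                have h2 : ((insert x₁ E₁).card : ℝ) = (E₁.card:ℝ) + 1 := by
                  exact_mod_cast card_insert_of_notMem hx₁nE₁
                rw [h2, div_le_iff₀ (by positivity)]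
                nlinarith [hME₁, hp1, hp2, hp3, (show (0:ℝ) ≤ (E₁.card:ℝ) from Nat.cast_nonneg _)]
              have hM₂' : M/(8*σ^5) ≤ ((insert x₂ E₂).card : ℝ) := by
                have h2 : ((insert x₂ E₂).card : ℝ) = (E₂.card:ℝ) + 1 := by
                  exact_mod_cast card_insert_of_notMem hx₂nE₂
                rw [h2, div_le_iff₀ (by positivity)]
                nlinarith [hME₂, hp1, hp2, hp3, (show (0:ℝ) ≤ (E₂.card:ℝ) from Nat.cast_nonneg _)]
              have hnum := numeric_binary (t₁ := (T₁.card:ℝ)) (t₂ := (T₂.card:ℝ))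
                hσ hM1 hM₁' hM₂' (Nat.cast_nonneg _) (Nat.cast_nonneg _) hT₁b hT₂b
              linarith
        · -- UNARY
          push_neg at hbin
          obtain ⟨x, hxR, hyx, hxE, ⟨w, hw, hxw⟩, hconnC, hsubC, hynC⟩ :=
            child_of_comp hconn hy hE₁
          have hccard : (insert x E₁).card = E₁.card + 1 := card_insert_of_notMem hxE
          have hlt : (insert x E₁).card ≤ n := by
            have h1 : (insert x E₁).card < R.card :=
              Finset.card_lt_card ((Finset.ssubset_iff_of_subset hsubC).2 ⟨y, hy, hynC⟩)
            omega
          obtain ⟨T₁, hT₁sub, hT₁ptr, hT₁b⟩ := IH (insert x E₁) x hlt (mem_insert_self _ _)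
            hconnC
          have hyT₁ : y ∉ T₁ := fun h => hynC (hT₁sub h)
          refine ⟨insert y T₁, insert_subset hy (hT₁sub.trans hsubC), ?_, ?_⟩
          · rw [insert_eq]
            refine (PTr.single y).append hT₁ptr (fun b hb => ?_) y (mem_singleton_self y)
              hyx.symm (fun z hz _ => mem_singleton.1 hz) ?_
            · rw [mem_singleton]; exact fun h => hyT₁ (h ▸ hb)
            · intro b hb hbx a ha hadj
              rw [mem_singleton] at ha; subst ha
              have hbE : b ∈ E₁ := by
                rcases mem_insert.1 (hT₁sub hb) with rfl | h
                · exact absurd rfl hbx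
                · exact h
              have hbW : b ∈ W := comp_subset_w hE₁ hbE
              exact (mem_wset.1 hbW).2.2 hadj.symm
          · rw [card_insert_of_notMem hyT₁]
            push_cast
            have hd : M * (1 - 1/(3*σ)) ≤ ((insert x E₁).card : ℝ) := by
              have h2 : ((insert x E₁).card : ℝ) = (E₁.card:ℝ) + 1 := by exact_mod_cast hccard
              have k1 : 3*σ*(M - σ - (Srest:ℝ)) ≤ 3*σ*(E₁.card:ℝ) :=
                mul_le_mul_of_nonneg_left hE₁val (by positivity)
              have key : 3*σ*M - M ≤ 3*σ*((E₁.card:ℝ)+1) := by linarith only [k1, hbin, hM12, hσ0, hM1]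
              have heq : M * (1 - 1/(3*σ)) = (3*σ*M - M)/(3*σ) := by
                field_simp
              rw [heq, h2, div_le_iff₀ (by linarith : (0:ℝ) < 3*σ)]
              linarith
            exact numeric_unary hσ hM1 hd hT₁b

lemma conn_univ (hG : G.Connected) : conn G (Finset.univ : Finset V) := by
  have key : ∀ {a b : V} (_ : G.Walk a b), lk G Finset.univ a b := by
    intro a b w
    induction w with
    | nil => exact Relation.ReflTransGen.refl
    | cons h p ih => exact Relation.ReflTransGen.head ⟨mem_univ _, mem_univ _, h⟩ ih
  intro a _ b _
  exact key (hG.preconnected a b).some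

theorem exists_big_tree (hconn : G.Connected)
    (hbip : ∀ y a b : V, G.Adj y a → G.Adj y b → ¬ G.Adj a b) (s : ℕ) (hs : 2 ≤ s) :
    ∃ S : Finset V, (G.induce (S : Set V)).IsTree ∧
      min (s:ℝ) ((Fintype.card V : ℝ) ^ (Real.log 2 / Real.log (8*(s:ℝ)^5))) ≤ (S.card : ℝ) := by
  have hne : Nonempty V := hconn.nonempty
  obtain ⟨y⟩ := hne
  by_cases hdeg : ∀ v : V, (nbr G v).card < s
  · have hconnU : conn G Finset.univ := conn_univ hconn
    obtain ⟨T, _, hPtr, hb⟩ := main_induction s hs hbip hdeg (Fintype.card V) Finset.univ y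
      (le_of_eq card_univ) (mem_univ y) hconnU
    refine ⟨T, isTree_induce_of_PTr hPtr, ?_⟩
    rwa [card_univ] at hb
  · push_neg at hdeg
    obtain ⟨v, hv⟩ := hdeg
    have hvn : v ∉ nbr G v := fun h => G.irrefl (mem_nbr.1 h)
    have hPtr : PTr G v (insert v (nbr G v)) :=
      PTr.star v (nbr G v) hvn (fun z hz => mem_nbr.1 hz)
        (fun a ha b hb => hbip v a b (mem_nbr.1 ha) (mem_nbr.1 hb))
    refine ⟨insert v (nbr G v), isTree_induce_of_PTr hPtr, ?_⟩
    refine le_trans (min_le_left _ _) ?_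
    rw [card_insert_of_notMem hvn]
    push_cast
    have : (s:ℝ) ≤ ((nbr G v).card : ℝ) := by exact_mod_cast hv
    linarith

end Main

end IndTree

/-- There exists a constant `c > 0` such that for every `n ≥ 2`, every connected
bipartite simple graph on `n` vertices contains an induced tree on at least
`exp (c * √(log n))` vertices. -/
theorem stmt_1 :
    ∃ c : ℝ, 0 < c ∧
      ∀ (n : ℕ), 2 ≤ n →
        ∀ (V : Type) [Fintype V] (G : SimpleGraph V),
          Fintype.card V = n → G.Connected → G.Colorable 2 →
          ∃ S : Finset V, (G.induce (S : Set V)).IsTree ∧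
            Real.exp (c * Real.sqrt (Real.log n)) ≤ (S.card : ℝ) := by
  classical
  refine ⟨1/10, by norm_num, ?_⟩
  intro n hn V _ G hcard hconn hcol
  -- neighborhoods are independent sets
  have hbip : ∀ y a b : V, G.Adj y a → G.Adj y b → ¬ G.Adj a b := by
    obtain ⟨C⟩ := hcol
    intro y a b hya hyb hab
    have l1 : (C y).val ≠ (C a).val := fun h => (C.valid hya) (Fin.ext h)
    have l2 : (C y).val ≠ (C b).val := fun h => (C.valid hyb) (Fin.ext h)
    have l3 : (C a).val ≠ (C b).val := fun h => (C.valid hab) (Fin.ext h)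
    have b1 : (C y).val < 2 := (C y).isLt
    have b2 : (C a).val < 2 := (C a).isLt
    have b3 : (C b).val < 2 := (C b).isLt
    omega
  have hn2 : (2:ℝ) ≤ (n:ℝ) := by exact_mod_cast hn
  have hL2 : Real.log 2 ≤ Real.log n := Real.log_le_log (by norm_num) hn2
  have hL0 : (0:ℝ) < Real.log n := lt_of_lt_of_le (Real.log_pos (by norm_num)) hL2
  set L := Real.log n with hLdef
  set l := Real.sqrt L with hldef
  have hll : l^2 = L := Real.sq_sqrt (le_of_lt hL0)
  have hl0 : 0 < l := Real.sqrt_pos.2 hL0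
  by_cases hsmall : Real.exp ((1/10) * l) ≤ 2
  · -- a single edge suffices
    have h1lt : 1 < Fintype.card V := by omega
    obtain ⟨a, b, hab⟩ := Fintype.exists_pair_of_one_lt_card h1lt
    have hconnU := IndTree.conn_univ hconn
    obtain ⟨x, _, hadj⟩ := IndTree.exists_nbr_in hconnU (mem_univ a) (mem_univ b)
      (fun h => hab h.symm)
    have hxa : x ∉ ({a} : Finset V) := by
      rw [Finset.mem_singleton]; exact fun h => G.irrefl (h ▸ hadj)
    have hPtr : IndTree.PTr G a (insert x {a}) :=
      (IndTree.PTr.single a).grow a x (Finset.mem_singleton_self a) hxa hadj.symm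
        (fun z hz _ => Finset.mem_singleton.1 hz)
    refine ⟨insert x {a}, IndTree.isTree_induce_of_PTr hPtr, ?_⟩
    rw [Finset.card_insert_of_notMem hxa, Finset.card_singleton]
    push_cast
    linarith
  · push_neg at hsmall
    set T₀ := Real.exp ((1/10) * l) with hT₀def
    set s := Nat.ceil T₀ with hsdef
    have hT₀pos : 0 < T₀ := Real.exp_pos _
    have hT₀s : T₀ ≤ (s:ℝ) := Nat.le_ceil T₀
    have hs2' : (2:ℝ) < (s:ℝ) := lt_of_lt_of_le hsmall hT₀s
    have hs2 : 2 ≤ s := by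
      have : 2 < s := by exact_mod_cast hs2'
      omega
    obtain ⟨S, hTree, hmin⟩ := IndTree.exists_big_tree hconn hbip s hs2
    refine ⟨S, hTree, le_trans ?_ hmin⟩
    rw [hcard]
    refine le_min hT₀s ?_
    -- T₀ ≤ n ^ β
    have hσ2 : (2:ℝ) ≤ (s:ℝ) := by exact_mod_cast hs2
    have hσ0 : (0:ℝ) < (s:ℝ) := by linarith
    have hD0 : 0 < Real.log (8*(s:ℝ)^5) := Real.log_pos (IndTree.sigma_C_pos hσ2)
    have hrpow : (n:ℝ) ^ (Real.log 2 / Real.log (8*(s:ℝ)^5)) =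
        Real.exp (L * (Real.log 2 / Real.log (8*(s:ℝ)^5))) := by
      rw [Real.rpow_def_of_pos (by linarith : (0:ℝ) < (n:ℝ)), hLdef]
    rw [hrpow, hT₀def, Real.exp_le_exp]
    -- goal : 1/10 * l ≤ L * (log 2 / D)
    have hσub : (s:ℝ) ≤ 2*T₀ := by
      have hceil : (s:ℝ) < T₀ + 1 := Nat.ceil_lt_add_one (le_of_lt hT₀pos)
      linarith
    have hlog2u : Real.log 2 < 0.6932 := by
      have := Real.log_two_lt_d9
      linarith
    have hlog2l : (0.6931:ℝ) < Real.log 2 := by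
      have := Real.log_two_gt_d9
      linarith
    have hlbig : 6.9 < l := by
      have h1 : Real.log 2 < (1/10) * l := by
        have := Real.exp_log (show (0:ℝ) < 2 by norm_num)
        have h2 : Real.exp (Real.log 2) < Real.exp ((1/10) * l) := by
          rw [this]; exact hsmall
        exact (Real.exp_lt_exp).1 h2
      linarith
    have hDub : Real.log (8*(s:ℝ)^5) ≤ 8 * Real.log 2 + l/2 := by
      have h8 : Real.log (8:ℝ) = 3 * Real.log 2 := by
        rw [show (8:ℝ) = 2^(3:ℕ) by norm_num, Real.log_pow]
        push_cast; ring
      have hmul : Real.log (8*(s:ℝ)^5) = Real.log 8 + 5 * Real.log (s:ℝ) := by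
        rw [Real.log_mul (by norm_num) (by positivity), Real.log_pow]
        push_cast; ring
      have hlogσ : Real.log (s:ℝ) ≤ Real.log 2 + (1/10)*l := by
        calc Real.log (s:ℝ) ≤ Real.log (2*T₀) := Real.log_le_log hσ0 hσub
          _ = Real.log 2 + Real.log T₀ := Real.log_mul (by norm_num) (ne_of_gt hT₀pos)
          _ = Real.log 2 + (1/10)*l := by rw [hT₀def, Real.log_exp]
      rw [hmul, h8]
      linarith
    -- final : 1/10 l ≤ L log2 / D given l D ≤ l (8 log2 + l/2) and L = l²
    have hfin : (1/10*l) * Real.log (8*(s:ℝ)^5) ≤ L * Real.log 2 := by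
      have hld : (1/10*l) * Real.log (8*(s:ℝ)^5) ≤ (1/10*l) * (8*Real.log 2 + l/2) :=
        mul_le_mul_of_nonneg_left hDub (by positivity)
      have hgoal : (1/10*l) * (8*Real.log 2 + l/2) ≤ L * Real.log 2 := by
        rw [← hll]
        nlinarith [hlbig, hlog2l, hlog2u, hl0]
      linarith
    calc 1/10*l = ((1/10*l) * Real.log (8*(s:ℝ)^5)) / Real.log (8*(s:ℝ)^5) := by
          field_simp
      _ ≤ (L * Real.log 2) / Real.log (8*(s:ℝ)^5) := by gcongr
      _ = L * (Real.log 2 / Real.log (8*(s:ℝ)^5)) := by rw [mul_div_assoc]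
end

section
/- For every integer k ≥ 1 there exists a connected bipartite simple graph on exactly k² vertices in which every induced tree has at most 2k − 1 vertices. -/
/-- For every integer `k ≥ 1` there exists a connected bipartite simple graph on
exactly `k²` vertices in which every induced tree has at most `2k - 1` vertices. -/
theorem stmt_2 (k : ℕ) (hk : 1 ≤ k) :
    ∃ G : SimpleGraph (Fin (k ^ 2)), G.Connected ∧ G.Colorable 2 ∧
      ∀ S : Finset (Fin (k ^ 2)), (G.induce (S : Set (Fin (k ^ 2)))).IsTree →
        S.card ≤ 2 * k - 1 := by
  classical
  have hcard : Fintype.card (Fin (k ^ 2)) = Fintype.card (Fin k × Fin k) := by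
    simp [pow_two]
  let e : Fin (k ^ 2) ≃ Fin k × Fin k := Fintype.equivOfCardEq hcard
  let rowf : Fin (k ^ 2) → ℕ := fun v => (e v).1 + (e v).2
  have hrow_le : ∀ v, rowf v ≤ 2 * k - 2 := by
    intro v
    have h1 := (e v).1.isLt
    have h2 := (e v).2.isLt
    simp only [rowf]
    omega
  let G : SimpleGraph (Fin (k ^ 2)) :=
    { Adj := fun u v => rowf u + 1 = rowf v ∨ rowf v + 1 = rowf u
      symm := ⟨fun u v h => h.symm⟩
      loopless := ⟨fun v h => by rcases h with h | h <;> omega⟩ }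
  have hGadj : ∀ u v, G.Adj u v ↔ (rowf u + 1 = rowf v ∨ rowf v + 1 = rowf u) :=
    fun _ _ => Iff.rfl
  have hexists : ∀ m : ℕ, m ≤ 2 * k - 2 → ∃ v, rowf v = m := by
    intro m hm
    refine ⟨e.symm (⟨min m (k - 1), by omega⟩, ⟨m - min m (k - 1), by omega⟩), ?_⟩
    simp only [rowf, Equiv.apply_symm_apply]
    omega
  refine ⟨G, ?_, ?_, ?_⟩
  · -- Connected
    obtain ⟨v0, hv0⟩ := hexists 0 (by omega)
    have key : ∀ m : ℕ, ∀ v, rowf v = m → G.Reachable v0 v := by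
      intro m
      induction m with
      | zero =>
        intro v hv
        have hev : e v = e v0 := by
          have h1 : ((e v).1 : ℕ) = 0 ∧ ((e v).2 : ℕ) = 0 := by
            simp only [rowf] at hv; omega
          have h2 : ((e v0).1 : ℕ) = 0 ∧ ((e v0).2 : ℕ) = 0 := by
            simp only [rowf] at hv0; omega
          exact Prod.ext (Fin.ext (by omega)) (Fin.ext (by omega))
        have : v = v0 := e.injective hev
        rw [this]
      | succ m ih =>
        intro v hv
        have hm : m ≤ 2 * k - 2 := by have := hrow_le v; omega
        obtain ⟨u, hu⟩ := hexists m hm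
        exact (ih u hu).trans (SimpleGraph.Adj.reachable (Or.inl (by omega)))
    have hne : Nonempty (Fin (k ^ 2)) := ⟨v0⟩
    refine SimpleGraph.Connected.mk ?_
    intro u v
    exact (key _ u rfl).symm.trans (key _ v rfl)
  · -- Colorable 2
    refine ⟨SimpleGraph.Coloring.mk (fun v => (⟨rowf v % 2, by omega⟩ : Fin 2)) ?_⟩
    intro u v huv h
    have h' : rowf u % 2 = rowf v % 2 := by
      simpa using congrArg Fin.val h
    rcases huv with h1 | h1 <;> omega
  · -- tree bound
    intro S hS
    have hSne : S.Nonempty := by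
      have := hS.isConnected.nonempty
      rcases this with ⟨⟨v, hv⟩⟩
      exact ⟨v, by simpa using hv⟩
    set R := S.image rowf with hR
    have hRne : R.Nonempty := hSne.image _
    set l := R.min' hRne with hl
    set r := R.max' hRne with hr
    have hle : ∀ v ∈ S, l ≤ rowf v := fun v hv =>
      Finset.min'_le _ _ (Finset.mem_image_of_mem _ hv)
    have hge : ∀ v ∈ S, rowf v ≤ r := fun v hv =>
      Finset.le_max' _ _ (Finset.mem_image_of_mem _ hv)
    obtain ⟨u0, hu0S, hu0⟩ := Finset.mem_image.mp (R.min'_mem hRne)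
    obtain ⟨w0, hw0S, hw0⟩ := Finset.mem_image.mp (R.max'_mem hRne)
    have hlr : l ≤ r := by have := hge u0 hu0S; omega
    have hr2k : r ≤ 2 * k - 2 := by have := hrow_le w0; omega
    -- walks hit intermediate rows
    have walk_hits : ∀ {a b : (S : Set (Fin (k ^ 2)))}
        (W : (G.induce (S : Set (Fin (k ^ 2)))).Walk a b) (m : ℕ),
        rowf a ≤ m → m ≤ rowf b → ∃ c ∈ S, rowf c = m := by
      intro a b W
      induction W with
      | @nil x =>
        intro m h1 h2
        exact ⟨x.1, Finset.mem_coe.mp x.2, by omega⟩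
      | @cons x y z h W ih =>
        intro m h1 h2
        by_cases hxm : rowf x = m
        · exact ⟨x.1, Finset.mem_coe.mp x.2, hxm⟩
        · have hadj : G.Adj (x : Fin (k ^ 2)) (y : Fin (k ^ 2)) := h
          have : rowf (y : Fin (k ^ 2)) ≤ m := by
            rcases hadj with h' | h' <;> omega
          exact ih m this h2
    have hcontig : ∀ m, l ≤ m → m ≤ r → ∃ v ∈ S, rowf v = m := by
      intro m h1 h2
      obtain ⟨W⟩ := hS.isConnected.preconnected ⟨u0, by simpa using hu0S⟩
        ⟨w0, by simpa using hw0S⟩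
      exact walk_hits W m (by simpa [hu0] using h1) (by simpa [hw0] using h2)
    -- fiber cardinality bound
    have hfiber : ∀ m : ℕ, (S.filter (fun v => rowf v = m)).card ≤
        min m (k - 1) + 1 - (m - (k - 1)) := by
      intro m
      have hbd : (S.filter (fun v => rowf v = m)).card ≤
          (Finset.Icc (m - (k - 1)) (min m (k - 1))).card := by
        apply Finset.card_le_card_of_injOn (fun v => ((e v).1 : ℕ))
        · intro v hv
          simp only [Finset.mem_coe, Finset.mem_filter] at hv
          have h1 := (e v).1.isLt
          have h2 := (e v).2.isLt
          have h3 : ((e v).1 : ℕ) + (e v).2 = m := hv.2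
          simp only [Finset.mem_coe, Finset.mem_Icc]
          omega
        · intro v1 h1 v2 h2 hEq
          simp only [Finset.coe_filter, Set.mem_setOf_eq] at h1 h2
          apply e.injective
          have hEq' : ((e v1).1 : ℕ) = ((e v2).1 : ℕ) := hEq
          have hj : ((e v1).2 : ℕ) = (e v2).2 := by
            have ha := h1.2; have hb := h2.2
            simp only [rowf] at ha hb
            omega
          exact Prod.ext (Fin.ext hEq) (Fin.ext hj)
      rwa [Nat.card_Icc] at hbd
    -- interior fibers have at most one vertex
    have hinterior : ∀ m, l < m → m < r → (S.filter (fun v => rowf v = m)).card ≤ 1 := by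
      intro m h1 h2
      rw [Finset.card_le_one]
      intro v1 hv1 v2 hv2
      by_contra hne
      simp only [Finset.mem_filter] at hv1 hv2
      obtain ⟨u, huS, hu⟩ := hcontig (m - 1) (by omega) (by omega)
      obtain ⟨w, hwS, hw⟩ := hcontig (m + 1) (by omega) (by omega)
      set T := G.induce (S : Set (Fin (k ^ 2))) with hT
      let u' : (S : Set (Fin (k ^ 2))) := ⟨u, by simpa using huS⟩
      let w' : (S : Set (Fin (k ^ 2))) := ⟨w, by simpa using hwS⟩
      let v1' : (S : Set (Fin (k ^ 2))) := ⟨v1, by simpa using hv1.1⟩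
      let v2' : (S : Set (Fin (k ^ 2))) := ⟨v2, by simpa using hv2.1⟩
      have hA1 : T.Adj u' v1' := Or.inl (show rowf u + 1 = rowf v1 by omega)
      have hA2 : T.Adj v1' w' := Or.inl (show rowf v1 + 1 = rowf w by omega)
      have hA3 : T.Adj u' v2' := Or.inl (show rowf u + 1 = rowf v2 by omega)
      have hA4 : T.Adj v2' w' := Or.inl (show rowf v2 + 1 = rowf w by omega)
      have huv1 : u' ≠ v1' := fun hh => by
        have : rowf u = rowf v1 := by rw [show u = v1 from congrArg Subtype.val hh]
        omega
      have huw : u' ≠ w' := fun hh => by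
        have : rowf u = rowf w := by rw [show u = w from congrArg Subtype.val hh]
        omega
      have hv1w : v1' ≠ w' := fun hh => by
        have : rowf v1 = rowf w := by rw [show v1 = w from congrArg Subtype.val hh]
        omega
      have huv2 : u' ≠ v2' := fun hh => by
        have : rowf u = rowf v2 := by rw [show u = v2 from congrArg Subtype.val hh]
        omega
      have hv2w : v2' ≠ w' := fun hh => by
        have : rowf v2 = rowf w := by rw [show v2 = w from congrArg Subtype.val hh]
        omega
      let p1 : T.Walk u' w' := SimpleGraph.Walk.cons hA1
        (SimpleGraph.Walk.cons hA2 SimpleGraph.Walk.nil)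
      let p2 : T.Walk u' w' := SimpleGraph.Walk.cons hA3
        (SimpleGraph.Walk.cons hA4 SimpleGraph.Walk.nil)
      have hp1 : p1.IsPath := by
        rw [SimpleGraph.Walk.isPath_def]
        simp [p1, huv1, huw, hv1w]
      have hp2 : p2.IsPath := by
        rw [SimpleGraph.Walk.isPath_def]
        simp [p2, huv2, huw, hv2w]
      have heq : (⟨p1, hp1⟩ : T.Path u' w') = ⟨p2, hp2⟩ :=
        hS.IsAcyclic.path_unique _ _
      have heq' : p1 = p2 := congrArg Subtype.val heq
      have hsup := congrArg SimpleGraph.Walk.support heq'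
      simp only [p1, p2, SimpleGraph.Walk.support_cons, SimpleGraph.Walk.support_nil,
        List.cons.injEq] at hsup
      exact hne (congrArg Subtype.val hsup.2.1)
    -- count
    have hcount : S.card = ∑ m ∈ Finset.Icc l r, (S.filter (fun v => rowf v = m)).card :=
      Finset.card_eq_sum_card_fiberwise
        (fun v hv => Finset.mem_Icc.mpr ⟨hle v hv, hge v hv⟩)
    have hsum : ∑ m ∈ Finset.Icc l r, (S.filter (fun v => rowf v = m)).card ≤
        ∑ m ∈ Finset.Icc l r,
          ((if m = l then l else 0) + (if m = r then 2 * k - 2 - r else 0) + 1) := by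
      apply Finset.sum_le_sum
      intro m hm
      rw [Finset.mem_Icc] at hm
      have hf := hfiber m
      by_cases hml : m = l
      · subst hml
        split_ifs <;> omega
      · by_cases hmr : m = r
        · subst hmr
          split_ifs <;> omega
        · have hint := hinterior m (lt_of_le_of_ne hm.1 (Ne.symm hml))
            (lt_of_le_of_ne hm.2 hmr)
          split_ifs <;> omega
    have hrhs : ∑ m ∈ Finset.Icc l r,
        ((if m = l then l else 0) + (if m = r then 2 * k - 2 - r else 0) + 1) =
        l + (2 * k - 2 - r) + (r + 1 - l) := by
      rw [Finset.sum_add_distrib, Finset.sum_add_distrib]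
      rw [Finset.sum_ite_eq' (Finset.Icc l r) l (fun _ => l),
        Finset.sum_ite_eq' (Finset.Icc l r) r (fun _ => 2 * k - 2 - r)]
      simp [Finset.mem_Icc, hlr, Nat.card_Icc]
    rw [hcount]
    calc ∑ m ∈ Finset.Icc l r, (S.filter (fun v => rowf v = m)).card ≤ _ := hsum
    _ = l + (2 * k - 2 - r) + (r + 1 - l) := hrhs
    _ ≤ 2 * k - 1 := by omega
end

section
/- For every integer n ≥ 1 there exists a connected bipartite simple graph on exactly n vertices in which every induced tree has fewer than 2·√n + 1 vertices. -/
open Finset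

private lemma sum_ivt (k : ℕ) (lo hi : ℕ → ℕ) (hlh : ∀ i < k, lo i ≤ hi i) :
    ∀ t, (∑ i ∈ Finset.range k, lo i) ≤ t → t ≤ (∑ i ∈ Finset.range k, hi i) →
    ∃ s : ℕ → ℕ, (∀ i < k, lo i ≤ s i ∧ s i ≤ hi i) ∧ (∑ i ∈ Finset.range k, s i) = t := by
  intro t h1 h2
  induction t, h1 using Nat.le_induction with
  | base => exact ⟨lo, fun i hi => ⟨le_refl _, hlh i hi⟩, rfl⟩
  | succ t ht ih =>
    obtain ⟨s, hs, hsum⟩ := ih (le_of_lt (Nat.lt_of_succ_le h2))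
    have hex : ∃ i ∈ Finset.range k, s i < hi i := by
      by_contra hcon
      push_neg at hcon
      have : (∑ i ∈ Finset.range k, hi i) ≤ ∑ i ∈ Finset.range k, s i :=
        Finset.sum_le_sum hcon
      omega
    obtain ⟨i, hik, hilt⟩ := hex
    refine ⟨Function.update s i (s i + 1), ?_, ?_⟩
    · intro j hj
      rcases eq_or_ne j i with rfl | hne
      · simp only [Function.update_self]
        exact ⟨le_trans (hs j hj).1 (Nat.le_succ _), hilt⟩
      · rw [Function.update_of_ne hne]
        exact hs j hj
    · rw [Finset.sum_update_of_mem hik]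
      rw [← Finset.sum_erase_add _ _ hik] at hsum
      rw [Finset.erase_eq] at hsum
      omega

private lemma walk_ivt {V : Type*} {G : SimpleGraph V} (f : V → ℕ)
    (hf : ∀ a b : V, G.Adj a b → f b = f a + 1 ∨ f a = f b + 1) :
    ∀ {u v : V} (w : G.Walk u v) (t : ℕ), f u ≤ t → t ≤ f v →
      ∃ x ∈ w.support, f x = t := by
  intro u v w
  induction w with
  | nil => exact fun t h1 h2 => ⟨_, by simp, le_antisymm h1 h2⟩
  | @cons a b c hadj p ih =>
    intro t h1 h2
    rcases eq_or_lt_of_le h1 with rfl | hlt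
    · exact ⟨a, by simp, rfl⟩
    · have hb : f b ≤ t := by rcases hf a b hadj with h | h <;> omega
      obtain ⟨x, hx, hxt⟩ := ih t hb h2
      exact ⟨x, by simp [hx], hxt⟩

private def pyr (k : ℕ) : ℕ := ∑ i ∈ Finset.range k, min (i + 1) (k - i)

private lemma pyr_step (k : ℕ) : pyr (k + 2) = pyr k + (k + 2) := by
  unfold pyr
  rw [Finset.sum_range_succ' (fun i => min (i + 1) (k + 2 - i))]
  have h1 : ∀ i ∈ Finset.range (k + 1), min (i + 1 + 1) (k + 2 - (i + 1)) =
      min (i + 1) (k - i) + 1 := by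
    intro i hi
    simp only [Finset.mem_range] at hi
    omega
  rw [Finset.sum_congr rfl h1, Finset.sum_add_distrib, Finset.sum_const, Finset.card_range,
    Finset.sum_range_succ]
  simp
  omega

private lemma pyr_eval (a : ℕ) :
    pyr (2 * a) = a * (a + 1) ∧ pyr (2 * a + 1) = (a + 1) * (a + 1) := by
  induction a with
  | zero => constructor <;> decide
  | succ b ih =>
    have h2 : 2 * b + 2 + 1 = (2 * b + 1) + 2 := by ring
    rw [show 2 * (b + 1) = 2 * b + 2 from by ring] at *
    rw [h2, pyr_step, pyr_step, ih.1, ih.2]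
    constructor <;> ring

/-- For every integer `n ≥ 1` there exists a connected bipartite simple graph on
exactly `n` vertices in which every induced tree has fewer than `2√n + 1` vertices. -/
theorem stmt_3 (n : ℕ) (hn : 1 ≤ n) :
    ∃ G : SimpleGraph (Fin n), G.Connected ∧ G.Colorable 2 ∧
      ∀ S : Finset (Fin n), (G.induce (S : Set (Fin n))).IsTree →
        (S.card : ℝ) < 2 * Real.sqrt n + 1 := by
  set a := Nat.sqrt (n - 1) with ha
  have ha1 : a * a ≤ n - 1 := Nat.sqrt_le (n - 1)
  have ha2 : n - 1 < (a + 1) * (a + 1) := Nat.lt_succ_sqrt (n - 1)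
  set k := if n ≤ a * (a + 1) then 2 * a else 2 * a + 1 with hk
  have haa : a ≤ a * a := by
    rcases Nat.eq_zero_or_pos a with h | h
    · simp [h]
    · exact Nat.le_mul_of_pos_left a h
  have h2a : 2 * a ≤ a * a + 1 := by nlinarith
  have hid : a * (a + 1) = a * a + a := by ring
  have hka : k ≤ 2 * a + 1 := by rw [hk]; split <;> omega
  have hk1 : 1 ≤ k := by
    rw [hk]; split
    · rename_i h; rcases Nat.eq_zero_or_pos a with h0 | h0
      · exfalso; rw [h0] at h; simp at h; omega
      · omega
    · omega
  have hkn : k ≤ n := by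
    rw [hk]; split
    · rename_i h; omega
    · rename_i h; omega
  have hkp : n ≤ pyr k := by
    rw [hk]; split
    · rename_i h; rw [(pyr_eval a).1]; exact h
    · rw [(pyr_eval a).2]; omega
  -- build the tent sizes
  obtain ⟨s, hsb, hssum⟩ := sum_ivt k (fun _ => 1) (fun i => min (i + 1) (k - i))
    (fun i hi => by simp; omega) n (by simpa using hkn) hkp
  set F : ℕ → ℕ := fun i => ∑ j ∈ Finset.range i, s j with hF
  have hFstep : ∀ i, F (i + 1) = F i + s i := fun i => Finset.sum_range_succ s i
  have hFmono : Monotone F := by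
    intro p q hpq
    exact Finset.sum_le_sum_of_subset (Finset.range_subset_range.mpr hpq)
  have hFk : F k = n := hssum
  have hFstrict : ∀ i, i < k → F i < F (i + 1) := by
    intro i hi
    have := (hsb i hi).1
    rw [hFstep]; omega
  classical
  set f : Fin n → ℕ := fun v => Nat.findGreatest (fun i => F i ≤ v.val) (k - 1) with hf
  have hfk : ∀ v, f v ≤ k - 1 := fun v => Nat.findGreatest_le (k - 1)
  have hfk' : ∀ v, f v < k := fun v => by have := hfk v; omega
  have hF0 : F 0 = 0 := by rw [hF]; simp
  have hflo : ∀ v : Fin n, F (f v) ≤ v.val := by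
    intro v
    simp only [hf]
    exact Nat.findGreatest_spec (P := fun i => F i ≤ v.val) (Nat.zero_le _)
      (by simp only [hF0]; exact Nat.zero_le _)
  have hgr : ∀ (v : Fin n) (m : ℕ), f v < m → m ≤ k - 1 → ¬ (F m ≤ v.val) := by
    intro v m h1 h2
    simp only [hf] at h1
    exact Nat.findGreatest_is_greatest (P := fun i => F i ≤ v.val) h1 h2
  have hfhi : ∀ v : Fin n, v.val < F (f v + 1) := by
    intro v
    by_contra hcon
    push_neg at hcon
    rcases Nat.lt_or_ge (f v) (k - 1) with h | h
    · exact hgr v (f v + 1) (Nat.lt_succ_self _) (by omega) hcon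
    · have hfe : f v = k - 1 := le_antisymm (hfk v) h
      have h4 : F k ≤ v.val := by
        rw [show k = f v + 1 from by omega]
        exact hcon
      rw [hFk] at h4
      exact absurd v.isLt (by omega)
  have hfiber : ∀ (i : ℕ) (T : Finset (Fin n)),
      (T.filter (fun v => f v = i)).card ≤ s i := by
    intro i T
    have hmap : ∀ v ∈ T.filter (fun v => f v = i), (v : ℕ) ∈ Finset.Ico (F i) (F (i + 1)) := by
      intro v hv
      rw [Finset.mem_filter] at hv
      rw [Finset.mem_Ico, ← hv.2]
      exact ⟨hflo v, hfhi v⟩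
    have hinj : ((T.filter (fun v => f v = i)) : Set (Fin n)).InjOn (fun v : Fin n => v.val) :=
      fun x _ y _ h => Fin.val_injective h
    have := Finset.card_le_card_of_injOn _ hmap hinj
    rwa [Nat.card_Ico, hFstep, Nat.add_sub_cancel_left] at this
  have hrep : ∀ i, i < k → ∃ v : Fin n, f v = i := by
    intro i hi
    have hFin : F i < n := by
      have h1 := hFstrict i hi
      have h2 : F (i + 1) ≤ F k := hFmono (by omega)
      omega
    refine ⟨⟨F i, hFin⟩, ?_⟩
    have hle : i ≤ f ⟨F i, hFin⟩ := Nat.le_findGreatest (by omega) (le_refl _)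
    have hge : f ⟨F i, hFin⟩ ≤ i := by
      by_contra hcon
      push_neg at hcon
      have h1 := hflo ⟨F i, hFin⟩
      have h2 : F (i + 1) ≤ F (f ⟨F i, hFin⟩) := hFmono (by omega)
      have h3 := hFstrict i hi
      simp only at h1
      omega
    omega
  set G : SimpleGraph (Fin n) :=
    { Adj := fun u v => f u + 1 = f v ∨ f v + 1 = f u,
      symm := ⟨fun u v h => h.symm⟩,
      loopless := ⟨fun v h => by rcases h with h | h <;> omega⟩ } with hG
  have hGadj : ∀ u v : Fin n, G.Adj u v ↔ (f u + 1 = f v ∨ f v + 1 = f u) :=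
    fun u v => Iff.rfl
  refine ⟨G, ?_, ?_, ?_⟩
  · -- Connected
    rw [SimpleGraph.connected_iff]
    refine ⟨?_, ⟨⟨0, hn⟩⟩⟩
    rcases Nat.lt_or_ge k 2 with hk2 | hk2
    · -- k = 1, so n = 1
      have hk1' : k = 1 := by omega
      have hn1 : n = 1 := by
        have h1 := hFk
        rw [hk1', hFstep 0] at h1
        have h2 := (hsb 0 (by omega)).2
        rw [hk1'] at h2
        simp [hF] at h1
        simp at h2
        omega
      intro u v
      have : u = v := Fin.ext (by omega)
      rw [this]
    · obtain ⟨v0, hv0⟩ := hrep 0 (by omega)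
      have key : ∀ j, ∀ v : Fin n, f v = j → G.Reachable v v0 := by
        intro j
        induction j using Nat.strong_induction_on with
        | _ j ih =>
          intro v hv
          rcases j with _ | j
          · obtain ⟨w1, hw1⟩ := hrep 1 (by omega)
            have h1 : G.Adj v w1 := (hGadj v w1).mpr (Or.inl (by omega))
            have h2 : G.Adj w1 v0 := (hGadj w1 v0).mpr (Or.inr (by omega))
            exact h1.reachable.trans h2.reachable
          · have hjk : j < k := by have := hfk' v; omega
            obtain ⟨w, hw⟩ := hrep j hjk
            have h1 : G.Adj v w := (hGadj v w).mpr (Or.inr (by omega))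
            exact h1.reachable.trans (ih j (by omega) w hw)
      intro u v
      exact (key _ u rfl).trans (key _ v rfl).symm
  · -- Colorable 2
    refine ⟨SimpleGraph.Coloring.mk (fun v => (⟨f v % 2, by omega⟩ : Fin 2)) ?_⟩
    intro u v hadj heq
    have h2 : f u % 2 = f v % 2 := congrArg Fin.val heq
    rcases (hGadj u v).mp hadj with h | h <;> omega
  · -- tree bound
    intro S hS
    have hcard : S.card ≤ k := by
      have hne : S.Nonempty := by
        have h0 : Nonempty (↑(↑S : Set (Fin n))) := hS.isConnected.nonempty
        obtain ⟨⟨x, hx⟩⟩ := h0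
        exact ⟨x, hx⟩
      have hTne : (S.image (fun v => f v)).Nonempty := hne.image _
      set l := (S.image (fun v => f v)).min' hTne with hl
      set r := (S.image (fun v => f v)).max' hTne with hr
      obtain ⟨u0, hu0S, hu0f⟩ := Finset.mem_image.mp ((S.image (fun v => f v)).min'_mem hTne)
      obtain ⟨v0, hv0S, hv0f⟩ := Finset.mem_image.mp ((S.image (fun v => f v)).max'_mem hTne)
      have hu0f' : f u0 = l := by rw [hl]; exact hu0f
      have hv0f' : f v0 = r := by rw [hr]; exact hv0f
      have hlr : l ≤ r := by
        rw [hl]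
        exact Finset.min'_le _ _ ((S.image (fun v => f v)).max'_mem hTne)
      have hlk : l < k := by rw [← hu0f']; exact hfk' u0
      have hrk : r < k := by rw [← hv0f']; exact hfk' v0
      have hmemb : ∀ v ∈ S, l ≤ f v ∧ f v ≤ r := by
        intro v hv
        exact ⟨Finset.min'_le _ _ (Finset.mem_image_of_mem _ hv),
          Finset.le_max' _ _ (Finset.mem_image_of_mem _ hv)⟩
      -- interval property
      have hA : ∀ t, l ≤ t → t ≤ r → ∃ v ∈ S, f v = t := by
        intro t h1 h2
        have hu0' : u0 ∈ (↑S : Set (Fin n)) := hu0S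
        have hv0' : v0 ∈ (↑S : Set (Fin n)) := hv0S
        obtain ⟨w⟩ := hS.isConnected.preconnected ⟨u0, hu0'⟩ ⟨v0, hv0'⟩
        obtain ⟨x, hxsup, hxt⟩ := walk_ivt (fun x => f x.val)
          (by
            intro p q hpq
            have hpq' : G.Adj p.val q.val := by simpa using hpq
            show f q.val = f p.val + 1 ∨ f p.val = f q.val + 1
            rcases (hGadj _ _).mp hpq' with h | h <;> omega)
          w t (by simpa [hu0f'] using h1) (by simpa [hv0f'] using h2)
        exact ⟨x.val, x.prop, hxt⟩
      -- middle fibers are singletons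
      have hB : ∀ t, l < t → t < r → ∀ x ∈ S, ∀ y ∈ S, f x = t → f y = t → x = y := by
        intro t h1 h2 x hx y hy hxt hyt
        by_contra hne'
        obtain ⟨p, hp, hpf⟩ := hA (t - 1) (by omega) (by omega)
        obtain ⟨q, hq, hqf⟩ := hA (t + 1) (by omega) (by omega)
        have hp' : p ∈ (↑S : Set (Fin n)) := hp
        have hq' : q ∈ (↑S : Set (Fin n)) := hq
        have hx' : x ∈ (↑S : Set (Fin n)) := hx
        have hy' : y ∈ (↑S : Set (Fin n)) := hy
        set P : ↑(↑S : Set (Fin n)) := ⟨p, hp'⟩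
        set Q : ↑(↑S : Set (Fin n)) := ⟨q, hq'⟩
        set X : ↑(↑S : Set (Fin n)) := ⟨x, hx'⟩
        set Y : ↑(↑S : Set (Fin n)) := ⟨y, hy'⟩
        have hpx : (G.induce (↑S : Set (Fin n))).Adj P X := by
          simp only [SimpleGraph.comap_adj, Function.Embedding.coe_subtype]
          exact (hGadj p x).mpr (Or.inl (by omega))
        have hxq : (G.induce (↑S : Set (Fin n))).Adj X Q := by
          simp only [SimpleGraph.comap_adj, Function.Embedding.coe_subtype]
          exact (hGadj x q).mpr (Or.inl (by omega))
        have hpy : (G.induce (↑S : Set (Fin n))).Adj P Y := by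
          simp only [SimpleGraph.comap_adj, Function.Embedding.coe_subtype]
          exact (hGadj p y).mpr (Or.inl (by omega))
        have hyq : (G.induce (↑S : Set (Fin n))).Adj Y Q := by
          simp only [SimpleGraph.comap_adj, Function.Embedding.coe_subtype]
          exact (hGadj y q).mpr (Or.inl (by omega))
        have hPX : P ≠ X := by simp [P, X, Subtype.ext_iff]; intro h; rw [h] at hpf; omega
        have hPQ : P ≠ Q := by simp [P, Q, Subtype.ext_iff]; intro h; rw [h] at hpf; omega
        have hXQ : X ≠ Q := by simp [X, Q, Subtype.ext_iff]; intro h; rw [h] at hxt; omega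
        have hPY : P ≠ Y := by simp [P, Y, Subtype.ext_iff]; intro h; rw [h] at hpf; omega
        have hYQ : Y ≠ Q := by simp [Y, Q, Subtype.ext_iff]; intro h; rw [h] at hyt; omega
        set w1 : (G.induce (↑S : Set (Fin n))).Walk P Q :=
          SimpleGraph.Walk.cons hpx (SimpleGraph.Walk.cons hxq SimpleGraph.Walk.nil)
        set w2 : (G.induce (↑S : Set (Fin n))).Walk P Q :=
          SimpleGraph.Walk.cons hpy (SimpleGraph.Walk.cons hyq SimpleGraph.Walk.nil)
        have hw1 : w1.IsPath := by
          simp [w1, SimpleGraph.Walk.isPath_def]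
          exact ⟨⟨hPX, hPQ⟩, hXQ⟩
        have hw2 : w2.IsPath := by
          simp [w2, SimpleGraph.Walk.isPath_def]
          exact ⟨⟨hPY, hPQ⟩, hYQ⟩
        obtain ⟨W, _, hWuniq⟩ := hS.existsUnique_path P Q
        have he : w1 = w2 := (hWuniq w1 hw1).trans (hWuniq w2 hw2).symm
        have hsupp := congrArg SimpleGraph.Walk.support he
        simp [w1, w2] at hsupp
        exact hne' (congrArg Subtype.val hsupp)
      rcases eq_or_lt_of_le hlr with heq | hlr'
      · -- l = r : everything in one fiber
        have hsub : S ⊆ S.filter (fun v => f v = l) := by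
          intro v hv
          rw [Finset.mem_filter]
          have := hmemb v hv
          exact ⟨hv, by omega⟩
        have h1 := hfiber l S
        have h2 := (hsb l hlk).2
        have := Finset.card_le_card hsub
        have hm : min (l + 1) (k - l) ≤ k := le_trans (min_le_right _ _) (by omega)
        omega
      · -- l < r
        have hsub : S ⊆ (S.filter (fun v => f v = l) ∪ S.filter (fun v => f v = r)) ∪
            S.filter (fun v => l < f v ∧ f v < r) := by
          intro v hv
          have h5 := hmemb v hv
          simp only [Finset.mem_union, Finset.mem_filter]
          rcases eq_or_ne (f v) l with h6 | h6
          · exact Or.inl (Or.inl ⟨hv, h6⟩)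
          · rcases eq_or_ne (f v) r with h7 | h7
            · exact Or.inl (Or.inr ⟨hv, h7⟩)
            · exact Or.inr ⟨hv, by omega⟩
        have hmid : (S.filter (fun v => l < f v ∧ f v < r)).card ≤ r - l - 1 := by
          have hmap : ∀ v ∈ S.filter (fun v => l < f v ∧ f v < r), f v ∈ Finset.Ioo l r := by
            intro v hv
            rw [Finset.mem_filter] at hv
            rw [Finset.mem_Ioo]
            exact hv.2
          have hinj : ((S.filter (fun v => l < f v ∧ f v < r)) : Set (Fin n)).InjOn f := by
            intro x hxm y hym hxy
            simp only [Finset.coe_filter, Set.mem_setOf_eq] at hxm hym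
            exact hB (f x) hxm.2.1 hxm.2.2 x hxm.1 y hym.1 rfl hxy.symm
          have := Finset.card_le_card_of_injOn f hmap hinj
          rwa [Nat.card_Ioo] at this
        have h1 := hfiber l S
        have h2 := hfiber r S
        have hb1 : s l ≤ min (l + 1) (k - l) := (hsb l hlk).2
        have hb2 : s r ≤ min (r + 1) (k - r) := (hsb r hrk).2
        have hc1 : s l ≤ l + 1 := le_trans hb1 (min_le_left _ _)
        have hc2 : s r ≤ k - r := le_trans hb2 (min_le_right _ _)
        have htot := Finset.card_le_card hsub
        have htot2 := Finset.card_union_le (S.filter (fun v => f v = l) ∪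
          S.filter (fun v => f v = r)) (S.filter (fun v => l < f v ∧ f v < r))
        have htot3 := Finset.card_union_le (S.filter (fun v => f v = l))
          (S.filter (fun v => f v = r))
        omega
    -- final real arithmetic
    have han : a * a < n := by omega
    have hsq : (a : ℝ) < Real.sqrt n := by
      rw [show (a : ℝ) = ((a : ℕ) : ℝ) from rfl]
      refine (Real.lt_sqrt (by positivity)).mpr ?_
      have h9 : ((a * a : ℕ) : ℝ) < (n : ℝ) := by exact_mod_cast han
      push_cast at h9
      nlinarith
    have hc : (S.card : ℝ) ≤ (k : ℝ) := by exact_mod_cast hcard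
    have hc2 : (k : ℝ) ≤ 2 * (a : ℝ) + 1 := by exact_mod_cast hka
    linarith
end

section
/- Let G be a connected bipartite simple graph and let W ⊆ V(G) be a set of m vertices with m ≥ 3. Suppose there is an integer t with 3 ≤ t such that every induced tree in G contains at most t vertices of W. Then there exists a constant C > 0 such that for every integer n ≥ 1 there is a connected bipartite simple graph on exactly n vertices in which every induced tree has at most C·n^(log(t−1)/log(m−1)) vertices. -/
set_option linter.unusedSectionVars false

namespace Stmt5Aux


/-! ### Heap combinatorics on ℕ -/

/-- Parent in the `M`-ary heap layout. -/
def par (M j : ℕ) : ℕ := (j - 1) / M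

lemma par_le (M j : ℕ) : par M j ≤ j - 1 := Nat.div_le_self _ _

lemma par_lt {M j : ℕ} (hj : 1 ≤ j) : par M j < j :=
  lt_of_le_of_lt (par_le M j) (by omega)

lemma par_le' (M j : ℕ) : par M j ≤ j := le_trans (par_le M j) (by omega)

lemma iter_par_le (M e j : ℕ) : (par M)^[e] j ≤ j := by
  induction e generalizing j with
  | zero => simp
  | succ e ih =>
    rw [Function.iterate_succ_apply]
    exact le_trans (ih _) (par_le' M j)

lemma iter_par_zero (M : ℕ) : ∀ e j, j ≤ e → (par M)^[e] j = 0 := by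
  intro e
  induction e with
  | zero => intro j h; interval_cases j; simp
  | succ e ih =>
    intro j h
    rcases Nat.eq_zero_or_pos j with h0 | h1
    · subst h0
      rw [Function.iterate_succ_apply]
      exact ih _ (by simp [par])
    · rw [Function.iterate_succ_apply]
      exact ih _ (by have := par_le M j; omega)

/-- `i` is a (weak) ancestor of `j` in the heap. -/
def SubP (M i j : ℕ) : Prop := ∃ e, e ≤ j ∧ (par M)^[e] j = i

instance (M i j : ℕ) : Decidable (SubP M i j) :=
  decidable_of_iff (¬ ∀ e, e ≤ j → ¬ (par M)^[e] j = i) (by unfold SubP; push_neg; rfl)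

lemma subP_of_iter {M i j e : ℕ} (h : (par M)^[e] j = i) : SubP M i j := by
  rcases le_or_gt e j with he | he
  · exact ⟨e, he, h⟩
  · have h0 : (par M)^[j] j = 0 := iter_par_zero M j j le_rfl
    have : (par M)^[e] j = 0 := by
      have : e = (e - j) + j := by omega
      rw [this, Function.iterate_add_apply, h0]
      exact iter_par_zero M _ 0 (by omega)
    exact ⟨j, le_rfl, by omega⟩

lemma subP_refl (M j : ℕ) : SubP M j j := ⟨0, by omega, rfl⟩

lemma subP_le {M i j : ℕ} (h : SubP M i j) : i ≤ j := by
  obtain ⟨e, -, rfl⟩ := h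
  exact iter_par_le M e j

lemma subP_zero (M j : ℕ) : SubP M 0 j := subP_of_iter (iter_par_zero M j j le_rfl)

lemma subP_trans {M i j l : ℕ} (h1 : SubP M i j) (h2 : SubP M j l) : SubP M i l := by
  obtain ⟨e, -, he⟩ := h1
  obtain ⟨f, -, hf⟩ := h2
  exact subP_of_iter (e := e + f) (by rw [Function.iterate_add_apply, hf, he])

lemma subP_par {M j : ℕ} (hj : 1 ≤ j) : SubP M (par M j) j :=
  subP_of_iter (e := 1) rfl

lemma subP_par_of_ne {M i j : ℕ} (h : SubP M i j) (hne : j ≠ i) : SubP M i (par M j) := by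
  obtain ⟨e, -, he⟩ := h
  cases e with
  | zero => exact absurd he hne
  | succ e =>
    rw [Function.iterate_succ_apply] at he
    exact subP_of_iter he

lemma subP_eq_of_not_par {M i j : ℕ} (h : SubP M i j) (hnp : ¬ SubP M i (par M j)) : j = i := by
  by_contra hne
  exact hnp (subP_par_of_ne h hne)

/-- `c` is a child of `i`. -/
def IsChild (M i c : ℕ) : Prop := 1 ≤ c ∧ par M c = i

instance (M i c : ℕ) : Decidable (IsChild M i c) :=
  decidable_of_iff (1 ≤ c ∧ par M c = i) Iff.rfl

lemma subP_pos_ne {M i j : ℕ} (h : SubP M i j) (hi : j ≠ i) : 1 ≤ j := by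
  rcases Nat.eq_zero_or_pos j with h0 | h1
  · subst h0; have := subP_le h; omega
  · exact h1

lemma subP_cases {M i j : ℕ} (h : SubP M i j) :
    j = i ∨ ∃ c, IsChild M i c ∧ SubP M c j := by
  induction j using Nat.strong_induction_on with
  | _ j ih =>
    by_cases hne : j = i
    · exact Or.inl hne
    · have hj1 : 1 ≤ j := subP_pos_ne h hne
      have hpar : SubP M i (par M j) := subP_par_of_ne h hne
      rcases ih (par M j) (par_lt hj1) hpar with heq | ⟨c, hc, hcs⟩
      · exact Or.inr ⟨j, ⟨hj1, heq⟩, subP_refl M j⟩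
      · exact Or.inr ⟨c, hc, subP_trans hcs (subP_par hj1)⟩

lemma child_gt {M i c : ℕ} (h : IsChild M i c) : i < c := by
  have h2 := h.2
  have := par_lt (M := M) h.1
  omega

lemma subP_child_unique {M i c c' j : ℕ} (hc : IsChild M i c) (hc' : IsChild M i c' )
    (h1 : SubP M c j) (h2 : SubP M c' j) : c = c' := by
  -- wlog via an auxiliary claim
  have key : ∀ c c' : ℕ, IsChild M i c → IsChild M i c' →
      ∀ e e' : ℕ, e ≤ e' → (par M)^[e] j = c → (par M)^[e'] j = c' → c = c' := by
    intro c c' hc hc' e e' hee he he'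
    have : (par M)^[e' - e] c = c' := by
      rw [← he, ← Function.iterate_add_apply]
      rw [show e' - e + e = e' by omega, he']
    rcases Nat.eq_zero_or_pos (e' - e) with h0 | h1
    · rw [h0] at this; simpa using this
    · exfalso
      have h4 : e' - e = (e' - e - 1) + 1 := by omega
      rw [h4, Function.iterate_succ_apply] at this
      rw [hc.2] at this
      have hle : SubP M c' i := subP_of_iter this
      have := subP_le hle
      have := child_gt hc'
      omega
  obtain ⟨e, -, he⟩ := h1
  obtain ⟨e', -, he'⟩ := h2
  rcases le_or_gt e e' with hee | hee
  · exact key c c' hc hc' e e' hee he he'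
  · exact (key c' c hc' hc e' e (by omega) he' he).symm

/-- Depth in the heap. -/
def dep (M : ℕ) : ℕ → ℕ
  | 0 => 0
  | (j+1) => dep M (par M (j+1)) + 1
decreasing_by exact par_lt (by omega)

lemma dep_succ {M j : ℕ} (hj : 1 ≤ j) : dep M j = dep M (par M j) + 1 := by
  obtain ⟨j', rfl⟩ : ∃ j', j = j' + 1 := ⟨j - 1, by omega⟩
  simp [dep]

lemma dep_le_of_subP {M i j : ℕ} (h : SubP M i j) : dep M i ≤ dep M j := by
  induction j using Nat.strong_induction_on with
  | _ j ih =>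
    by_cases hne : j = i
    · subst hne; exact le_rfl
    · have hj1 : 1 ≤ j := subP_pos_ne h hne
      have := ih (par M j) (par_lt hj1) (subP_par_of_ne h hne)
      rw [dep_succ hj1]
      omega

lemma dep_lt_of_subP_ne {M i j : ℕ} (h : SubP M i j) (hne : j ≠ i) : dep M i < dep M j := by
  have hj1 : 1 ≤ j := subP_pos_ne h hne
  have := dep_le_of_subP (subP_par_of_ne h hne)
  rw [dep_succ hj1]
  omega

lemma dep_child {M i c : ℕ} (h : IsChild M i c) : dep M c = dep M i + 1 := by
  rw [dep_succ h.1, h.2]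

lemma pow_dep_le {M : ℕ} (hM : 2 ≤ M) : ∀ j, M ^ (dep M j) ≤ (M - 1) * j + 1 := by
  intro j
  induction j using Nat.strong_induction_on with
  | _ j ih =>
    rcases Nat.eq_zero_or_pos j with h0 | h1
    · subst h0; simp [dep]
    · rw [dep_succ h1, pow_succ, mul_comm]
      have h2 := ih (par M j) (par_lt h1)
      have h3 : M * par M j ≤ j - 1 := by
        have := Nat.div_mul_le_self (j-1) M
        unfold par
        rw [mul_comm]
        omega
      calc M * M ^ dep M (par M j) ≤ M * ((M-1) * par M j + 1) := by
            exact Nat.mul_le_mul_left M h2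
      _ = (M-1) * (M * par M j) + M := by ring
      _ ≤ (M-1) * (j-1) + M := by
            have : (M-1) * (M * par M j) ≤ (M-1)*(j-1) := Nat.mul_le_mul_left _ h3
            omega
      _ ≤ (M-1) * j + 1 := by
            have : (M-1) * j = (M-1)*(j-1) + (M-1) := by
              rw [← Nat.mul_succ]
              congr 1
              omega
            omega

lemma child_reconstruct {M i c : ℕ} (hM : 1 ≤ M) (h : IsChild M i c) :
    c = i * M + (c - 1) % M + 1 := by
  obtain ⟨h1, h2⟩ := h
  have h3 := Nat.div_add_mod (c - 1) M
  unfold par at h2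
  rw [h2] at h3
  rw [mul_comm i M]
  omega

lemma child_mod_inj {M i c c' : ℕ} (hM : 1 ≤ M) (h : IsChild M i c) (h' : IsChild M i c')
    (hmod : (c - 1) % M = (c' - 1) % M) : c = c' := by
  rw [child_reconstruct hM h, child_reconstruct hM h', hmod]


open SimpleGraph

variable {α β : Type*}

/-- Any walk from outside `A` to inside `A` contains a crossing edge, whose
inner endpoint is on the walk's support. -/
lemma exists_crossing {Γ : SimpleGraph α} (A : Set α) {x y : α} (w : Γ.Walk x y)
    (hx : x ∉ A) (hy : y ∈ A) :
    ∃ a b, Γ.Adj a b ∧ a ∉ A ∧ b ∈ A ∧ b ∈ w.support := by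
  induction w with
  | nil => exact absurd hy hx
  | @cons c d e h p ih =>
    by_cases hd : d ∈ A
    · exact ⟨c, d, h, hx, hd, by simp [SimpleGraph.Walk.support_cons,
        SimpleGraph.Walk.start_mem_support]⟩
    · obtain ⟨a, b, hab, ha, hb, hmem⟩ := ih hd hy
      exact ⟨a, b, hab, ha, hb, by simp [SimpleGraph.Walk.support_cons]; right; exact hmem⟩

/-- If the cut between `A` and its complement has at most one crossing edge,
then a path between two vertices of `A` stays in `A`. -/
lemma path_confined {Γ : SimpleGraph α} (A : Set α)
    (hcr : ∀ ⦃a b a' b' : α⦄, Γ.Adj a b → a ∈ A → b ∉ A →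
      Γ.Adj a' b' → a' ∈ A → b' ∉ A → a = a' ∧ b = b')
    {x y : α} (w : Γ.Walk x y) (hw : w.IsPath) (hx : x ∈ A) (hy : y ∈ A) :
    ∀ z ∈ w.support, z ∈ A := by
  induction w with
  | nil => intro z hz; simp at hz; subst hz; exact hx
  | @cons c d e h p ih =>
    rw [SimpleGraph.Walk.cons_isPath_iff] at hw
    by_cases hd : d ∈ A
    · intro z hz
      rw [SimpleGraph.Walk.support_cons] at hz
      rcases List.mem_cons.mp hz with rfl | hz
      · exact hx
      · exact ih hw.1 hd hy z hz
    · exfalso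
      obtain ⟨a, b, hab, ha, hb, hmem⟩ := exists_crossing A p hd hy
      have := hcr h hx hd hab.symm hb ha
      rw [← this.1] at hmem
      exact hw.2 hmem
    
/-- Transfer a walk in an induced subgraph into a smaller induced subgraph
containing its support. -/
lemma reachable_in_smaller {Hg : SimpleGraph α} {A B : Set α}
    {x y : ↥A} (w : (Hg.induce A).Walk x y)
    (hsupp : ∀ z ∈ w.support, (z : α) ∈ B) (hx : (x:α) ∈ B) (hy : (y:α) ∈ B) :
    (Hg.induce B).Reachable ⟨x, hx⟩ ⟨y, hy⟩ := by
  induction w with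
  | nil => rfl
  | @cons c d e h p ih =>
    have hd : (d : α) ∈ B := hsupp d (by simp [SimpleGraph.Walk.support_cons,
      SimpleGraph.Walk.start_mem_support])
    have hadj : (Hg.induce B).Adj ⟨c, hx⟩ ⟨d, hd⟩ := by
      simp only [SimpleGraph.comap_adj, Function.Embedding.coe_subtype] at h ⊢
      exact h
    exact (hadj.reachable).trans (ih (fun z hz => hsupp z (by
      simp [SimpleGraph.Walk.support_cons]; right; exact hz)) hd hy)

/-- Acyclicity pulls back along injective graph homomorphisms. -/
lemma isAcyclic_of_injective_hom {A : SimpleGraph α} {B : SimpleGraph β}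
    (f : A →g B) (hf : Function.Injective f) (hB : B.IsAcyclic) : A.IsAcyclic := by
  intro v c hc
  exact hB (c.map f) (hc.map hf)

/-- `IsTree` transfers along graph isomorphisms. -/
lemma isTree_of_iso {A : SimpleGraph α} {B : SimpleGraph β} (e : A ≃g B)
    (hB : B.IsTree) : A.IsTree := by
  constructor
  · exact (SimpleGraph.Iso.connected_iff e).mpr hB.isConnected
  · exact isAcyclic_of_injective_hom e.toHom e.toEquiv.injective hB.IsAcyclic

open SimpleGraph Sum

section Construction

variable {V : Type} [Fintype V] [DecidableEq V] (G : SimpleGraph V)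
variable (M q r : ℕ) (u : V) (σ : ℕ → V)

/-- The vertex type: `q` copies of `V` plus `r` pendant vertices. -/
abbrev XT (q r : ℕ) (V : Type) : Type := (Fin q × V) ⊕ (Fin r)

/-- Core (asymmetric) adjacency description. -/
def cr : XT q r V → XT q r V → Prop
  | Sum.inl iv, Sum.inl jw =>
      ((iv.1 : ℕ) = (jw.1 : ℕ) ∧ G.Adj iv.2 jw.2) ∨
      (1 ≤ (jw.1 : ℕ) ∧ (iv.1 : ℕ) = par M (jw.1 : ℕ) ∧
        iv.2 = σ (((jw.1 : ℕ) - 1) % M) ∧ jw.2 = u)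
  | Sum.inl iv, Sum.inr _ => (iv.1 : ℕ) = 0 ∧ iv.2 = u
  | Sum.inr _, _ => False

/-- The blown-up graph. -/
def bg : SimpleGraph (XT q r V) where
  Adj x y := x ≠ y ∧ (cr G M q r u σ x y ∨ cr G M q r u σ y x)
  symm := by
    refine ⟨?_⟩
    intro x y ⟨hne, h⟩
    exact ⟨fun h' => hne h'.symm, h.symm⟩
  loopless := ⟨fun x h => h.1 rfl⟩

variable {G M q r u σ}

lemma adj_cases {x y : XT q r V} (h : (bg G M q r u σ).Adj x y) :
    (∃ (i : Fin q) (a b : V), x = inl (i,a) ∧ y = inl (i,b) ∧ G.Adj a b) ∨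
    (∃ (i c : Fin q), 1 ≤ (c:ℕ) ∧ (i:ℕ) = par M (c:ℕ) ∧
      ((x = inl (i, σ (((c:ℕ)-1) % M)) ∧ y = inl (c, u)) ∨
       (y = inl (i, σ (((c:ℕ)-1) % M)) ∧ x = inl (c, u)))) ∨
    (∃ (i : Fin q) (s : Fin r), (i:ℕ) = 0 ∧
      ((x = inl (i,u) ∧ y = inr s) ∨ (y = inl (i,u) ∧ x = inr s))) := by
  obtain ⟨hne, hcr | hcr⟩ := h
  · match x, y with
    | inl (i,a), inl (j,b) =>
      rcases hcr with ⟨hij, hadj⟩ | ⟨h1, h2, h3, h4⟩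
      · have : j = i := Fin.ext hij.symm
        subst this
        exact Or.inl ⟨j, a, b, rfl, rfl, hadj⟩
      · subst h3; subst h4
        exact Or.inr (Or.inl ⟨i, j, h1, h2, Or.inl ⟨rfl, rfl⟩⟩)
    | inl (i,a), inr s =>
      obtain ⟨h0, h1⟩ := hcr
      subst h1
      exact Or.inr (Or.inr ⟨i, s, h0, Or.inl ⟨rfl, rfl⟩⟩)
    | inr s, _ => exact absurd hcr id
  · match x, y with
    | inl (i,a), inl (j,b) =>
      rcases hcr with ⟨hij, hadj⟩ | ⟨h1, h2, h3, h4⟩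
      · have : j = i := Fin.ext hij
        subst this
        exact Or.inl ⟨j, a, b, rfl, rfl, hadj.symm⟩
      · subst h3; subst h4
        exact Or.inr (Or.inl ⟨j, i, h1, h2, Or.inr ⟨rfl, rfl⟩⟩)
    | inr s, inl (j,b) =>
      obtain ⟨h0, h1⟩ := hcr
      subst h1
      exact Or.inr (Or.inr ⟨j, s, h0, Or.inr ⟨rfl, rfl⟩⟩)
    | _, inr s => exact absurd hcr id

lemma adj_of_G {i : Fin q} {a b : V} (h : G.Adj a b) :
    (bg G M q r u σ).Adj (inl (i,a)) (inl (i,b)) := by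
  refine ⟨by simp [h.ne], Or.inl (Or.inl ⟨rfl, h⟩)⟩

lemma adj_inl_same {i : Fin q} {a b : V} (h : (bg G M q r u σ).Adj (inl (i,a)) (inl (i,b))) :
    G.Adj a b := by
  rcases adj_cases h with ⟨i', a', b', hx, hy, hadj⟩ | ⟨i', c, h1, h2, hc⟩ | ⟨i', s, h0, hc⟩
  · cases hx; cases hy; exact hadj
  · exfalso
    have hpar := par_lt (M := M) h1
    rcases hc with ⟨hx, hy⟩ | ⟨hy, hx⟩ <;>
    · rw [Sum.inl.injEq, Prod.mk.injEq] at hx hy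
      have e1 := congrArg Fin.val hx.1
      have e2 := congrArg Fin.val hy.1
      omega
  · exfalso
    rcases hc with ⟨hx, hy⟩ | ⟨hy, hx⟩
    · exact absurd hy (by simp)
    · exact absurd hx (by simp)

lemma bridge_adj {c i : Fin q} (hc : 1 ≤ (c:ℕ)) (hip : (i:ℕ) = par M (c:ℕ)) (hσu : σ (((c:ℕ)-1) % M) ≠ u) :
    (bg G M q r u σ).Adj (inl (i, σ (((c:ℕ)-1) % M))) (inl (c, u)) := by
  refine ⟨?_, Or.inl (Or.inr ⟨hc, hip, rfl, rfl⟩)⟩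
  intro hxy
  rw [Sum.inl.injEq, Prod.mk.injEq] at hxy
  exact hσu hxy.2

lemma pend_adj {s : Fin r} {i : Fin q} (h0 : (i:ℕ) = 0) :
    (bg G M q r u σ).Adj (inl (i,u)) (inr s) :=
  ⟨by simp, Or.inl ⟨h0, rfl⟩⟩

/-- Membership of copy `i`. -/
def inCopy (i : Fin q) : XT q r V → Prop
  | inl jv => jv.1 = i
  | inr _ => False

/-- Membership of the subtree rooted at copy `i`. -/
def inSub (M : ℕ) (i : Fin q) : XT q r V → Prop
  | inl jv => SubP M (i:ℕ) (jv.1:ℕ)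
  | inr _ => False

instance (i : Fin q) : DecidablePred (inCopy (V := V) (r := r) i) := by
  intro x
  cases x with
  | inl jv => exact decidable_of_iff (jv.1 = i) Iff.rfl
  | inr s => exact decidable_of_iff False Iff.rfl

noncomputable instance (i : Fin q) : DecidablePred (inSub (V := V) (r := r) M i) := by
  intro x
  cases x with
  | inl jv => exact decidable_of_iff (SubP M (i:ℕ) (jv.1:ℕ)) Iff.rfl
  | inr s => exact decidable_of_iff False Iff.rfl

/-- Unique-crossing property of a subtree cut. -/
lemma cross_sub {c : Fin q} (hc : 1 ≤ (c:ℕ)) {x y : XT q r V}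
    (h : (bg G M q r u σ).Adj x y) (hx : ¬ inSub M c x) (hy : inSub M c y) :
    ∃ i : Fin q, (i:ℕ) = par M (c:ℕ) ∧ x = inl (i, σ (((c:ℕ)-1) % M)) ∧ y = inl (c, u) := by
  rcases adj_cases h with ⟨i, a, b, hx', hy', hadj⟩ | ⟨i, c', h1, h2, hcc⟩ | ⟨i, s, h0, hcc⟩
  · exfalso; subst hx'; subst hy'; exact hx hy
  · rcases hcc with ⟨hx', hy'⟩ | ⟨hy', hx'⟩
    · subst hx'; subst hy'
      have hcc' : (c' : ℕ) = (c : ℕ) := by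
        have hsub : SubP M (c:ℕ) (c':ℕ) := hy
        have hnp : ¬ SubP M (c:ℕ) (par M (c':ℕ)) := by rw [← h2]; exact hx
        exact subP_eq_of_not_par hsub hnp
      have : c' = c := Fin.ext hcc'
      subst this
      exact ⟨i, h2, rfl, rfl⟩
    · exfalso
      subst hx'; subst hy'
      apply hx
      show SubP M (c:ℕ) (c':ℕ)
      have hyp : SubP M (c:ℕ) (par M (c':ℕ)) := by rw [← h2]; exact hy
      exact subP_trans hyp (subP_par h1)
  · exfalso
    rcases hcc with ⟨hx', hy'⟩ | ⟨hy', hx'⟩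
    · subst hy'; exact hy
    · subst hy'
      have : SubP M (c:ℕ) (i:ℕ) := hy
      have := subP_le this
      omega

/-- Unique-crossing property of a pendant cut. -/
lemma cross_pend {s : Fin r} {x y : XT q r V}
    (h : (bg G M q r u σ).Adj x y) (hy : y = inr s) :
    ∃ i : Fin q, (i:ℕ) = 0 ∧ x = inl (i, u) := by
  subst hy
  rcases adj_cases h with ⟨i, a, b, hx', hy', hadj⟩ | ⟨i, c', h1, h2, hcc⟩ | ⟨i, s', h0, hcc⟩
  · exact absurd hy' (by simp)
  · rcases hcc with ⟨hx', hy'⟩ | ⟨hy', hx'⟩ <;> simp_all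
  · rcases hcc with ⟨hx', hy'⟩ | ⟨hy', hx'⟩
    · exact ⟨i, h0, hx'⟩
    · simp_all


/-! ### Coloring -/

/-- Recursive parity flip along the heap. -/
def epsF (M : ℕ) (g : ℕ → Bool) : ℕ → Bool
  | 0 => false
  | (j+1) => xor (epsF M g (par M (j+1))) (g (j+1))
decreasing_by exact par_lt (by omega)

lemma epsF_succ {M : ℕ} {g : ℕ → Bool} {j : ℕ} (hj : 1 ≤ j) :
    epsF M g j = xor (epsF M g (par M j)) (g j) := by
  obtain ⟨j', rfl⟩ : ∃ j', j = j' + 1 := ⟨j - 1, by omega⟩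
  simp [epsF]

/-- The coloring of the blown-up graph, from a `Bool` coloring `cb` of `G`. -/
def colF (M q r : ℕ) (u : V) (σ : ℕ → V) (cb : V → Bool) : XT q r V → Bool
  | inl iv => xor (epsF M (fun c => !(xor (cb (σ ((c-1) % M))) (cb u))) (iv.1:ℕ)) (cb iv.2)
  | inr _ => !(cb u)

lemma colF_valid (cb : V → Bool) (hcb : ∀ {a b : V}, G.Adj a b → cb a ≠ cb b)
    {x y : XT q r V} (h : (bg G M q r u σ).Adj x y) :
    colF M q r u σ cb x ≠ colF M q r u σ cb y := by
  set g : ℕ → Bool := fun c => !(xor (cb (σ ((c-1) % M))) (cb u)) with hg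
  rcases adj_cases h with ⟨i, a, b, hx, hy, hadj⟩ | ⟨i, c, h1, h2, hc⟩ | ⟨i, s, h0, hc⟩
  · subst hx; subst hy
    have hab := hcb hadj
    simp only [colF, ← hg]
    revert hab
    generalize epsF M g (i:ℕ) = e
    cases e <;> cases cb a <;> cases cb b <;> simp
  · have key : xor (epsF M g (par M (c:ℕ))) (cb (σ (((c:ℕ)-1) % M)))
        ≠ xor (epsF M g (c:ℕ)) (cb u) := by
      rw [epsF_succ h1]
      have hgc : g ((c:ℕ)) = !(xor (cb (σ (((c:ℕ)-1) % M))) (cb u)) := rfl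
      rw [hgc]
      generalize epsF M g (par M (c:ℕ)) = e
      generalize cb (σ (((c:ℕ)-1) % M)) = A
      generalize cb u = B
      cases e <;> cases A <;> cases B <;> simp
    rcases hc with ⟨hx, hy⟩ | ⟨hy, hx⟩ <;> subst hx <;> subst hy <;> simp only [colF, ← hg]
    · rw [h2]; exact key
    · rw [h2]; exact fun hh => key hh.symm
  · have key : colF M q r u σ cb (inl (i, u)) = cb u := by
      simp only [colF, ← hg, h0]
      simp [epsF]
    rcases hc with ⟨hx, hy⟩ | ⟨hy, hx⟩ <;> subst hx <;> subst hy
    · rw [key]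
      show cb u ≠ colF M q r u σ cb (inr s)
      simp only [colF]
      cases cb u <;> simp
    · rw [key]
      show colF M q r u σ cb (inr s) ≠ cb u
      simp only [colF]
      cases cb u <;> simp

/-! ### Connectivity -/

/-- Copy embedding homomorphism. -/
def homCopy (G : SimpleGraph V) (M q r : ℕ) (u : V) (σ : ℕ → V) (i : Fin q) :
    G →g (bg G M q r u σ) where
  toFun := fun v => inl (i, v)
  map_rel' := fun h => adj_of_G h

lemma bg_connected (hq : 1 ≤ q) (hσu : ∀ l, l < M → σ l ≠ u) (hM : 1 ≤ M)
    (hGconn : G.Connected) : (bg G M q r u σ).Connected := by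
  have hq0 : (0 : ℕ) < q := hq
  set root : XT q r V := inl (⟨0, hq0⟩, u) with hroot
  have key : ∀ n : ℕ, ∀ i : Fin q, (i : ℕ) ≤ n → ∀ a : V,
      (bg G M q r u σ).Reachable (inl (i, a)) root := by
    intro n
    induction n with
    | zero =>
      intro i hi a
      have : i = ⟨0, hq0⟩ := Fin.ext (by simp; omega)
      subst this
      have : (bg G M q r u σ).Reachable (inl (⟨0, hq0⟩, a)) (inl (⟨0, hq0⟩, u)) :=
        SimpleGraph.Reachable.map (homCopy G M q r u σ ⟨0, hq0⟩) (hGconn.preconnected a u)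
      exact this
    | succ n ih =>
      intro i hi a
      rcases Nat.lt_or_ge (i:ℕ) (n+1) with hlt | hge
      · exact ih i (by omega) a
      · -- (i : ℕ) = n+1 ≥ 1, use the bridge to the parent copy
        have hi1 : 1 ≤ (i:ℕ) := by omega
        have hplt : par M (i:ℕ) < q := lt_trans (par_lt hi1) i.isLt
        set ip : Fin q := ⟨par M (i:ℕ), hplt⟩ with hip
        have hb : (bg G M q r u σ).Adj (inl (ip, σ (((i:ℕ)-1) % M))) (inl (i, u)) :=
          bridge_adj hi1 rfl (hσu _ (Nat.mod_lt _ (by omega)))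
        have r1 : (bg G M q r u σ).Reachable (inl (i, a)) (inl (i, u)) :=
          SimpleGraph.Reachable.map (homCopy G M q r u σ i) (hGconn.preconnected a u)
        have r2 : (bg G M q r u σ).Reachable (inl (ip, σ (((i:ℕ)-1) % M))) root := by
          apply ih ip (by have := par_lt (M := M) hi1; simp only [hip]; omega)
        exact r1.trans (hb.symm.reachable.trans r2)
  rw [SimpleGraph.connected_iff_exists_forall_reachable]
  refine ⟨root, fun x => ?_⟩
  have hx : (bg G M q r u σ).Reachable x root := by
    match x with
    | inl (i, a) => exact key (i:ℕ) i le_rfl a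
    | inr s => exact (pend_adj (s := s) (i := ⟨0, hq0⟩) rfl).symm.reachable
  exact hx.symm

end Construction

/-! ### Per-copy and subtree pieces -/

section Pieces

variable {V : Type} [Fintype V] [DecidableEq V] {G : SimpleGraph V}
variable {M q r : ℕ} {u : V} {σ : ℕ → V}

/-- The trace of `S` on copy `i`. -/
def Tset (S : Finset (XT q r V)) (i : Fin q) : Finset V :=
  Finset.univ.filter (fun v => inl (i,v) ∈ S)

lemma mem_Tset {S : Finset (XT q r V)} {i : Fin q} {v : V} :
    v ∈ Tset S i ↔ inl (i,v) ∈ S := by simp [Tset]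

/-- A path between two vertices of copy `i` stays in copy `i`, provided
everything lives in the subtree of `i`. -/
lemma support_in_copy {S : Finset (XT q r V)} {i : Fin q}
    (hin : ∀ x ∈ S, inSub M i x)
    {x y : ↥((S : Set (XT q r V)))} (w : ((bg G M q r u σ).induce (S : Set (XT q r V))).Walk x y)
    (hw : w.IsPath)
    {ax ay : V} (hx : (x : XT q r V) = inl (i, ax)) (hy : (y : XT q r V) = inl (i, ay)) :
    ∀ z ∈ w.support, ∃ v : V, (z : XT q r V) = inl (i, v) := by
  have confine : ∀ c : Fin q, IsChild M (i:ℕ) (c:ℕ) →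
      ∀ z ∈ w.support, ¬ inSub M c (z : XT q r V) := by
    intro c hchild
    have hc1 : 1 ≤ (c:ℕ) := hchild.1
    apply path_confined (A := {z : ↥((S : Set (XT q r V))) | ¬ inSub M c (z : XT q r V)})
      ?_ w hw ?_ ?_
    · intro a b a' b' hab ha hb hab' ha' hb'
      simp only [Set.mem_setOf_eq, not_not] at ha hb ha' hb'
      have h1 : (bg G M q r u σ).Adj (a : XT q r V) (b : XT q r V) := hab
      have h2 : (bg G M q r u σ).Adj (a' : XT q r V) (b' : XT q r V) := hab'
      obtain ⟨i1, hi1, hxa, hxb⟩ := cross_sub hc1 h1 ha hb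
      obtain ⟨i2, hi2, hxa', hxb'⟩ := cross_sub hc1 h2 ha' hb'
      have : i1 = i2 := Fin.ext (by rw [hi1, hi2])
      subst this
      constructor
      · exact Subtype.ext (by rw [hxa, hxa'])
      · exact Subtype.ext (by rw [hxb, hxb'])
    · show ¬ inSub M c (x : XT q r V)
      rw [hx]
      show ¬ SubP M (c:ℕ) (i:ℕ)
      intro hcon
      have := subP_le hcon
      have := child_gt hchild
      omega
    · show ¬ inSub M c (y : XT q r V)
      rw [hy]
      show ¬ SubP M (c:ℕ) (i:ℕ)
      intro hcon
      have := subP_le hcon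
      have := child_gt hchild
      omega
  intro z hz
  have hzS : (z : XT q r V) ∈ S := z.2
  have hzsub : inSub M i (z : XT q r V) := hin _ hzS
  match hzz : (z : XT q r V) with
  | inr s => rw [hzz] at hzsub; exact absurd hzsub (by simp [inSub])
  | inl (j, v) =>
    rw [hzz] at hzsub
    have hsub : SubP M (i:ℕ) (j:ℕ) := hzsub
    rcases subP_cases hsub with heq | ⟨c0, hc0, hc0s⟩
    · refine ⟨v, ?_⟩
      have hji : j = i := Fin.ext heq
      rw [hji]
    · exfalso
      have hc0q : c0 < q := lt_of_le_of_lt (subP_le hc0s) j.isLt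
      have := confine ⟨c0, hc0q⟩ hc0 z hz
      apply this
      rw [hzz]
      exact hc0s

/-- Project a confined walk to a reachability statement in the copy. -/
lemma project_walk {S : Finset (XT q r V)} {i : Fin q}
    {x y : ↥((S : Set (XT q r V)))} (w : ((bg G M q r u σ).induce (S : Set (XT q r V))).Walk x y)
    (hsupp : ∀ z ∈ w.support, ∃ v : V, (z : XT q r V) = inl (i, v)) :
    ∀ (ax ay : V), (x : XT q r V) = inl (i, ax) → (y : XT q r V) = inl (i, ay) →
    ∀ (hax : ax ∈ ((Tset S i : Finset V) : Set V)) (hay : ay ∈ ((Tset S i : Finset V) : Set V)),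
    (G.induce ((Tset S i : Finset V) : Set V)).Reachable ⟨ax, hax⟩ ⟨ay, hay⟩ := by
  induction w with
  | nil =>
    intro ax ay hx hy hax hay
    rw [hx] at hy
    have : ax = ay := by
      have := (Sum.inl.injEq _ _).mp hy
      exact (Prod.mk.injEq _ _ _ _).mp this |>.2
    subst this
    rfl
  | @cons c d e h p ih =>
    intro ax ay hx hy hax hay
    obtain ⟨v, hv⟩ := hsupp d (by
      rw [SimpleGraph.Walk.support_cons]
      exact List.mem_cons_of_mem _ (SimpleGraph.Walk.start_mem_support p))
    have hGadj : G.Adj ax v := by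
      have hbg : (bg G M q r u σ).Adj (c : XT q r V) (d : XT q r V) := h
      rw [hx, hv] at hbg
      exact adj_inl_same hbg
    have hvT : v ∈ ((Tset S i : Finset V) : Set V) := by
      simp only [Finset.coe_filter, Set.mem_setOf_eq, Finset.mem_coe]
      rw [mem_Tset, ← hv]
      exact d.2
    have step : (G.induce ((Tset S i : Finset V) : Set V)).Adj ⟨ax, hax⟩ ⟨v, hvT⟩ := by
      simp only [SimpleGraph.comap_adj, Function.Embedding.coe_subtype]
      exact hGadj
    refine step.reachable.trans ?_
    have hsupp' : ∀ z ∈ p.support, ∃ v' : V, (z : XT q r V) = inl (i, v') := by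
      intro z hz
      apply hsupp z
      rw [SimpleGraph.Walk.support_cons]
      exact List.mem_cons_of_mem _ hz
    exact ih hsupp' v ay hv hy hvT hay

/-- The trace of a tree on a copy is an induced tree of `G`. -/
lemma copy_tree {S : Finset (XT q r V)} {i : Fin q}
    (hS : ((bg G M q r u σ).induce (S : Set (XT q r V))).IsTree)
    (hin : ∀ x ∈ S, inSub M i x)
    {v₀ : V} (hv₀ : inl (i, v₀) ∈ S) :
    (G.induce ((Tset S i : Finset V) : Set V)).IsTree := by
  constructor
  · -- connected
    have hne : Nonempty ↥((Tset S i : Finset V) : Set V) :=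
      ⟨⟨v₀, by simp only [Finset.mem_coe]; exact mem_Tset.mpr hv₀⟩⟩
    refine ⟨fun a b => ?_⟩
    have haS : inl (i, (a:V)) ∈ S := mem_Tset.mp (by simpa using a.2)
    have hbS : inl (i, (b:V)) ∈ S := mem_Tset.mp (by simpa using b.2)
    set xa : ↥((S : Set (XT q r V))) := ⟨inl (i, (a:V)), haS⟩
    set xb : ↥((S : Set (XT q r V))) := ⟨inl (i, (b:V)), hbS⟩
    obtain ⟨w⟩ := hS.isConnected.preconnected xa xb
    let p := w.toPath
    have hsupp := support_in_copy hin p.1 p.2 (ax := (a:V)) (ay := (b:V)) rfl rfl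
    have := project_walk p.1 hsupp (a:V) (b:V) rfl rfl (by simpa using a.2) (by simpa using b.2)
    convert this <;> exact Subtype.ext rfl
  · -- acyclic
    let f : ↥((Tset S i : Finset V) : Set V) → ↥((S : Set (XT q r V))) :=
      fun z => ⟨inl (i, (z : V)), mem_Tset.mp (Finset.mem_coe.mp z.2)⟩
    have hmap : ∀ {a b : ↥((Tset S i : Finset V) : Set V)},
        (G.induce ((Tset S i : Finset V) : Set V)).Adj a b →
        ((bg G M q r u σ).induce (S : Set (XT q r V))).Adj (f a) (f b) := by
      intro a b hab
      simp only [SimpleGraph.comap_adj, Function.Embedding.coe_subtype] at hab ⊢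
      show (bg G M q r u σ).Adj (inl (i, (a : V))) (inl (i, (b : V)))
      exact adj_of_G hab
    have hinj : Function.Injective f := by
      intro a b hab
      have h2 : (inl (i, (a : V)) : XT q r V) = inl (i, (b : V)) := congrArg Subtype.val hab
      rw [Sum.inl.injEq, Prod.mk.injEq] at h2
      exact Subtype.ext h2.2
    exact isAcyclic_of_injective_hom ⟨f, hmap⟩ hinj hS.IsAcyclic

end Pieces

section Pieces2

variable {V : Type} [Fintype V] [DecidableEq V] {G : SimpleGraph V}
variable {M q r : ℕ} {u : V} {σ : ℕ → V}

/-- If a tree meets a subtree and its complement, the bridge of the subtree is used. -/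
lemma bridge_in_S {S : Finset (XT q r V)}
    (hS : ((bg G M q r u σ).induce (S : Set (XT q r V))).IsTree)
    {c : Fin q} (hc : 1 ≤ (c:ℕ))
    (hne : ∃ x ∈ S, inSub M c x) (hout : ∃ x ∈ S, ¬ inSub M c x) :
    ∃ i : Fin q, (i:ℕ) = par M (c:ℕ) ∧ inl (i, σ (((c:ℕ)-1) % M)) ∈ S ∧ inl (c, u) ∈ S := by
  obtain ⟨xin, hxinS, hxin⟩ := hne
  obtain ⟨xout, hxoutS, hxout⟩ := hout
  obtain ⟨w⟩ := hS.isConnected.preconnected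
    (⟨xout, hxoutS⟩ : ↥((S : Set (XT q r V)))) (⟨xin, hxinS⟩ : ↥((S : Set (XT q r V))))
  obtain ⟨a, b, hab, ha, hb, -⟩ := exists_crossing
    (A := {z : ↥((S : Set (XT q r V))) | inSub M c (z : XT q r V)}) w hxout hxin
  have hbg : (bg G M q r u σ).Adj (a : XT q r V) (b : XT q r V) := hab
  obtain ⟨i, hi, hxa, hxb⟩ := cross_sub hc hbg ha hb
  refine ⟨i, hi, ?_, ?_⟩
  · rw [← hxa]; exact a.2
  · rw [← hxb]; exact b.2

/-- Acyclicity restricts to sub-induced graphs. -/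
lemma induce_acyclic_subset {α : Type*} {Hg : SimpleGraph α} {A B : Set α} (hAB : A ⊆ B)
    (h : (Hg.induce B).IsAcyclic) : (Hg.induce A).IsAcyclic := by
  let f : ↥A → ↥B := fun z => ⟨(z : α), hAB z.2⟩
  have hmap : ∀ {a b : ↥A}, (Hg.induce A).Adj a b → (Hg.induce B).Adj (f a) (f b) := by
    intro a b hab
    simp only [SimpleGraph.comap_adj, Function.Embedding.coe_subtype] at hab ⊢
    exact hab
  have hinj : Function.Injective f := by
    intro a b hab
    have h2 := congrArg Subtype.val hab
    exact Subtype.ext h2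
  exact isAcyclic_of_injective_hom ⟨f, hmap⟩ hinj h

/-- The restriction of a tree to a subtree region is a tree. -/
lemma sub_tree {S : Finset (XT q r V)}
    (hS : ((bg G M q r u σ).induce (S : Set (XT q r V))).IsTree)
    {c : Fin q} (hc : 1 ≤ (c:ℕ)) (hne : (S.filter (inSub M c)).Nonempty) :
    ((bg G M q r u σ).induce ((S.filter (inSub M c) : Finset (XT q r V)) : Set (XT q r V))).IsTree := by
  have hsubset : ∀ {z : XT q r V}, z ∈ S.filter (inSub M c) ↔ z ∈ S ∧ inSub M c z := by
    intro z; simp [Finset.mem_filter]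
  constructor
  · obtain ⟨z₀, hz₀⟩ := hne
    haveI : Nonempty ↥((S.filter (inSub M c) : Finset (XT q r V)) : Set (XT q r V)) :=
      ⟨⟨z₀, Finset.mem_coe.mpr hz₀⟩⟩
    refine ⟨fun a b => ?_⟩
    have haS : (a : XT q r V) ∈ S := (hsubset.mp (Finset.mem_coe.mp a.2)).1
    have hbS : (b : XT q r V) ∈ S := (hsubset.mp (Finset.mem_coe.mp b.2)).1
    have hain : inSub M c (a : XT q r V) := (hsubset.mp (Finset.mem_coe.mp a.2)).2
    have hbin : inSub M c (b : XT q r V) := (hsubset.mp (Finset.mem_coe.mp b.2)).2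
    obtain ⟨w⟩ := hS.isConnected.preconnected
      (⟨(a : XT q r V), haS⟩ : ↥((S : Set (XT q r V)))) ⟨(b : XT q r V), hbS⟩
    let p := w.toPath
    have hconf : ∀ z ∈ p.1.support, z ∈ {z : ↥((S : Set (XT q r V))) | inSub M c (z : XT q r V)} := by
      apply path_confined (A := {z : ↥((S : Set (XT q r V))) | inSub M c (z : XT q r V)})
        ?_ p.1 p.2 hain hbin
      intro a1 b1 a2 b2 h1 ha1 hb1 h2 ha2 hb2
      simp only [Set.mem_setOf_eq] at ha1 hb1 ha2 hb2
      have hbg1 : (bg G M q r u σ).Adj (b1 : XT q r V) (a1 : XT q r V) := h1.symm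
      have hbg2 : (bg G M q r u σ).Adj (b2 : XT q r V) (a2 : XT q r V) := h2.symm
      obtain ⟨i1, hi1, hxa, hxb⟩ := cross_sub hc hbg1 hb1 ha1
      obtain ⟨i2, hi2, hxa', hxb'⟩ := cross_sub hc hbg2 hb2 ha2
      have : i1 = i2 := Fin.ext (by rw [hi1, hi2])
      subst this
      exact ⟨Subtype.ext (by rw [hxb, hxb']), Subtype.ext (by rw [hxa, hxa'])⟩
    have := reachable_in_smaller (B := ((S.filter (inSub M c) : Finset (XT q r V)) : Set (XT q r V)))
      p.1 (fun z hz => Finset.mem_coe.mpr (hsubset.mpr ⟨z.2, hconf z hz⟩))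
      (Finset.mem_coe.mpr (hsubset.mpr ⟨haS, hain⟩)) (Finset.mem_coe.mpr (hsubset.mpr ⟨hbS, hbin⟩))
    convert this <;> exact Subtype.ext rfl
  · refine induce_acyclic_subset ?_ hS.IsAcyclic
    intro z hz
    exact Finset.mem_coe.mpr (hsubset.mp (Finset.mem_coe.mp hz)).1

/-- The children of `i` present in `Fin q`. -/
def childS (M : ℕ) (q : ℕ) (i : Fin q) : Finset (Fin q) :=
  Finset.univ.filter (fun c => IsChild M (i:ℕ) (c:ℕ))

/-- Splitting the cardinality of a subtree-supported set. -/
lemma card_split {S : Finset (XT q r V)} {i : Fin q} (hin : ∀ x ∈ S, inSub M i x) :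
    S.card ≤ (Tset S i).card + ∑ c ∈ childS M q i, (S.filter (inSub M c)).card := by
  have hsub : S ⊆ (S.filter (inCopy i)) ∪ (childS M q i).biUnion (fun c => S.filter (inSub M c)) := by
    intro x hx
    have hx2 := hin x hx
    rw [Finset.mem_union]
    match hxx : x with
    | inr s => exact absurd hx2 (by simp [inSub])
    | inl (j, v) =>
      have hsubp : SubP M (i:ℕ) (j:ℕ) := hx2
      rcases subP_cases hsubp with heq | ⟨c0, hc0, hc0s⟩
      · left
        rw [Finset.mem_filter]
        exact ⟨hx, Fin.ext heq⟩
      · right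
        rw [Finset.mem_biUnion]
        have hc0q : c0 < q := lt_of_le_of_lt (subP_le hc0s) j.isLt
        refine ⟨⟨c0, hc0q⟩, ?_, ?_⟩
        · rw [childS, Finset.mem_filter]
          exact ⟨Finset.mem_univ _, hc0⟩
        · rw [Finset.mem_filter]
          exact ⟨hx, hc0s⟩
  calc S.card ≤ ((S.filter (inCopy i)) ∪ (childS M q i).biUnion (fun c => S.filter (inSub M c))).card :=
        Finset.card_le_card hsub
    _ ≤ (S.filter (inCopy i)).card + ((childS M q i).biUnion (fun c => S.filter (inSub M c))).card :=
        Finset.card_union_le _ _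
    _ ≤ (S.filter (inCopy i)).card + ∑ c ∈ childS M q i, (S.filter (inSub M c)).card := by
        have := Finset.card_biUnion_le (s := childS M q i) (t := fun c => S.filter (inSub M c))
        omega
    _ ≤ (Tset S i).card + ∑ c ∈ childS M q i, (S.filter (inSub M c)).card := by
        have hkey : S.filter (inCopy i) = (Tset S i).image (fun v => inl (i, v)) := by
          ext x
          rw [Finset.mem_filter, Finset.mem_image]
          constructor
          · rintro ⟨hxS, hxc⟩
            match hxx : x with
            | inr s => exact absurd hxc (by simp [inCopy])
            | inl (j, v) =>
              have : j = i := hxc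
              subst this
              exact ⟨v, mem_Tset.mpr hxS, rfl⟩
          · rintro ⟨v, hv, rfl⟩
            exact ⟨mem_Tset.mp hv, rfl⟩
        rw [hkey]
        have := Finset.card_image_le (s := Tset S i) (f := ((fun v => inl (i, v)) : V → XT q r V))
        omega

end Pieces2

/-- Geometric growth function. -/
def Fg (T' : ℕ) : ℕ → ℕ
  | 0 => 1
  | (d+1) => 1 + T' * Fg T' d

section MainBound

variable {V : Type} [Fintype V] [DecidableEq V] {G : SimpleGraph V}
variable {M q r : ℕ} {u : V} {σ : ℕ → V} {W : Finset V} {t : ℕ}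

lemma subtree_bound (hM : 1 ≤ M)
    (htree : ∀ T : Finset V, (G.induce (T : Set V)).IsTree → (T ∩ W).card ≤ t)
    (hu : u ∈ W) (hσW : ∀ l, l < M → σ l ∈ W) (hσu : ∀ l, l < M → σ l ≠ u)
    (hσinj : ∀ l, l < M → ∀ l', l' < M → σ l = σ l' → l = l') :
    ∀ d : ℕ, ∀ i : Fin q, ∀ S : Finset (XT q r V),
      (∀ x ∈ S, inSub M i x) →
      ((bg G M q r u σ).induce (S : Set (XT q r V))).IsTree →
      inl (i, u) ∈ S →
      (∀ j : ℕ, SubP M (i:ℕ) j → j < q → dep M j ≤ dep M (i:ℕ) + d) →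
      S.card ≤ Fintype.card V * Fg (t-1) d := by
  intro d
  induction d with
  | zero =>
    intro i S hin hS huS hheight
    have hcopy : S ⊆ (Tset S i).image (fun v => inl (i, v)) := by
      intro x hx
      have hx2 := hin x hx
      match hxx : x with
      | inr s => exact absurd hx2 (by simp [inSub])
      | inl (j, v) =>
        have hsubp : SubP M (i:ℕ) (j:ℕ) := hx2
        have hji : (j:ℕ) = (i:ℕ) := by
          by_contra hne
          have := dep_lt_of_subP_ne hsubp hne
          have := hheight (j:ℕ) hsubp j.isLt
          omega
        have : j = i := Fin.ext hji
        subst this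
        rw [Finset.mem_image]
        exact ⟨v, mem_Tset.mpr hx, rfl⟩
    calc S.card ≤ ((Tset S i).image (fun v => inl (i, v))).card := Finset.card_le_card hcopy
      _ ≤ (Tset S i).card := Finset.card_image_le
      _ ≤ Fintype.card V := Finset.card_le_univ _
      _ = Fintype.card V * Fg (t-1) 0 := by simp [Fg]
  | succ d ih =>
    intro i S hin hS huS hheight
    -- the set of active children
    set K : Finset (Fin q) :=
      (childS M q i).filter (fun c => (S.filter (inSub M c)).Nonempty) with hK
    have hKchild : ∀ c ∈ K, IsChild M (i:ℕ) (c:ℕ) := by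
      intro c hc
      have hc2 := Finset.mem_filter.mp hc
      have hc3 := Finset.mem_filter.mp hc2.1
      exact hc3.2
    have hKne : ∀ c ∈ K, (S.filter (inSub M c)).Nonempty := by
      intro c hc
      exact (Finset.mem_filter.mp hc).2
    -- each active child uses its bridge
    have hKfacts : ∀ c ∈ K, inl (i, σ (((c:ℕ)-1) % M)) ∈ S ∧ inl (c, u) ∈ S := by
      intro c hc
      have hchild := hKchild c hc
      have hc1 : 1 ≤ (c:ℕ) := hchild.1
      obtain ⟨x₀, hx₀⟩ := hKne c hc
      rw [Finset.mem_filter] at hx₀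
      have hout : ∃ x ∈ S, ¬ inSub M c x := by
        refine ⟨inl (i, u), huS, ?_⟩
        show ¬ SubP M (c:ℕ) (i:ℕ)
        intro hcon
        have := subP_le hcon
        have := child_gt hchild
        omega
      obtain ⟨ip, hip, hslot, hcu⟩ := bridge_in_S hS hc1 ⟨x₀, hx₀.1, hx₀.2⟩ hout
      have : ip = i := Fin.ext (by rw [hip, hchild.2])
      subst this
      exact ⟨hslot, hcu⟩
    -- the copy of `i` is an induced tree of `G`
    have hcopytree := copy_tree hS hin huS
    have hTW : (Tset S i ∩ W).card ≤ t := htree _ hcopytree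
    have huT : u ∈ Tset S i ∩ W := Finset.mem_inter.mpr ⟨mem_Tset.mpr huS, hu⟩
    -- |K| ≤ t - 1
    have hKcard : K.card ≤ t - 1 := by
      have hmaps : ∀ c ∈ K, σ (((c:ℕ)-1) % M) ∈ (Tset S i ∩ W).erase u := by
        intro c hc
        have hmod : ((c:ℕ)-1) % M < M := Nat.mod_lt _ (by omega)
        rw [Finset.mem_erase]
        refine ⟨hσu _ hmod, Finset.mem_inter.mpr ⟨mem_Tset.mpr (hKfacts c hc).1, hσW _ hmod⟩⟩
      have hinjOn : Set.InjOn (fun c : Fin q => σ (((c:ℕ)-1) % M)) K := by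
        intro c hc c' hc' heq
        have h1 := hKchild c (Finset.mem_coe.mp hc)
        have h2 := hKchild c' (Finset.mem_coe.mp hc')
        have hmod : ((c:ℕ)-1) % M < M := Nat.mod_lt _ (by omega)
        have hmod' : (((c':Fin q):ℕ)-1) % M < M := Nat.mod_lt _ (by omega)
        have := hσinj _ hmod _ hmod' heq
        exact Fin.ext (child_mod_inj hM h1 h2 this)
      calc K.card ≤ ((Tset S i ∩ W).erase u).card := Finset.card_le_card_of_injOn _ hmaps hinjOn
        _ = (Tset S i ∩ W).card - 1 := Finset.card_erase_of_mem huT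
        _ ≤ t - 1 := by omega
    -- per-child bound from the inductive hypothesis
    have hchildbound : ∀ c ∈ K, (S.filter (inSub M c)).card ≤ Fintype.card V * Fg (t-1) d := by
      intro c hc
      have hchild := hKchild c hc
      have hc1 : 1 ≤ (c:ℕ) := hchild.1
      apply ih c
      · intro x hx
        rw [Finset.mem_filter] at hx
        exact hx.2
      · exact sub_tree hS hc1 (hKne c hc)
      · rw [Finset.mem_filter]
        exact ⟨(hKfacts c hc).2, subP_refl M (c:ℕ)⟩
      · intro j hsub hjq
        have hd := dep_child hchild
        have hsub' : SubP M (i:ℕ) j := subP_trans (by rw [← hchild.2]; exact subP_par hc1) hsub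
        have := hheight j hsub' hjq
        omega
    -- assemble
    have hsum : ∑ c ∈ childS M q i, (S.filter (inSub M c)).card
        = ∑ c ∈ K, (S.filter (inSub M c)).card := by
      symm
      apply Finset.sum_subset (Finset.filter_subset _ _)
      intro c hc hnc
      have hcon : ¬ (S.filter (inSub M c)).Nonempty := by
        intro hcon
        exact hnc (Finset.mem_filter.mpr ⟨hc, hcon⟩)
      rw [Finset.not_nonempty_iff_eq_empty] at hcon
      rw [hcon, Finset.card_empty]
    have hsum2 : ∑ c ∈ K, (S.filter (inSub M c)).card ≤ K.card * (Fintype.card V * Fg (t-1) d) := by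
      have := Finset.sum_le_card_nsmul K (fun c => (S.filter (inSub M c)).card)
        (Fintype.card V * Fg (t-1) d) (fun c hc => hchildbound c hc)
      simpa using this
    calc S.card ≤ (Tset S i).card + ∑ c ∈ childS M q i, (S.filter (inSub M c)).card :=
          card_split hin
      _ ≤ Fintype.card V + K.card * (Fintype.card V * Fg (t-1) d) := by
          have := Finset.card_le_univ (Tset S i)
          rw [hsum]
          omega
      _ ≤ Fintype.card V + (t-1) * (Fintype.card V * Fg (t-1) d) := by
          have := Nat.mul_le_mul_right (Fintype.card V * Fg (t-1) d) hKcard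
          omega
      _ = Fintype.card V * Fg (t-1) (d+1) := by
          show _ = Fintype.card V * (1 + (t-1) * Fg (t-1) d)
          ring

end MainBound

section TopBound

variable {V : Type} [Fintype V] [DecidableEq V] {G : SimpleGraph V}
variable {M q r : ℕ} {u : V} {σ : ℕ → V} {W : Finset V} {t : ℕ}

/-- Main vertices (non-pendant). -/
def isMain : XT q r V → Prop
  | inl _ => True
  | inr _ => False

instance : DecidablePred (isMain (V := V) (q := q) (r := r)) := by
  intro x
  cases x with
  | inl jv => exact decidable_of_iff True Iff.rfl
  | inr s => exact decidable_of_iff False Iff.rfl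

lemma top_bound (hM : 1 ≤ M)
    (htree : ∀ T : Finset V, (G.induce (T : Set V)).IsTree → (T ∩ W).card ≤ t)
    (hu : u ∈ W) (hσW : ∀ l, l < M → σ l ∈ W) (hσu : ∀ l, l < M → σ l ≠ u)
    (hσinj : ∀ l, l < M → ∀ l', l' < M → σ l = σ l' → l = l')
    (k : ℕ) (hk : ∀ j, j < q → dep M j ≤ k) :
    ∀ S : Finset (XT q r V), ((bg G M q r u σ).induce (S : Set (XT q r V))).IsTree →
      S.card ≤ Fintype.card V * (1 + t * Fg (t-1) k) + r := by
  intro S hS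
  set S' : Finset (XT q r V) := S.filter isMain with hS'def
  have hsplit : S'.card + (S.filter (fun x => ¬ isMain x)).card = S.card :=
    Finset.card_filter_add_card_filter_not _
  have hpend : (S.filter (fun x => ¬ isMain x)).card ≤ r := by
    have hsub2 : S.filter (fun x => ¬ isMain x) ⊆ Finset.univ.image (inr : Fin r → XT q r V) := by
      intro x hx
      have hx2 := (Finset.mem_filter.mp hx).2
      match x with
      | inl jv => exact absurd trivial hx2
      | inr s => exact Finset.mem_image.mpr ⟨s, Finset.mem_univ _, rfl⟩
    calc (S.filter (fun x => ¬ isMain x)).card ≤ _ := Finset.card_le_card hsub2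
      _ ≤ (Finset.univ : Finset (Fin r)).card := Finset.card_image_le
      _ = r := by simp
  rcases Finset.eq_empty_or_nonempty S' with hem | hne
  · have : S.card ≤ r := by
      rw [← hsplit, hem, Finset.card_empty]
      omega
    omega
  -- S' is a tree
  have hmainS' : ∀ x ∈ S', isMain x := fun x hx => (Finset.mem_filter.mp hx).2
  have hS'tree : ((bg G M q r u σ).induce (S' : Set (XT q r V))).IsTree := by
    constructor
    · haveI : Nonempty ↥((S' : Set (XT q r V))) :=
        ⟨⟨hne.choose, Finset.mem_coe.mpr hne.choose_spec⟩⟩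
      refine ⟨fun a b => ?_⟩
      have haS : (a : XT q r V) ∈ S := (Finset.mem_filter.mp (Finset.mem_coe.mp a.2)).1
      have hbS : (b : XT q r V) ∈ S := (Finset.mem_filter.mp (Finset.mem_coe.mp b.2)).1
      obtain ⟨w⟩ := hS.isConnected.preconnected
        (⟨(a : XT q r V), haS⟩ : ↥((S : Set (XT q r V)))) ⟨(b : XT q r V), hbS⟩
      let p := w.toPath
      have hnotinr : ∀ (z : XT q r V), isMain z → ∀ s : Fin r, z ≠ inr s := by
        intro z hz s
        match z with
        | inl jv => simp
        | inr s' => exact absurd hz (by simp [isMain])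
      have hconf : ∀ s : Fin r, ∀ z ∈ p.1.support, (z : XT q r V) ≠ inr s := by
        intro s
        apply path_confined (A := {z : ↥((S : Set (XT q r V))) | (z : XT q r V) ≠ inr s})
          ?_ p.1 p.2
          (hnotinr _ (hmainS' _ (Finset.mem_coe.mp a.2)) s)
          (hnotinr _ (hmainS' _ (Finset.mem_coe.mp b.2)) s)
        intro a1 b1 a2 b2 h1 ha1 hb1 h2 ha2 hb2
        simp only [Set.mem_setOf_eq, not_not] at hb1 hb2
        have hbg1 : (bg G M q r u σ).Adj (a1 : XT q r V) (b1 : XT q r V) := h1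
        have hbg2 : (bg G M q r u σ).Adj (a2 : XT q r V) (b2 : XT q r V) := h2
        obtain ⟨i1, hi1, hxa⟩ := cross_pend hbg1 hb1
        obtain ⟨i2, hi2, hxa'⟩ := cross_pend hbg2 hb2
        have : i1 = i2 := Fin.ext (by rw [hi1, hi2])
        subst this
        exact ⟨Subtype.ext (by rw [hxa, hxa']), Subtype.ext (by rw [hb1, hb2])⟩
      have hsupp : ∀ z ∈ p.1.support, (z : XT q r V) ∈ (S' : Set (XT q r V)) := by
        intro z hz
        refine Finset.mem_coe.mpr (Finset.mem_filter.mpr ⟨z.2, ?_⟩)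
        match hzz : (z : XT q r V) with
        | inl jv => trivial
        | inr s => exact absurd hzz (hconf s z hz)
      have := reachable_in_smaller (B := (S' : Set (XT q r V))) p.1 hsupp
        (Finset.mem_coe.mpr (Finset.mem_coe.mp a.2)) (Finset.mem_coe.mpr (Finset.mem_coe.mp b.2))
      convert this <;> exact Subtype.ext rfl
    · exact induce_acyclic_subset (by
        intro z hz
        exact Finset.mem_coe.mpr (Finset.mem_filter.mp (Finset.mem_coe.mp hz)).1) hS.IsAcyclic
  -- the minimal inhabited copy
  have hRne : (Finset.univ.filter (fun j : Fin q => (S'.filter (inCopy j)).Nonempty)).Nonempty := by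
    obtain ⟨x, hx⟩ := hne
    match hxx : x with
    | inr s => exact absurd (hmainS' _ hx) (by simp [isMain])
    | inl jv =>
      refine ⟨jv.1, Finset.mem_filter.mpr ⟨Finset.mem_univ _, ⟨inl jv, ?_⟩⟩⟩
      rw [Finset.mem_filter]
      exact ⟨hx, rfl⟩
  set R := Finset.univ.filter (fun j : Fin q => (S'.filter (inCopy j)).Nonempty) with hRdef
  set rh := R.min' hRne with hrh
  have hrhR : rh ∈ R := R.min'_mem hRne
  obtain ⟨x₀, hx₀⟩ := (Finset.mem_filter.mp hrhR).2
  have hx₀S' : x₀ ∈ S' := (Finset.mem_filter.mp hx₀).1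
  have hx₀copy : inCopy rh x₀ := (Finset.mem_filter.mp hx₀).2
  obtain ⟨v₀, hv₀⟩ : ∃ v₀ : V, x₀ = inl (rh, v₀) := by
    match hxx : x₀ with
    | inr s => exact absurd hx₀copy (by simp [inCopy])
    | inl jv =>
      have hj : jv.1 = rh := hx₀copy
      refine ⟨jv.2, ?_⟩
      rw [← hj]
  have hv₀S' : inl (rh, v₀) ∈ S' := by rw [← hv₀]; exact hx₀S'
  -- everything lives in the subtree of rh
  have hsub : ∀ x ∈ S', inSub M rh x := by
    intro x hx
    match hxx : x with
    | inr s => exact absurd (hmainS' _ hx) (by simp [isMain])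
    | inl jv =>
      show SubP M (rh:ℕ) (jv.1:ℕ)
      rcases Nat.eq_zero_or_pos (rh:ℕ) with h0 | h1
      · rw [h0]; exact subP_zero M _
      · by_contra hnot
        obtain ⟨w⟩ := hS'tree.isConnected.preconnected
          (⟨inl jv, Finset.mem_coe.mpr hx⟩ : ↥((S' : Set (XT q r V))))
          ⟨inl (rh, v₀), Finset.mem_coe.mpr hv₀S'⟩
        obtain ⟨a, b, hab, ha, hb, -⟩ := exists_crossing
          (A := {z : ↥((S' : Set (XT q r V))) | inSub M rh (z : XT q r V)}) w hnot
          (subP_refl M (rh:ℕ))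
        have hbg : (bg G M q r u σ).Adj (a : XT q r V) (b : XT q r V) := hab
        obtain ⟨ip, hip, hxa, -⟩ := cross_sub h1 hbg ha hb
        have hipR : ip ∈ R := by
          refine Finset.mem_filter.mpr ⟨Finset.mem_univ _, ⟨(a : XT q r V), ?_⟩⟩
          rw [Finset.mem_filter]
          refine ⟨Finset.mem_coe.mp a.2, ?_⟩
          rw [hxa]
          rfl
        have hle : rh ≤ ip := R.min'_le _ hipR
        have : par M (rh:ℕ) < (rh:ℕ) := par_lt h1
        have : (ip:ℕ) = par M (rh:ℕ) := hip
        have : (rh:ℕ) ≤ (ip:ℕ) := hle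
        omega
  -- mirror of the induction step, with branching bound t
  set K : Finset (Fin q) :=
    (childS M q rh).filter (fun c => (S'.filter (inSub M c)).Nonempty) with hK
  have hKchild : ∀ c ∈ K, IsChild M (rh:ℕ) (c:ℕ) := by
    intro c hc
    have hc2 := Finset.mem_filter.mp hc
    have hc3 := Finset.mem_filter.mp hc2.1
    exact hc3.2
  have hKne : ∀ c ∈ K, (S'.filter (inSub M c)).Nonempty := by
    intro c hc
    exact (Finset.mem_filter.mp hc).2
  have hKfacts : ∀ c ∈ K, inl (rh, σ (((c:ℕ)-1) % M)) ∈ S' ∧ inl (c, u) ∈ S' := by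
    intro c hc
    have hchild := hKchild c hc
    have hc1 : 1 ≤ (c:ℕ) := hchild.1
    obtain ⟨y₀, hy₀⟩ := hKne c hc
    rw [Finset.mem_filter] at hy₀
    have hout : ∃ x ∈ S', ¬ inSub M c x := by
      refine ⟨inl (rh, v₀), hv₀S', ?_⟩
      show ¬ SubP M (c:ℕ) (rh:ℕ)
      intro hcon
      have := subP_le hcon
      have := child_gt hchild
      omega
    obtain ⟨ip, hip, hslot, hcu⟩ := bridge_in_S hS'tree hc1 ⟨y₀, hy₀.1, hy₀.2⟩ hout
    have : ip = rh := Fin.ext (by rw [hip, hchild.2])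
    subst this
    exact ⟨hslot, hcu⟩
  have hcopytree := copy_tree hS'tree hsub hv₀S'
  have hTW : (Tset S' rh ∩ W).card ≤ t := htree _ hcopytree
  have hKcard : K.card ≤ t := by
    have hmaps : ∀ c ∈ K, σ (((c:ℕ)-1) % M) ∈ Tset S' rh ∩ W := by
      intro c hc
      have hmod : ((c:ℕ)-1) % M < M := Nat.mod_lt _ (by omega)
      exact Finset.mem_inter.mpr ⟨mem_Tset.mpr (hKfacts c hc).1, hσW _ hmod⟩
    have hinjOn : Set.InjOn (fun c : Fin q => σ (((c:ℕ)-1) % M)) K := by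
      intro c hc c' hc' heq
      have h1 := hKchild c (Finset.mem_coe.mp hc)
      have h2 := hKchild c' (Finset.mem_coe.mp hc')
      have hmod : ((c:ℕ)-1) % M < M := Nat.mod_lt _ (by omega)
      have hmod' : (((c':Fin q):ℕ)-1) % M < M := Nat.mod_lt _ (by omega)
      have := hσinj _ hmod _ hmod' heq
      exact Fin.ext (child_mod_inj hM h1 h2 this)
    calc K.card ≤ (Tset S' rh ∩ W).card := Finset.card_le_card_of_injOn _ hmaps hinjOn
      _ ≤ t := hTW
  have hchildbound : ∀ c ∈ K, (S'.filter (inSub M c)).card ≤ Fintype.card V * Fg (t-1) k := by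
    intro c hc
    have hchild := hKchild c hc
    have hc1 : 1 ≤ (c:ℕ) := hchild.1
    apply subtree_bound hM htree hu hσW hσu hσinj k c
    · intro x hx
      exact (Finset.mem_filter.mp hx).2
    · exact sub_tree hS'tree hc1 (hKne c hc)
    · rw [Finset.mem_filter]
      exact ⟨(hKfacts c hc).2, subP_refl M (c:ℕ)⟩
    · intro j hsub' hjq
      have := hk j hjq
      omega
  have hsum : ∑ c ∈ childS M q rh, (S'.filter (inSub M c)).card
      = ∑ c ∈ K, (S'.filter (inSub M c)).card := by
    symm
    apply Finset.sum_subset (Finset.filter_subset _ _)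
    intro c hc hnc
    have hcon : ¬ (S'.filter (inSub M c)).Nonempty := by
      intro hcon
      exact hnc (Finset.mem_filter.mpr ⟨hc, hcon⟩)
    rw [Finset.not_nonempty_iff_eq_empty] at hcon
    rw [hcon, Finset.card_empty]
  have hsum2 : ∑ c ∈ K, (S'.filter (inSub M c)).card ≤ K.card * (Fintype.card V * Fg (t-1) k) := by
    have := Finset.sum_le_card_nsmul K (fun c => (S'.filter (inSub M c)).card)
      (Fintype.card V * Fg (t-1) k) (fun c hc => hchildbound c hc)
    simpa using this
  have hmainbound : S'.card ≤ Fintype.card V * (1 + t * Fg (t-1) k) := by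
    calc S'.card ≤ (Tset S' rh).card + ∑ c ∈ childS M q rh, (S'.filter (inSub M c)).card :=
          card_split hsub
      _ ≤ Fintype.card V + K.card * (Fintype.card V * Fg (t-1) k) := by
          have := Finset.card_le_univ (Tset S' rh)
          rw [hsum]
          omega
      _ ≤ Fintype.card V + t * (Fintype.card V * Fg (t-1) k) := by
          have := Nat.mul_le_mul_right (Fintype.card V * Fg (t-1) k) hKcard
          omega
      _ = Fintype.card V * (1 + t * Fg (t-1) k) := by ring
  omega

end TopBound

lemma Fg_le {T' : ℕ} (hT : 2 ≤ T') : ∀ k, Fg T' k + 1 ≤ 2 * T' ^ k := by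
  intro k
  induction k with
  | zero => simp [Fg]
  | succ k ih =>
    have h1 : T' * (Fg T' k + 1) ≤ T' * (2 * T' ^ k) := Nat.mul_le_mul_left _ ih
    have h2 : T' * (2 * T' ^ k) = 2 * T' ^ (k+1) := by ring
    have h3 : T' * (Fg T' k + 1) = T' * Fg T' k + T' := by ring
    have h4 : Fg T' (k+1) = 1 + T' * Fg T' k := rfl
    omega

lemma pathGraph_col2 (n : ℕ) : (SimpleGraph.pathGraph n).Colorable 2 := by
  have C : (SimpleGraph.pathGraph n).Coloring Bool := by
    refine SimpleGraph.Coloring.mk (fun v => decide ((v : ℕ) % 2 = 1)) ?_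
    intro a b hab
    rw [SimpleGraph.pathGraph_adj] at hab
    intro heq
    rw [decide_eq_decide] at heq
    omega
  have := C.colorable
  rwa [Fintype.card_bool] at this

end Stmt5Aux

open Stmt5Aux Sum in
/-- Blow-up construction, bipartite version. -/
theorem stmt_5 (V : Type) [Fintype V] [DecidableEq V] (G : SimpleGraph V)
    (hconn : G.Connected) (hbip : G.Colorable 2)
    (W : Finset V) (m : ℕ) (hW : W.card = m) (hm : 3 ≤ m)
    (t : ℕ) (ht : 3 ≤ t)
    (htree : ∀ S : Finset V, (G.induce (S : Set V)).IsTree → (S ∩ W).card ≤ t) :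
    ∃ C : ℝ, 0 < C ∧ ∀ n : ℕ, 1 ≤ n →
      ∃ H : SimpleGraph (Fin n), H.Connected ∧ H.Colorable 2 ∧
        ∀ S : Finset (Fin n), (H.induce (S : Set (Fin n))).IsTree →
          (S.card : ℝ) ≤ C * (n : ℝ) ^ (Real.log ((t : ℝ) - 1) / Real.log ((m : ℝ) - 1)) := by
  classical
  set α := Real.log ((t : ℝ) - 1) / Real.log ((m : ℝ) - 1) with hαdef
  set cardV := Fintype.card V with hcardV
  have hmV : m ≤ cardV := by rw [← hW]; exact Finset.card_le_univ W
  have hV1 : 1 ≤ cardV := by omega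
  set M := m - 1 with hMdef
  have hM2 : 2 ≤ M := by omega
  -- pick `u` and the slot enumeration `σ`
  have hWne : W.Nonempty := Finset.card_pos.mp (by omega)
  obtain ⟨u, hu⟩ := hWne
  have hWerase : (W.erase u).card = M := by rw [Finset.card_erase_of_mem hu, hW]
  set σ : ℕ → V := fun l => if h : l < (W.erase u).card
    then ((W.erase u).equivFin.symm ⟨l, h⟩ : V) else u with hσdef
  have hσmem : ∀ l, l < M → σ l ∈ W.erase u := by
    intro l hl
    rw [← hWerase] at hl
    rw [hσdef]
    simp only [dif_pos hl]
    exact Finset.coe_mem _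
  have hσW : ∀ l, l < M → σ l ∈ W := fun l hl => (Finset.mem_erase.mp (hσmem l hl)).2
  have hσu : ∀ l, l < M → σ l ≠ u := fun l hl => (Finset.mem_erase.mp (hσmem l hl)).1
  have hσinj : ∀ l, l < M → ∀ l', l' < M → σ l = σ l' → l = l' := by
    intro l hl l' hl' heq
    rw [← hWerase] at hl hl'
    rw [hσdef] at heq
    simp only [dif_pos hl, dif_pos hl'] at heq
    have h2 : (W.erase u).equivFin.symm ⟨l, hl⟩ = (W.erase u).equivFin.symm ⟨l', hl'⟩ :=
      Subtype.ext heq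
    have h3 := (W.erase u).equivFin.symm.injective h2
    exact congrArg Fin.val h3
  -- coloring of G
  obtain ⟨Cg⟩ := hbip
  set cb : V → Bool := fun v => decide (Cg v = 1) with hcb
  have hcbv : ∀ {a b : V}, G.Adj a b → cb a ≠ cb b := by
    intro a b hab heq
    rw [hcb] at heq
    simp only [decide_eq_decide] at heq
    have key : ∀ x y : Fin 2, (x = 1 ↔ y = 1) → x = y := by decide
    exact Cg.valid hab (key _ _ heq)
  -- exponent facts
  have htR : (3:ℝ) ≤ (t:ℝ) := by exact_mod_cast ht
  have hmR : (3:ℝ) ≤ (m:ℝ) := by exact_mod_cast hm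
  have hα0 : 0 ≤ α := div_nonneg (Real.log_nonneg (by linarith)) (Real.log_nonneg (by linarith))
  have hMcast : ((M:ℕ):ℝ) = (m:ℝ) - 1 := by
    rw [hMdef]
    have : (1:ℕ) ≤ m := by omega
    push_cast [Nat.cast_sub this]
    ring
  have hMα : (((M:ℕ):ℝ)) ^ α = (t:ℝ) - 1 := by
    rw [hMcast, hαdef]
    rw [Real.rpow_def_of_pos (by linarith)]
    rw [mul_comm, div_mul_cancel₀]
    · exact Real.exp_log (by linarith)
    · exact ne_of_gt (Real.log_pos (by linarith))
  set C : ℝ := 2 * cardV * t * ((t:ℝ)-1) + cardV with hCdef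
  have hCV : (cardV:ℝ) ≤ C := by
    rw [hCdef]
    have h1 : 0 ≤ 2 * (cardV:ℝ) * t * ((t:ℝ)-1) :=
      mul_nonneg (mul_nonneg (mul_nonneg (by norm_num) (Nat.cast_nonneg cardV))
        (Nat.cast_nonneg t)) (by linarith)
    linarith
  have hC0 : 0 < C := lt_of_lt_of_le (by exact_mod_cast hV1) hCV
  refine ⟨C, hC0, ?_⟩
  intro n hn
  have hnα1 : (1:ℝ) ≤ (n:ℝ) ^ α := by
    rw [show (1:ℝ) = (1:ℝ) ^ α from (Real.one_rpow α).symm]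
    exact Real.rpow_le_rpow (by norm_num) (by exact_mod_cast hn) hα0
  rcases Nat.lt_or_ge n cardV with hsmall | hbig
  · -- small case : path graph
    refine ⟨SimpleGraph.pathGraph n, ?_, pathGraph_col2 n, ?_⟩
    · obtain ⟨n', rfl⟩ : ∃ n', n = n' + 1 := ⟨n-1, by omega⟩
      exact SimpleGraph.pathGraph_connected n'
    · intro S hS
      have h1 : S.card ≤ n := by
        have := Finset.card_le_univ S
        simpa using this
      have h2 : (S.card : ℝ) ≤ (cardV:ℝ) := by exact_mod_cast le_trans h1 (le_of_lt hsmall)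
      calc (S.card:ℝ) ≤ (cardV:ℝ) := h2
        _ ≤ C := hCV
        _ = C * 1 := (mul_one C).symm
        _ ≤ C * (n:ℝ)^α := mul_le_mul_of_nonneg_left hnα1 (le_of_lt hC0)
  · -- main construction
    set q := n / cardV with hqdef
    set r := n % cardV with hrdef
    have hq1 : 1 ≤ q := (Nat.one_le_div_iff (by omega)).mpr hbig
    have hqr : cardV * q + r = n := Nat.div_add_mod n cardV
    have hrV : r < cardV := Nat.mod_lt _ (by omega)
    have hcard : Fintype.card (XT q r V) = n := by
      simp only [XT, Fintype.card_sum, Fintype.card_prod, Fintype.card_fin]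
      rw [← hcardV, Nat.mul_comm q cardV]
      omega
    set e := Fintype.equivFinOfCardEq hcard with he
    set BG := bg G M q r u σ with hBG
    set Hn : SimpleGraph (Fin n) := BG.comap ⇑e.symm with hHn
    have hIso : Hn ≃g BG := ⟨e.symm, Iff.rfl⟩
    refine ⟨Hn, ?_, ?_, ?_⟩
    · exact (SimpleGraph.Iso.connected_iff hIso).mpr
        (bg_connected hq1 hσu (by omega) hconn)
    · have col : Hn.Coloring Bool := SimpleGraph.Coloring.mk
        (fun x => colF M q r u σ cb (e.symm x))
        (fun hab => colF_valid cb hcbv hab)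
      have := col.colorable
      rwa [Fintype.card_bool] at this
    · intro S hS
      set S₀ : Finset (XT q r V) := S.image ⇑e.symm with hS₀
      have hcardeq : S₀.card = S.card := Finset.card_image_of_injective _ e.symm.injective
      have hmemiff : ∀ x : XT q r V, x ∈ (S₀ : Set (XT q r V)) ↔ e x ∈ (S : Set (Fin n)) := by
        intro x
        rw [hS₀]
        simp only [Finset.coe_image, Set.mem_image, Finset.mem_coe]
        constructor
        · rintro ⟨a, ha, rfl⟩
          simpa using ha
        · intro h
          exact ⟨e x, h, by simp⟩
      have ρ : BG.induce (S₀ : Set (XT q r V)) ≃g Hn.induce (S : Set (Fin n)) := by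
        refine ⟨Equiv.subtypeEquiv e hmemiff, ?_⟩
        intro a b
        show Hn.Adj (e a) (e b) ↔ _
        rw [hHn]
        simp only [SimpleGraph.comap_adj, Equiv.symm_apply_apply]
        rfl
      have hS₀tree := isTree_of_iso ρ hS
      -- depth bound
      set k := Nat.log M ((M-1)*(q-1)+1) with hkdef
      have hkdep : ∀ j, j < q → dep M j ≤ k := by
        intro j hj
        have h1 := pow_dep_le hM2 j
        have h2 : (M-1)*j + 1 ≤ (M-1)*(q-1)+1 := by
          have h3 : j ≤ q - 1 := by omega
          have := Nat.mul_le_mul_left (M-1) h3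
          omega
        exact (Nat.le_log_iff_pow_le (by omega) (by omega)).mpr (le_trans h1 h2)
      have hMk : M ^ k ≤ M * n := by
        have h1 : M ^ k ≤ (M-1)*(q-1)+1 := Nat.pow_log_le_self M (by omega)
        have h2 : (M-1)*(q-1)+1 ≤ M * q := by
          have h3 : (M-1)*(q-1) ≤ (M-1)*q := Nat.mul_le_mul_left _ (by omega)
          have h4 : (M-1)*q + q = M * q := by
            have : M - 1 + 1 = M := by omega
            calc (M-1)*q + q = ((M-1)+1)*q := by ring
              _ = M * q := by rw [this]
          omega
        have h3 : q ≤ n := Nat.div_le_self n cardV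
        calc M ^ k ≤ M * q := le_trans h1 h2
          _ ≤ M * n := Nat.mul_le_mul_left _ h3
      -- the natural-number bound
      have hb1 := top_bound (G := G) (q := q) (r := r) (by omega : 1 ≤ M) htree hu hσW hσu hσinj
        k hkdep S₀ hS₀tree
      have hFg : 1 + t * Fg (t-1) k ≤ 2 * t * (t-1)^k := by
        have h1 := Fg_le (by omega : 2 ≤ t-1) k
        have h2 : t * (Fg (t-1) k + 1) ≤ t * (2 * (t-1)^k) := Nat.mul_le_mul_left _ h1
        have h3 : t * (Fg (t-1) k + 1) = t * Fg (t-1) k + t := by ring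
        have h4 : t * (2 * (t-1)^k) = 2 * t * (t-1)^k := by ring
        omega
      have hNat : S.card ≤ cardV * (2*t*(t-1)^k) + cardV := by
        rw [← hcardeq]
        have h5 := Nat.mul_le_mul_left cardV hFg
        calc S₀.card ≤ cardV * (1 + t * Fg (t-1) k) + r := hb1
          _ ≤ cardV * (2*t*(t-1)^k) + r := Nat.add_le_add_right h5 r
          _ ≤ cardV * (2*t*(t-1)^k) + cardV := Nat.add_le_add_left (le_of_lt hrV) _
      -- pass to the reals
      have hMr0 : (0:ℝ) ≤ ((M:ℕ):ℝ) := Nat.cast_nonneg M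
      have htcast : ((t-1:ℕ):ℝ) = (t:ℝ) - 1 := by
        have h1 : (1:ℕ) ≤ t := by omega
        push_cast [Nat.cast_sub h1]
        ring
      have hreal1 : (((t-1:ℕ)):ℝ)^k ≤ ((t:ℝ)-1) * (n:ℝ)^α := by
        have e2 : (((t-1:ℕ)):ℝ)^k = (((M:ℕ):ℝ) ^ α)^k := by rw [htcast, hMα]
        have e3 : (((M:ℕ):ℝ) ^ α)^k = ((M:ℕ):ℝ) ^ (α * (k:ℝ)) := by
          rw [← Real.rpow_natCast (((M:ℕ):ℝ) ^ α) k, ← Real.rpow_mul hMr0]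
        have e4 : ((M:ℕ):ℝ) ^ (α * (k:ℝ)) = (((M:ℕ):ℝ) ^ ((k:ℕ):ℝ)) ^ α := by
          rw [mul_comm, Real.rpow_mul hMr0]
        have e5 : ((M:ℕ):ℝ) ^ ((k:ℕ):ℝ) = ((M^k : ℕ):ℝ) := by
          rw [Real.rpow_natCast]
          push_cast
          ring
        have e6 : (((M^k:ℕ)):ℝ) ^ α ≤ ((M*n : ℕ):ℝ) ^ α := by
          apply Real.rpow_le_rpow (Nat.cast_nonneg _) ?_ hα0
          exact_mod_cast hMk
        have e7 : ((M*n : ℕ):ℝ) ^ α = (((M:ℕ):ℝ) * (n:ℝ)) ^ α := by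
          norm_cast
        have e8 : (((M:ℕ):ℝ) * (n:ℝ)) ^ α = ((M:ℕ):ℝ)^α * (n:ℝ)^α :=
          Real.mul_rpow hMr0 (Nat.cast_nonneg n)
        calc (((t-1:ℕ)):ℝ)^k = (((M:ℕ):ℝ) ^ ((k:ℕ):ℝ)) ^ α := by rw [e2, e3, e4]
          _ = ((M^k : ℕ):ℝ) ^ α := by rw [e5]
          _ ≤ ((M*n : ℕ):ℝ) ^ α := e6
          _ = ((M:ℕ):ℝ)^α * (n:ℝ)^α := by rw [e7, e8]
          _ = ((t:ℝ)-1) * (n:ℝ)^α := by rw [hMα]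
      -- final assembly
      have hSR : (S.card : ℝ) ≤ (cardV:ℝ) * (2*(t:ℝ)*((((t-1:ℕ)):ℝ)^k)) + (cardV:ℝ) := by
        have h9 := hNat
        have h10 : ((cardV * (2*t*(t-1)^k) + cardV : ℕ) : ℝ)
            = (cardV:ℝ) * (2*(t:ℝ)*((((t-1:ℕ)):ℝ)^k)) + (cardV:ℝ) := by
          push_cast
          ring
        calc (S.card : ℝ) ≤ ((cardV * (2*t*(t-1)^k) + cardV : ℕ) : ℝ) := by exact_mod_cast h9
          _ = _ := h10
      have ht0 : (0:ℝ) ≤ (t:ℝ) := by linarith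
      have hc0 : (0:ℝ) ≤ (cardV:ℝ) := by positivity
      calc (S.card : ℝ) ≤ (cardV:ℝ) * (2*(t:ℝ)*((((t-1:ℕ)):ℝ)^k)) + (cardV:ℝ) := hSR
        _ ≤ (cardV:ℝ) * (2*(t:ℝ)*(((t:ℝ)-1) * (n:ℝ)^α)) + (cardV:ℝ) := by
            have h6 : 2*(t:ℝ)*((((t-1:ℕ)):ℝ)^k) ≤ 2*(t:ℝ)*(((t:ℝ)-1) * (n:ℝ)^α) := by
              apply mul_le_mul_of_nonneg_left hreal1 (by linarith)
            have := mul_le_mul_of_nonneg_left h6 hc0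
            linarith
        _ ≤ (cardV:ℝ) * (2*(t:ℝ)*(((t:ℝ)-1) * (n:ℝ)^α)) + (cardV:ℝ) * (n:ℝ)^α := by
            have := mul_le_mul_of_nonneg_left hnα1 hc0
            linarith
        _ = C * (n:ℝ)^α := by
            rw [hCdef]
            ring
end

section
/- Let H be a finite simple graph whose vertex set is partitioned into two independent sets A (the top class) and B (the bottom class), so that all edges of H go between A and B. Suppose the maximum degree of H is at most Δ (with Δ ≥ 1), that every vertex of A has at least one neighbor in B, and let η ∈ (0,1) be a real parameter. Then at least one of the following holds: (M) H contains a matching with at least (1 − η)·|A| edges; or (B) there is a set S ⊆ A ∪ B such that the subgraph F of H induced on S is a forest, every vertex of S ∩ A has degree exactly 1 in F, every vertex of S ∩ B has degree at least 2 in F, and |S ∩ B| ≥ (η/Δ³)·|A|. -/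
open Finset

/-- Greedy independent set: in a finite set with a symmetric conflict relation
of degree at most `D`, there is a conflict-free subset of size ≥ |T|/(D+1). -/
lemma greedy_indep {α : Type} [DecidableEq α] (R : α → α → Prop) [DecidableRel R]
    (hsymm : ∀ a b, R a b → R b a) (D : ℕ) (T : Finset α)
    (hdeg : ∀ b ∈ T, (T.filter (fun x => R b x ∧ x ≠ b)).card ≤ D) :
    ∃ W ⊆ T, T.card ≤ (D + 1) * W.card ∧ ∀ b ∈ W, ∀ b' ∈ W, b ≠ b' → ¬ R b b' := by
  induction T using Finset.strongInduction with
  | _ T ih =>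
    rcases T.eq_empty_or_nonempty with rfl | ⟨b, hb⟩
    · exact ⟨∅, by simp⟩
    · set K : Finset α := insert b (T.filter (fun x => R b x ∧ x ≠ b)) with hK
      set T' : Finset α := T \ K with hT'
      have hT'ss : T' ⊂ T := by
        apply Finset.sdiff_ssubset ?_ ?_
        · intro x hx
          rw [hK, Finset.mem_insert] at hx
          rcases hx with rfl | hx
          · exact hb
          · exact (Finset.mem_filter.mp hx).1
        · exact ⟨b, Finset.mem_insert_self _ _⟩
      obtain ⟨W', hW'ss, hW'card, hW'free⟩ := ih T' hT'ss (fun x hx =>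
        le_trans (Finset.card_le_card (fun y hy => by
          rw [Finset.mem_filter] at hy ⊢
          exact ⟨(Finset.mem_sdiff.mp hy.1).1, hy.2⟩)) (hdeg x (Finset.mem_sdiff.mp hx).1))
      have hbW' : b ∉ W' := fun h => by
        have := hW'ss h
        rw [hT', Finset.mem_sdiff] at this
        exact this.2 (Finset.mem_insert_self _ _)
      refine ⟨insert b W', ?_, ?_, ?_⟩
      · intro x hx
        rcases Finset.mem_insert.mp hx with rfl | hx
        · exact hb
        · exact (Finset.mem_sdiff.mp (hW'ss hx)).1
      · have h1 : T.card ≤ T'.card + K.card := by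
          have : T ⊆ T' ∪ K := fun x hx => by
            by_cases h : x ∈ K
            · exact Finset.mem_union_right _ h
            · exact Finset.mem_union_left _ (Finset.mem_sdiff.mpr ⟨hx, h⟩)
          exact le_trans (Finset.card_le_card this) (Finset.card_union_le _ _)
        have h2 : K.card ≤ D + 1 := by
          rw [hK]
          exact le_trans (Finset.card_insert_le _ _) (by
            have := hdeg b hb; omega)
        rw [Finset.card_insert_of_notMem hbW']
        calc T.card ≤ T'.card + K.card := h1
          _ ≤ (D + 1) * W'.card + (D + 1) := by omega
          _ = (D + 1) * (W'.card + 1) := by ring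
      · intro x hx y hy hxy hR
        have notK : ∀ z ∈ W', z ∉ K := fun z hz hzK => by
          have := hW'ss hz
          rw [hT', Finset.mem_sdiff] at this
          exact this.2 hzK
        rcases Finset.mem_insert.mp hx with hxb | hx
        · rcases Finset.mem_insert.mp hy with hyb | hy
          · exact hxy (hxb.trans hyb.symm)
          · refine notK y hy ?_
            rw [hK]
            refine Finset.mem_insert_of_mem (Finset.mem_filter.mpr
              ⟨(Finset.mem_sdiff.mp (hW'ss hy)).1, hxb ▸ hR, fun h => (h ▸ hbW') hy⟩)
        · rcases Finset.mem_insert.mp hy with hyb | hy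
          · refine notK x hx ?_
            rw [hK]
            refine Finset.mem_insert_of_mem (Finset.mem_filter.mpr
              ⟨(Finset.mem_sdiff.mp (hW'ss hx)).1, hyb ▸ hsymm _ _ hR,
                fun h => (h ▸ hbW') hx⟩)
          · exact hW'free x hx y hy hxy hR


open SimpleGraph

/-- The base vertex of a cycle has two distinct neighbors. -/
lemma cycle_base_two_nbrs {V : Type*} {G : SimpleGraph V} {v : V} (c : G.Walk v v)
    (hc : c.IsCycle) : ∃ x y, x ≠ y ∧ G.Adj v x ∧ G.Adj v y := by
  have h3 := hc.three_le_length
  cases c with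
  | nil => simp at h3
  | cons h p =>
    rename_i u'
    rw [SimpleGraph.Walk.cons_isCycle_iff] at hc
    obtain ⟨hp, he⟩ := hc
    -- p : G.Walk u' v, path, s(v,u') ∉ p.edges
    set q := p.reverse with hq
    have hqnil : ¬ q.Nil := by
      intro hnil
      have := hnil.eq
      exact h.ne this
    refine ⟨u', q.getVert 1, ?_, h, q.adj_snd hqnil⟩
    intro heq
    apply he
    have hmem : s(v, q.getVert 1) ∈ q.edges := by
      have hed : q.edges = s(v, q.getVert 1) :: q.tail.edges := by
        conv_lhs => rw [← q.cons_tail_eq hqnil]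
        rfl
      rw [hed]
      exact List.mem_cons_self
    rw [hq, SimpleGraph.Walk.edges_reverse, List.mem_reverse] at hmem
    rw [show s(v, u') = s(v, p.reverse.getVert 1) by rw [← hq, ← heq]]
    exact hmem


open Finset

/-- Matching or 2-branching up-forest in a bipartite graph with color classes
`A` (top) and `B` (bottom). -/
theorem stmt_8 (V : Type) [Fintype V] [DecidableEq V]
    (H : SimpleGraph V) [DecidableRel H.Adj]
    (A B : Finset V) (hdisj : Disjoint A B) (hcover : A ∪ B = Finset.univ)
    (hAind : ∀ v ∈ A, ∀ w ∈ A, ¬ H.Adj v w)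
    (hBind : ∀ v ∈ B, ∀ w ∈ B, ¬ H.Adj v w)
    (Δ : ℕ) (hΔ : 1 ≤ Δ) (hdeg : ∀ v, H.degree v ≤ Δ)
    (hA : ∀ v ∈ A, ∃ w ∈ B, H.Adj v w)
    (η : ℝ) (hη : η ∈ Set.Ioo (0 : ℝ) 1) :
    (∃ M : H.Subgraph, M.IsMatching ∧ (1 - η) * (A.card : ℝ) ≤ (M.edgeSet.ncard : ℝ)) ∨
    (∃ S : Finset V,
      (H.induce (S : Set V)).IsAcyclic ∧
      (∀ v ∈ S ∩ A, (S.filter (fun w => H.Adj v w)).card = 1) ∧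
      (∀ v ∈ S ∩ B, 2 ≤ (S.filter (fun w => H.Adj v w)).card) ∧
      (η / (Δ : ℝ) ^ 3) * (A.card : ℝ) ≤ ((S ∩ B).card : ℝ)) := by
  classical
  obtain ⟨hη0, hη1⟩ := hη
  set good : Finset (V × V) → Prop := fun M =>
    (∀ p ∈ M, p.1 ∈ A ∧ p.2 ∈ B ∧ H.Adj p.1 p.2) ∧
    (∀ p ∈ M, ∀ q ∈ M, p ≠ q → p.1 ≠ q.1 ∧ p.2 ≠ q.2) with hgood
  have hgood_empty : good ∅ := ⟨by simp, by simp⟩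
  obtain ⟨M, hMmem, hMmax0⟩ := Finset.exists_max_image
    ((Finset.univ : Finset (Finset (V × V))).filter (fun M => good M)) Finset.card
    ⟨∅, Finset.mem_filter.mpr ⟨Finset.mem_univ _, hgood_empty⟩⟩
  have hM : good M := (Finset.mem_filter.mp hMmem).2
  have hMmax : ∀ M', good M' → M'.card ≤ M.card := fun M' h =>
    hMmax0 M' (Finset.mem_filter.mpr ⟨Finset.mem_univ _, h⟩)
  have hfst_inj : ∀ p ∈ M, ∀ q ∈ M, p.1 = q.1 → p = q := by
    intro p hp q hq h
    by_contra hne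
    exact (hM.2 p hp q hq hne).1 h
  have hsnd_inj : ∀ p ∈ M, ∀ q ∈ M, p.2 = q.2 → p = q := by
    intro p hp q hq h
    by_contra hne
    exact (hM.2 p hp q hq hne).2 h
  set MA : Finset V := M.image Prod.fst with hMA
  have hMAcard : MA.card = M.card :=
    Finset.card_image_of_injOn (fun p hp q hq h => hfst_inj p hp q hq h)
  have hMAsub : MA ⊆ A := by
    intro v hv
    obtain ⟨p, hp, rfl⟩ := Finset.mem_image.mp hv
    exact (hM.1 p hp).1
  set U : Finset V := A \ MA with hU
  by_cases hcase : (1 - η) * (A.card : ℝ) ≤ (M.card : ℝ)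
  · -- Case M : build the matching subgraph
    left
    refine ⟨⟨{v | ∃ p ∈ M, p.1 = v ∨ p.2 = v},
      fun v w => (v, w) ∈ M ∨ (w, v) ∈ M, ?_, ?_, ?_⟩, ?_, ?_⟩
    · rintro v w (h | h)
      · exact (hM.1 _ h).2.2
      · exact ((hM.1 _ h).2.2).symm
    · rintro v w (h | h)
      · exact ⟨(v, w), h, Or.inl rfl⟩
      · exact ⟨(w, v), h, Or.inr rfl⟩
    · constructor; rintro v w (h | h)
      · exact Or.inr h
      · exact Or.inl h
    · -- IsMatching
      rintro v ⟨p, hp, hv | hv⟩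
      · subst hv
        refine ⟨p.2, Or.inl (by rw [Prod.mk.eta]; exact hp), ?_⟩
        rintro w (hw | hw)
        · exact congrArg Prod.snd (hfst_inj _ hw p hp rfl)
        · exact absurd ((hM.1 _ hw).2.1) (fun h1 =>
            Finset.disjoint_left.mp hdisj (hM.1 p hp).1 h1)
      · subst hv
        refine ⟨p.1, Or.inr (by rw [Prod.mk.eta]; exact hp), ?_⟩
        rintro w (hw | hw)
        · exact absurd ((hM.1 _ hw).1) (fun h1 =>
            Finset.disjoint_left.mp hdisj h1 (hM.1 p hp).2.1)
        · exact congrArg Prod.fst (hsnd_inj _ hw p hp rfl)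
    · -- edge count
      have hset : (SimpleGraph.Subgraph.mk
          {v | ∃ p ∈ M, p.1 = v ∨ p.2 = v}
          (fun v w => (v, w) ∈ M ∨ (w, v) ∈ M)
          (by rintro v w (h | h)
              · exact (hM.1 _ h).2.2
              · exact ((hM.1 _ h).2.2).symm)
          (by rintro v w (h | h)
              · exact ⟨(v, w), h, Or.inl rfl⟩
              · exact ⟨(w, v), h, Or.inr rfl⟩)
          (by constructor; rintro v w (h | h)
              · exact Or.inr h
              · exact Or.inl h)).edgeSet
          = ↑(M.image (fun p => s(p.1, p.2))) := by
        ext e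
        induction e with
        | _ x y =>
          simp only [SimpleGraph.Subgraph.mem_edgeSet, Finset.coe_image, Set.mem_image,
            Finset.mem_coe]
          constructor
          · rintro (h | h)
            · exact ⟨(x, y), h, rfl⟩
            · exact ⟨(y, x), h, Sym2.eq_swap⟩
          · rintro ⟨p, hp, hpe⟩
            rw [Sym2.eq_iff] at hpe
            rcases hpe with ⟨h1, h2⟩ | ⟨h1, h2⟩
            · left; rw [← h1, ← h2, Prod.mk.eta]; exact hp
            · right; rw [← h1, ← h2, Prod.mk.eta]; exact hp
      rw [hset, Set.ncard_coe_finset]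
      have himg : (M.image (fun p => s(p.1, p.2))).card = M.card := by
        apply Finset.card_image_of_injOn
        intro p hp q hq h
        rw [Sym2.eq_iff] at h
        rcases h with ⟨h1, h2⟩ | ⟨h1, h2⟩
        · exact Prod.ext h1 h2
        · exact absurd ((hM.1 q hq).2.1) (fun hb =>
            Finset.disjoint_left.mp hdisj (h1 ▸ (hM.1 p hp).1) hb)
      rw [himg]
      exact hcase
  · -- Case B : build the branching forest
    right
    rw [not_le] at hcase
    have hMAle : MA.card ≤ A.card := Finset.card_le_card hMAsub
    have hUcard : (U.card : ℝ) = (A.card : ℝ) - (M.card : ℝ) := by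
      rw [hU, Finset.card_sdiff_of_subset hMAsub, Nat.cast_sub hMAle, hMAcard]
    have hUlb : η * (A.card : ℝ) < (U.card : ℝ) := by
      rw [hUcard]; nlinarith
    have hUA : U ⊆ A := Finset.sdiff_subset
    -- every neighbor of an unmatched vertex is matched
    have hmatched : ∀ u ∈ U, ∀ b, H.Adj u b → ∃ p ∈ M, p.2 = b := by
      intro u hu b hadj
      by_contra hnm
      push_neg at hnm
      have huA : u ∈ A := hUA hu
      have hbB : b ∈ B := by
        have hbu : b ∈ A ∪ B := hcover ▸ Finset.mem_univ b
        rcases Finset.mem_union.mp hbu with h | h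
        · exact absurd hadj (hAind u huA b h)
        · exact h
      have hunotM : ∀ p ∈ M, p.1 ≠ u := by
        intro p hp h
        exact (Finset.mem_sdiff.mp hu).2 (Finset.mem_image.mpr ⟨p, hp, h⟩)
      have hnew : good (insert (u, b) M) := by
        constructor
        · intro p hp
          rcases Finset.mem_insert.mp hp with rfl | hp
          · exact ⟨huA, hbB, hadj⟩
          · exact hM.1 p hp
        · intro p hp q hq hne
          rcases Finset.mem_insert.mp hp with hpu | hp
          · rcases Finset.mem_insert.mp hq with hqu | hq
            · exact absurd (hpu.trans hqu.symm) hne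
            · rw [hpu]
              exact ⟨fun h => hunotM q hq h.symm, fun h => hnm q hq h.symm⟩
          · rcases Finset.mem_insert.mp hq with hqu | hq
            · rw [hqu]
              exact ⟨fun h => hunotM p hp h, fun h => hnm p hp h⟩
            · exact hM.2 p hp q hq hne
      have hmemM : (u, b) ∉ M := fun h => hunotM _ h rfl
      have := hMmax _ hnew
      rw [Finset.card_insert_of_notMem hmemM] at this
      omega
    -- the set of matched bottom vertices adjacent to U
    set T : Finset V := B.filter (fun b => ∃ u ∈ U, H.Adj u b) with hT
    have hTB : T ⊆ B := Finset.filter_subset _ _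
    have hUT : U.card ≤ Δ * T.card := by
      have hsub : U ⊆ T.biUnion (fun b => H.neighborFinset b) := by
        intro u hu
        obtain ⟨b, hbB, hadj⟩ := hA u (hUA hu)
        refine Finset.mem_biUnion.mpr ⟨b, Finset.mem_filter.mpr ⟨hbB, u, hu, hadj⟩, ?_⟩
        exact (SimpleGraph.mem_neighborFinset _ _ _).mpr hadj.symm
      calc U.card ≤ _ := Finset.card_le_card hsub
        _ ≤ ∑ b ∈ T, (H.neighborFinset b).card := Finset.card_biUnion_le
        _ ≤ ∑ _b ∈ T, Δ := Finset.sum_le_sum (fun b _ => hdeg b)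
        _ = T.card * Δ := by rw [Finset.sum_const, smul_eq_mul]
        _ = Δ * T.card := mul_comm _ _
    -- choose for each b ∈ T an unmatched neighbor and its matching partner
    have hub_ex : ∀ b, ∃ u, b ∈ T → (u ∈ U ∧ H.Adj u b) := by
      intro b
      by_cases hb : b ∈ T
      · obtain ⟨u, hu, hadj⟩ := (Finset.mem_filter.mp hb).2
        exact ⟨u, fun _ => ⟨hu, hadj⟩⟩
      · exact ⟨b, fun h => absurd h hb⟩
    choose ub hub using hub_ex
    have hab_ex : ∀ b, ∃ a, b ∈ T →
        (a ∈ A ∧ H.Adj a b ∧ a ∉ U ∧ ∃ p ∈ M, p = (a, b)) := by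
      intro b
      by_cases hb : b ∈ T
      · obtain ⟨hubU, hubAdj⟩ := hub b hb
        obtain ⟨p, hp, hp2⟩ := hmatched (ub b) hubU b hubAdj
        refine ⟨p.1, fun _ => ⟨(hM.1 p hp).1, ?_, ?_, p, hp, ?_⟩⟩
        · have := (hM.1 p hp).2.2; rwa [hp2] at this
        · intro hin
          exact (Finset.mem_sdiff.mp hin).2 (Finset.mem_image.mpr ⟨p, hp, rfl⟩)
        · rw [← hp2]
      · exact ⟨b, fun h => absurd h hb⟩
    choose ab hab using hab_ex
    have hubA : ∀ b ∈ T, ub b ∈ A := fun b hb => hUA (hub b hb).1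
    have hune : ∀ b ∈ T, ub b ≠ ab b := fun b hb h =>
      (hab b hb).2.2.1 (h ▸ (hub b hb).1)
    -- the cherries and the conflict relation
    set C : V → Finset V := fun b => {b, ub b, ab b} with hC
    have hbC : ∀ b, b ∈ C b := fun b => Finset.mem_insert_self _ _
    have hubC : ∀ b, ub b ∈ C b := fun b =>
      Finset.mem_insert_of_mem (Finset.mem_insert_self _ _)
    have habC : ∀ b, ab b ∈ C b := fun b =>
      Finset.mem_insert_of_mem (Finset.mem_insert_of_mem (Finset.mem_singleton_self _))
    set R : V → V → Prop := fun b b' => ∃ x ∈ C b, ∃ y ∈ C b', H.Adj x y with hRdef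
    have hRsymm : ∀ a b, R a b → R b a := by
      rintro a b ⟨x, hx, y, hy, hadj⟩
      exact ⟨y, hy, x, hx, hadj.symm⟩
    -- degree bound for the conflict relation
    have hRdeg : ∀ b ∈ T, (T.filter (fun x => R b x ∧ x ≠ b)).card ≤ Δ * Δ - 1 := by
      intro b hbT
      obtain ⟨hubU, hubAdj⟩ := hub b hbT
      obtain ⟨habA, habAdj, habNU, p, hp, hpe⟩ := hab b hbT
      set F : Finset V := ((H.neighborFinset (ub b)).erase b) ∪
        ((H.neighborFinset (ab b)).erase b) ∪
        ((H.neighborFinset b \ {ub b, ab b}).biUnion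
          (fun z => (H.neighborFinset z).erase b)) with hF
      have hsub : T.filter (fun x => R b x ∧ x ≠ b) ⊆ F := by
        intro b' hb'
        obtain ⟨hb'T, hRb, hne⟩ := Finset.mem_filter.mp hb'
        simp only [hRdef] at hRb
        obtain ⟨x, hx, y, hy, hadj⟩ := hRb
        obtain ⟨hub'U, hub'Adj⟩ := hub b' hb'T
        obtain ⟨hab'A, hab'Adj, -, -⟩ := hab b' hb'T
        have hb'B : b' ∈ B := hTB hb'T
        have hbB : b ∈ B := hTB hbT
        have hyadjb' : (y = ub b' ∨ y = ab b') → H.Adj y b' := by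
          rintro (rfl | rfl)
          · exact hub'Adj
          · exact hab'Adj
        have hycases : y = b' ∨ y = ub b' ∨ y = ab b' := by
          simpa [hC, Finset.mem_insert, Finset.mem_singleton] using hy
        rcases (by simpa [hC, Finset.mem_insert, Finset.mem_singleton] using hx :
            x = b ∨ x = ub b ∨ x = ab b) with rfl | rfl | rfl
        · -- x = b
          rcases hycases with rfl | hyrole
          · exact absurd hadj (hBind _ hbB _ hb'B)
          · by_cases hy1 : y = ub x
            · refine Finset.mem_union_left _ (Finset.mem_union_left _ ?_)
              refine Finset.mem_erase.mpr ⟨hne, ?_⟩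
              rw [SimpleGraph.mem_neighborFinset, ← hy1]
              exact hyadjb' hyrole
            · by_cases hy2 : y = ab x
              · refine Finset.mem_union_left _ (Finset.mem_union_right _ ?_)
                refine Finset.mem_erase.mpr ⟨hne, ?_⟩
                rw [SimpleGraph.mem_neighborFinset, ← hy2]
                exact hyadjb' hyrole
              · refine Finset.mem_union_right _ ?_
                refine Finset.mem_biUnion.mpr ⟨y, ?_, ?_⟩
                · rw [Finset.mem_sdiff, SimpleGraph.mem_neighborFinset]
                  refine ⟨hadj, ?_⟩
                  simp only [Finset.mem_insert, Finset.mem_singleton]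
                  tauto
                · refine Finset.mem_erase.mpr ⟨hne, ?_⟩
                  rw [SimpleGraph.mem_neighborFinset]
                  exact hyadjb' hyrole
        · -- x = ub b
          rcases hycases with rfl | hyrole
          · refine Finset.mem_union_left _ (Finset.mem_union_left _ ?_)
            exact Finset.mem_erase.mpr ⟨hne, (SimpleGraph.mem_neighborFinset _ _ _).mpr hadj⟩
          · exfalso
            have hyA : y ∈ A := by
              rcases hyrole with rfl | rfl
              · exact hUA hub'U
              · exact hab'A
            exact hAind _ (hUA hubU) _ hyA hadj
        · -- x = ab b
          rcases hycases with rfl | hyrole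
          · refine Finset.mem_union_left _ (Finset.mem_union_right _ ?_)
            exact Finset.mem_erase.mpr ⟨hne, (SimpleGraph.mem_neighborFinset _ _ _).mpr hadj⟩
          · exfalso
            have hyA : y ∈ A := by
              rcases hyrole with rfl | rfl
              · exact hUA hub'U
              · exact hab'A
            exact hAind _ habA _ hyA hadj
      refine le_trans (Finset.card_le_card hsub) ?_
      have h1 : ((H.neighborFinset (ub b)).erase b).card ≤ Δ - 1 := by
        rw [Finset.card_erase_of_mem ((SimpleGraph.mem_neighborFinset _ _ _).mpr hubAdj)]
        have := hdeg (ub b)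
        simp only [SimpleGraph.degree] at this
        omega
      have h2 : ((H.neighborFinset (ab b)).erase b).card ≤ Δ - 1 := by
        rw [Finset.card_erase_of_mem ((SimpleGraph.mem_neighborFinset _ _ _).mpr habAdj)]
        have := hdeg (ab b)
        simp only [SimpleGraph.degree] at this
        omega
      have h3 : (H.neighborFinset b \ {ub b, ab b}).card ≤ Δ - 2 := by
        have hss : ({ub b, ab b} : Finset V) ⊆ H.neighborFinset b := by
          intro z hz
          rcases Finset.mem_insert.mp hz with rfl | hz
          · exact (SimpleGraph.mem_neighborFinset _ _ _).mpr hubAdj.symm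
          · rw [Finset.mem_singleton] at hz
            subst hz
            exact (SimpleGraph.mem_neighborFinset _ _ _).mpr habAdj.symm
        rw [Finset.card_sdiff_of_subset hss, Finset.card_pair (hune b hbT)]
        have := hdeg b
        simp only [SimpleGraph.degree] at this
        omega
      have h4 : ((H.neighborFinset b \ {ub b, ab b}).biUnion
          (fun z => (H.neighborFinset z).erase b)).card ≤ (Δ - 2) * (Δ - 1) := by
        have hz1 : ∀ z ∈ H.neighborFinset b \ {ub b, ab b},
            ((H.neighborFinset z).erase b).card ≤ Δ - 1 := by
          intro z hz
          have hzb : H.Adj b z := by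
            have := (Finset.mem_sdiff.mp hz).1
            exact (SimpleGraph.mem_neighborFinset _ _ _).mp this
          rw [Finset.card_erase_of_mem ((SimpleGraph.mem_neighborFinset _ _ _).mpr hzb.symm)]
          have := hdeg z
          simp only [SimpleGraph.degree] at this
          omega
        calc ((H.neighborFinset b \ {ub b, ab b}).biUnion
            (fun z => (H.neighborFinset z).erase b)).card
            ≤ ∑ z ∈ H.neighborFinset b \ {ub b, ab b}, ((H.neighborFinset z).erase b).card :=
              Finset.card_biUnion_le
          _ ≤ ∑ _z ∈ H.neighborFinset b \ {ub b, ab b}, (Δ - 1) := Finset.sum_le_sum hz1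
          _ = (H.neighborFinset b \ {ub b, ab b}).card * (Δ - 1) := by
              rw [Finset.sum_const, smul_eq_mul]
          _ ≤ (Δ - 2) * (Δ - 1) := Nat.mul_le_mul_right _ h3
      refine le_trans (le_trans (Finset.card_union_le _ _)
        (Nat.add_le_add (le_trans (Finset.card_union_le _ _) (Nat.add_le_add h1 h2)) h4)) ?_
      -- (Δ-1) + (Δ-1) + (Δ-2)*(Δ-1) ≤ Δ*Δ - 1
      obtain ⟨n, rfl⟩ : ∃ n, Δ = n + 1 := ⟨Δ - 1, by omega⟩
      have e1 : n + 1 - 1 = n := by omega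
      have e2 : n + 1 - 2 = n - 1 := by omega
      rw [e1, e2]
      have hm1 : (n - 1) * n ≤ n * n := Nat.mul_le_mul_right n (Nat.sub_le n 1)
      have hm2 : (n + 1) * (n + 1) = n * n + 2 * n + 1 := by ring
      have hle : n + n + (n - 1) * n ≤ n * n + 2 * n := by linarith
      have : 1 ≤ (n + 1) * (n + 1) := Nat.one_le_iff_ne_zero.mpr (by positivity)
      linarith [Nat.sub_add_cancel this, hm2]
    -- greedy independent set of cherries
    obtain ⟨W, hWT, hWcard, hWfree⟩ := greedy_indep R hRsymm (Δ * Δ - 1) T hRdeg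
    have hDD : Δ * Δ - 1 + 1 = Δ * Δ := by
      have : 1 * 1 ≤ Δ * Δ := Nat.mul_le_mul hΔ hΔ
      omega
    rw [hDD] at hWcard
    set S : Finset V := W.biUnion C with hS
    -- membership facts
    have hmemS : ∀ b ∈ W, ∀ x ∈ C b, x ∈ S := fun b hb x hx => Finset.mem_biUnion.mpr ⟨b, hb, hx⟩
    have hSBW : S ∩ B = W := by
      ext v
      rw [Finset.mem_inter]
      constructor
      · rintro ⟨hvS, hvB⟩
        obtain ⟨b', hb'W, hvC⟩ := Finset.mem_biUnion.mp hvS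
        rcases (by simpa [hC, Finset.mem_insert, Finset.mem_singleton] using hvC :
            v = b' ∨ v = ub b' ∨ v = ab b') with rfl | rfl | rfl
        · exact hb'W
        · exact absurd hvB (Finset.disjoint_left.mp hdisj (hubA b' (hWT hb'W)))
        · exact absurd hvB (Finset.disjoint_left.mp hdisj (hab b' (hWT hb'W)).1)
      · intro hvW
        exact ⟨hmemS v hvW v (hbC v), hTB (hWT hvW)⟩
    -- neighbors of a bottom cherry vertex within S
    have hCadj : ∀ b ∈ W, ∀ v ∈ S, H.Adj b v → v = ub b ∨ v = ab b := by
      intro b hbW v hvS hadj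
      obtain ⟨b', hb'W, hvC⟩ := Finset.mem_biUnion.mp hvS
      by_cases hbb' : b' = b
      · subst hbb'
        rcases (by simpa [hC, Finset.mem_insert, Finset.mem_singleton] using hvC :
            v = b' ∨ v = ub b' ∨ v = ab b') with rfl | rfl | rfl
        · exact absurd hadj (H.irrefl)
        · exact Or.inl rfl
        · exact Or.inr rfl
      · exact absurd ⟨b, hbC b, v, hvC, hadj⟩
          (hWfree b hbW b' hb'W (fun h => hbb' h.symm))
    -- neighbors of a top cherry vertex within S
    have hAadj : ∀ b ∈ W, ∀ x, (x = ub b ∨ x = ab b) → ∀ v ∈ S, H.Adj x v → v = b := by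
      intro b hbW x hxrole v hvS hadj
      have hbT : b ∈ T := hWT hbW
      have hxC : x ∈ C b := by
        rcases hxrole with rfl | rfl
        · exact hubC b
        · exact habC b
      have hxA : x ∈ A := by
        rcases hxrole with rfl | rfl
        · exact hubA b hbT
        · exact (hab b hbT).1
      obtain ⟨b', hb'W, hvC⟩ := Finset.mem_biUnion.mp hvS
      by_cases hbb' : b' = b
      · subst hbb'
        rcases (by simpa [hC, Finset.mem_insert, Finset.mem_singleton] using hvC :
            v = b' ∨ v = ub b' ∨ v = ab b') with rfl | rfl | rfl
        · rfl
        · exact absurd hadj (hAind x hxA _ (hubA b' hbT))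
        · exact absurd hadj (hAind x hxA _ (hab b' hbT).1)
      · exact absurd ⟨x, hxC, v, hvC, hadj⟩
          (hWfree b hbW b' hb'W (fun h => hbb' h.symm))
    -- degree-1 property of top vertices of S
    have hdegA : ∀ v ∈ S ∩ A, (S.filter (fun w => H.Adj v w)).card = 1 := by
      intro v hv
      obtain ⟨hvS, hvA⟩ := Finset.mem_inter.mp hv
      obtain ⟨b', hb'W, hvC⟩ := Finset.mem_biUnion.mp hvS
      have hb'T : b' ∈ T := hWT hb'W
      have hvrole : v = ub b' ∨ v = ab b' := by
        rcases (by simpa [hC, Finset.mem_insert, Finset.mem_singleton] using hvC :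
            v = b' ∨ v = ub b' ∨ v = ab b') with rfl | h | h
        · exact absurd (hTB hb'T) (Finset.disjoint_left.mp hdisj hvA)
        · exact Or.inl h
        · exact Or.inr h
      have : S.filter (fun w => H.Adj v w) = {b'} := by
        ext w
        rw [Finset.mem_filter, Finset.mem_singleton]
        constructor
        · rintro ⟨hwS, hadj⟩
          exact hAadj b' hb'W v hvrole w hwS hadj
        · intro hwb
          rw [hwb]
          refine ⟨hmemS b' hb'W b' (hbC b'), ?_⟩
          rcases hvrole with rfl | rfl
          · exact (hub b' hb'T).2
          · exact (hab b' hb'T).2.1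
      rw [this, Finset.card_singleton]
    refine ⟨S, ?_, hdegA, ?_, ?_⟩
    · -- acyclicity
      intro v c hc
      cases c with
      | nil => exact SimpleGraph.Walk.IsCycle.not_of_nil hc
      | cons h p =>
        rename_i u'
        obtain ⟨w, hwsup, hwA⟩ : ∃ w : (↑(S : Set V) : Type),
            w ∈ (SimpleGraph.Walk.cons h p).support ∧ w.val ∈ A := by
          have hadj : H.Adj v.val u'.val := by
            simpa using h
          by_cases hvA : v.val ∈ A
          · exact ⟨v, SimpleGraph.Walk.start_mem_support _, hvA⟩
          · have hvB : v.val ∈ B := by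
              have : v.val ∈ A ∪ B := hcover ▸ Finset.mem_univ _
              rcases Finset.mem_union.mp this with h' | h'
              · exact absurd h' hvA
              · exact h'
            have hu'A : u'.val ∈ A := by
              have : u'.val ∈ A ∪ B := hcover ▸ Finset.mem_univ _
              rcases Finset.mem_union.mp this with h' | h'
              · exact h'
              · exact absurd hadj (hBind _ hvB _ h')
            refine ⟨u', ?_, hu'A⟩
            rw [SimpleGraph.Walk.support_cons]
            exact List.mem_cons_of_mem _ (SimpleGraph.Walk.start_mem_support _)
        have hc' := hc.rotate hwsup
        obtain ⟨x, y, hxy, hax, hay⟩ := cycle_base_two_nbrs _ hc'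
        have hxadj : H.Adj w.val x.val := by simpa using hax
        have hyadj : H.Adj w.val y.val := by simpa using hay
        have hwS : w.val ∈ S := by
          have := w.property
          simpa using this
        have hcard := hdegA w.val (Finset.mem_inter.mpr ⟨hwS, hwA⟩)
        have hxm : x.val ∈ S.filter (fun z => H.Adj w.val z) :=
          Finset.mem_filter.mpr ⟨by simpa using x.property, hxadj⟩
        have hym : y.val ∈ S.filter (fun z => H.Adj w.val z) :=
          Finset.mem_filter.mpr ⟨by simpa using y.property, hyadj⟩
        have : 1 < (S.filter (fun z => H.Adj w.val z)).card :=
          Finset.one_lt_card.mpr ⟨x.val, hxm, y.val, hym, fun hh => hxy (Subtype.ext hh)⟩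
        omega
    · -- bottom degrees ≥ 2
      intro v hv
      obtain ⟨hvS, hvB⟩ := Finset.mem_inter.mp hv
      have hvW : v ∈ W := by
        rw [← hSBW]
        exact Finset.mem_inter.mpr ⟨hvS, hvB⟩
      have hvT : v ∈ T := hWT hvW
      have hpair : ({ub v, ab v} : Finset V) ⊆ S.filter (fun w => H.Adj v w) := by
        intro z hz
        rcases Finset.mem_insert.mp hz with rfl | hz
        · exact Finset.mem_filter.mpr ⟨hmemS v hvW _ (hubC v), (hub v hvT).2.symm⟩
        · rw [Finset.mem_singleton] at hz
          subst hz
          exact Finset.mem_filter.mpr ⟨hmemS v hvW _ (habC v), (hab v hvT).2.1.symm⟩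
      calc 2 = ({ub v, ab v} : Finset V).card := (Finset.card_pair (hune v hvT)).symm
        _ ≤ _ := Finset.card_le_card hpair
    · -- size bound
      rw [hSBW]
      have hchain : (U.card : ℝ) ≤ (Δ : ℝ) ^ 3 * (W.card : ℝ) := by
        have h1 : U.card ≤ Δ * (Δ * Δ * W.card) :=
          le_trans hUT (Nat.mul_le_mul_left Δ hWcard)
        calc (U.card : ℝ) ≤ ((Δ * (Δ * Δ * W.card) : ℕ) : ℝ) := by exact_mod_cast h1
          _ = (Δ : ℝ) ^ 3 * (W.card : ℝ) := by push_cast; ring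
      have hΔpos : (0 : ℝ) < (Δ : ℝ) ^ 3 := by positivity
      rw [div_mul_eq_mul_div, div_le_iff₀ hΔpos]
      have hfin : η * (A.card : ℝ) < (W.card : ℝ) * (Δ : ℝ) ^ 3 := by
        calc η * (A.card : ℝ) < (U.card : ℝ) := hUlb
          _ ≤ (Δ : ℝ) ^ 3 * (W.card : ℝ) := hchain
          _ = (W.card : ℝ) * (Δ : ℝ) ^ 3 := mul_comm _ _
      exact hfin.le
end
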